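/- arXiv:1705.01415 — 3 statements merged into one kernel-verified Lean document; each statement's English description precedes it below -/
import Mathlib

section
/- Let m ≥ 1 and let φ_m : D_m×B_m → (−t_m,t_m) be smooth (D_m ⊆ ℂ a disc, B_m ⊆ ℂ×ℝ a ball, both centered at 0, t_m > 0). Assume the domain Ω_m := {z ∈ U_m : Re z₃ > φ_m(z₁,z₂,Im z₃)}, where U_m := {z ∈ ℂ³ : z₁ ∈ D_m, (z₂,Im z₃) ∈ B_m, |Re z₃| < t_m}, is pseudoconvex at its graph boundary, that ∂^j_{z₂}∂^k_{z̄₂}φ_m(z₁,0,0) = 0 for every z₁ ∈ D_m and all j,k with j+k ≤ m, that ∂_y φ_m(z₁,0,0) = 0 for every z₁ ∈ D_m, and that ∂^j_{z₂}∂^k_{z̄₂}φ_m(z₁,0,0) = 0 for every z₁ ∈ D_m and all j,k ≥ 1 with j+k = m+1. Then the function z₁ ↦ ∂^{m+1}_{z₂}φ_m(z₁,0,0) is holomorphic on D_m, i.e., ∂_{z̄₁}(∂^{m+1}_{z₂}φ_m(·,0,0)) ≡ 0 on D_m. -/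
open Complex Metric Set MeasureTheory Filter Asymptotics Topology

noncomputable section

/-- One-variable Wirtinger derivative ∂/∂z. -/
def w1 (f : ℂ → ℂ) (z : ℂ) : ℂ :=
  (fderiv ℝ f z 1 - Complex.I * fderiv ℝ f z Complex.I) / 2

/-- One-variable Wirtinger derivative ∂/∂z̄. -/
def w1bar (f : ℂ → ℂ) (z : ℂ) : ℂ :=
  (fderiv ℝ f z 1 + Complex.I * fderiv ℝ f z Complex.I) / 2

/-- Wirtinger derivative ∂/∂z₂ for functions on ℂ × ℂ × ℝ. -/
def Dz2 (f : ℂ × ℂ × ℝ → ℂ) : ℂ × ℂ × ℝ → ℂ :=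
  fun p => w1 (fun w => f (p.1, w, p.2.2)) p.2.1

/-- Wirtinger derivative ∂/∂z̄₂ for functions on ℂ × ℂ × ℝ. -/
def Dz2bar (f : ℂ × ℂ × ℝ → ℂ) : ℂ × ℂ × ℝ → ℂ :=
  fun p => w1bar (fun w => f (p.1, w, p.2.2)) p.2.1

/-- Partial derivative in the real variable y for functions on ℂ × ℂ × ℝ. -/
def Dy (f : ℂ × ℂ × ℝ → ℂ) : ℂ × ℂ × ℝ → ℂ :=
  fun p => fderiv ℝ (fun y => f (p.1, p.2.1, y)) p.2.2 1

/-- The mixed Wirtinger derivative ∂^j_{z₂}∂^k_{z̄₂} φ evaluated at (z₁, 0, 0). -/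
def mixedD (φ : ℂ × ℂ × ℝ → ℝ) (j k : ℕ) (z₁ : ℂ) : ℂ :=
  (Dz2^[j] (Dz2bar^[k] (fun p => (φ p : ℂ)))) (z₁, 0, 0)

/-- Complex coordinate directions in ℂ³. -/
def e3 : Fin 3 → ℂ → ℂ × ℂ × ℂ := ![fun c => (c, 0, 0), fun c => (0, c, 0), fun c => (0, 0, c)]

/-- Wirtinger derivative ∂/∂z_j on ℂ³. -/
def wd3 (j : Fin 3) (f : ℂ × ℂ × ℂ → ℂ) (z : ℂ × ℂ × ℂ) : ℂ :=
  (fderiv ℝ f z (e3 j 1) - Complex.I * fderiv ℝ f z (e3 j Complex.I)) / 2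

/-- Wirtinger derivative ∂/∂z̄_j on ℂ³. -/
def wd3bar (j : Fin 3) (f : ℂ × ℂ × ℂ → ℂ) (z : ℂ × ℂ × ℂ) : ℂ :=
  (fderiv ℝ f z (e3 j 1) + Complex.I * fderiv ℝ f z (e3 j Complex.I)) / 2

/-- The Euclidean ball of radius `s` centered at `0` in ℂ × ℝ. -/
def ballCR (s : ℝ) : Set (ℂ × ℝ) := {p | ‖p.1‖ ^ 2 + p.2 ^ 2 < s ^ 2}

/-- The "box" U = {z : z₁ ∈ D, (z₂, Im z₃) ∈ B, |Re z₃| < t}. -/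
def Ubox (r s t : ℝ) : Set (ℂ × ℂ × ℂ) :=
  {z | z.1 ∈ Metric.ball (0 : ℂ) r ∧ (z.2.1, z.2.2.im) ∈ ballCR s ∧ |z.2.2.re| < t}

/-- The graph domain Ω = {z ∈ U : Re z₃ > φ(z₁, z₂, Im z₃)}. -/
def GraphDomain (r s t : ℝ) (φ : ℂ × ℂ × ℝ → ℝ) : Set (ℂ × ℂ × ℂ) :=
  {z ∈ Ubox r s t | φ (z.1, z.2.1, z.2.2.im) < z.2.2.re}

/-- The defining function ρ(z) = φ(z₁, z₂, Im z₃) − Re z₃ (ℂ-valued). -/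
def graphRho (φ : ℂ × ℂ × ℝ → ℝ) : ℂ × ℂ × ℂ → ℂ :=
  fun z => (φ (z.1, z.2.1, z.2.2.im) : ℂ) - (z.2.2.re : ℂ)

/-- Pseudoconvexity of the graph domain at its graph boundary. -/
def PseudoconvexGraph (r s t : ℝ) (φ : ℂ × ℂ × ℝ → ℝ) : Prop :=
  ∀ z : ℂ × ℂ × ℂ, z.1 ∈ Metric.ball (0 : ℂ) r → (z.2.1, z.2.2.im) ∈ ballCR s →
    |z.2.2.re| < t → z.2.2.re = φ (z.1, z.2.1, z.2.2.im) →
    ∀ u : Fin 3 → ℂ,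
      (∑ j, wd3 j (graphRho φ) z * u j) = 0 →
      0 ≤ (∑ j, ∑ k, wd3 j (wd3bar k (graphRho φ)) z * u j * (starRingEnd ℂ) (u k)).re

/-- Biholomorphism of `V` onto `U`. -/
def Biholo (V U : Set (ℂ × ℂ × ℂ)) (Φ : ℂ × ℂ × ℂ → ℂ × ℂ × ℂ) : Prop :=
  DifferentiableOn ℂ Φ V ∧ Set.BijOn Φ V U ∧
    ∃ Ψ : ℂ × ℂ × ℂ → ℂ × ℂ × ℂ, DifferentiableOn ℂ Ψ U ∧
      (∀ z ∈ V, Ψ (Φ z) = z) ∧ (∀ w ∈ U, Φ (Ψ w) = w)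

namespace St3


abbrev P3 := ℂ × ℂ × ℝ

/-- directional derivative -/
def Dv (v : P3) (f : P3 → ℂ) : P3 → ℂ := fun p => fderiv ℝ f p v

/-- generic first-order operator with two directions -/
def opL (c₁ c₂ : ℂ) (v₁ v₂ : P3) (f : P3 → ℂ) : P3 → ℂ :=
  fun p => c₁ * fderiv ℝ f p v₁ + c₂ * fderiv ℝ f p v₂

def va : P3 := (1, 0, 0)
def vb : P3 := (Complex.I, 0, 0)
def vc : P3 := (0, 1, 0)
def vd : P3 := (0, Complex.I, 0)
def ve : P3 := (0, 0, 1)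

def Wp : (P3 → ℂ) → P3 → ℂ := opL (1/2) (-(Complex.I/2)) vc vd
def Wm : (P3 → ℂ) → P3 → ℂ := opL (1/2) (Complex.I/2) vc vd
def Ap : (P3 → ℂ) → P3 → ℂ := opL (1/2) (-(Complex.I/2)) va vb
def Am : (P3 → ℂ) → P3 → ℂ := opL (1/2) (Complex.I/2) va vb
def Ey : (P3 → ℂ) → P3 → ℂ := opL 1 0 ve ve
def Xd : (P3 → ℂ) → P3 → ℂ := opL 1 0 vc vc

/-- smooth on U -/
def Sm (U : Set P3) (f : P3 → ℂ) : Prop := ContDiffOn ℝ (⊤ : ℕ∞) f U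

variable {U : Set P3} {f g : P3 → ℂ} {p : P3}

lemma Sm.diffAt (hU : IsOpen U) (hf : Sm U f) (hp : p ∈ U) : DifferentiableAt ℝ f p :=
  (hf.differentiableOn (by simp)).differentiableAt (hU.mem_nhds hp)

lemma Sm.contOn (hf : Sm U f) : ContinuousOn f U := hf.continuousOn

lemma Sm.fderivSm (hU : IsOpen U) (hf : Sm U f) :
    ContDiffOn ℝ (⊤ : ℕ∞) (fun q => fderiv ℝ f q) U :=
  hf.fderiv_of_isOpen hU (by exact_mod_cast le_top)

lemma Sm.dv (hU : IsOpen U) (hf : Sm U f) (v : P3) : Sm U (Dv v f) :=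
  (hf.fderivSm hU).clm_apply contDiffOn_const

lemma Sm.opL (hU : IsOpen U) (hf : Sm U f) (c₁ c₂ : ℂ) (v₁ v₂ : P3) :
    Sm U (opL c₁ c₂ v₁ v₂ f) :=
  (contDiffOn_const.mul (hf.dv hU v₁)).add (contDiffOn_const.mul (hf.dv hU v₂))

lemma Sm.wp (hU : IsOpen U) (hf : Sm U f) : Sm U (Wp f) := hf.opL hU _ _ _ _
lemma Sm.wm (hU : IsOpen U) (hf : Sm U f) : Sm U (Wm f) := hf.opL hU _ _ _ _
lemma Sm.ap (hU : IsOpen U) (hf : Sm U f) : Sm U (Ap f) := hf.opL hU _ _ _ _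
lemma Sm.am (hU : IsOpen U) (hf : Sm U f) : Sm U (Am f) := hf.opL hU _ _ _ _
lemma Sm.ey (hU : IsOpen U) (hf : Sm U f) : Sm U (Ey f) := hf.opL hU _ _ _ _
lemma Sm.xd (hU : IsOpen U) (hf : Sm U f) : Sm U (Xd f) := hf.opL hU _ _ _ _

lemma Sm.iter {T : (P3 → ℂ) → P3 → ℂ} (hT : ∀ {h}, Sm U h → Sm U (T h))
    (hf : Sm U f) (n : ℕ) : Sm U (T^[n] f) := by
  induction n with
  | zero => exact hf
  | succ n ih => rw [Function.iterate_succ_apply']; exact hT ih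

/-- locality / congruence for fderiv on an open set -/
lemma fderiv_congr_of_eqOn (hU : IsOpen U) (h : EqOn f g U) (hp : p ∈ U) :
    fderiv ℝ f p = fderiv ℝ g p := by
  apply Filter.EventuallyEq.fderiv_eq
  filter_upwards [hU.mem_nhds hp] with q hq using h hq

lemma opL_congr (hU : IsOpen U) (h : EqOn f g U) (c₁ c₂ : ℂ) (v₁ v₂ : P3) :
    EqOn (opL c₁ c₂ v₁ v₂ f) (opL c₁ c₂ v₁ v₂ g) U := by
  intro p hp
  simp only [opL, fderiv_congr_of_eqOn hU h hp]

/-- symmetry of second directional derivatives -/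
lemma dv_comm (hU : IsOpen U) (hf : Sm U f) (hp : p ∈ U) (v w : P3) :
    Dv v (Dv w f) p = Dv w (Dv v f) p := by
  have hF : ContDiffOn ℝ (⊤ : ℕ∞) (fun q => fderiv ℝ f q) U := hf.fderivSm hU
  have hFd : DifferentiableAt ℝ (fun q => fderiv ℝ f q) p :=
    (hF.differentiableOn (by simp)).differentiableAt (hU.mem_nhds hp)
  have hev : ∀ᶠ y in 𝓝 p, HasFDerivAt f (fderiv ℝ f y) y := by
    filter_upwards [hU.mem_nhds hp] with y hy
    exact (hf.diffAt hU hy).hasFDerivAt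
  have hsymm := second_derivative_symmetric_of_eventually hev hFd.hasFDerivAt
  have key : ∀ u v : P3, fderiv ℝ (fun q => fderiv ℝ f q u) p v
      = (fderiv ℝ (fun q => fderiv ℝ f q) p) v u := by
    intro u v
    rw [fderiv_clm_apply hFd (differentiableAt_const u)]
    simp
  show fderiv ℝ (fun q => fderiv ℝ f q w) p v = fderiv ℝ (fun q => fderiv ℝ f q v) p w
  rw [key w v, key v w]
  exact hsymm v w

lemma dv_add_at (h1 : DifferentiableAt ℝ f p) (h2 : DifferentiableAt ℝ g p) (v : P3) :
    Dv v (fun q => f q + g q) p = Dv v f p + Dv v g p := by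
  simp [Dv, fderiv_fun_add h1 h2]

lemma dv_const_mul_at (h1 : DifferentiableAt ℝ f p) (c : ℂ) (v : P3) :
    Dv v (fun q => c * f q) p = c * Dv v f p := by
  simp [Dv, fderiv_const_mul h1 c]

/-- directional derivative of an `opL` -/
lemma dv_opL (hU : IsOpen U) (hf : Sm U f) (hp : p ∈ U) (v : P3) (c₁ c₂ : ℂ) (v₁ v₂ : P3) :
    Dv v (opL c₁ c₂ v₁ v₂ f) p = c₁ * Dv v (Dv v₁ f) p + c₂ * Dv v (Dv v₂ f) p := by
  have h1 : DifferentiableAt ℝ (fun q => c₁ * Dv v₁ f q) p :=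
    (((hf.dv hU v₁).diffAt hU hp).const_mul c₁)
  have h2 : DifferentiableAt ℝ (fun q => c₂ * Dv v₂ f q) p :=
    (((hf.dv hU v₂).diffAt hU hp).const_mul c₂)
  have : opL c₁ c₂ v₁ v₂ f = fun q => (c₁ * Dv v₁ f q) + (c₂ * Dv v₂ f q) := rfl
  rw [this, dv_add_at h1 h2, dv_const_mul_at (((hf.dv hU v₁)).diffAt hU hp),
    dv_const_mul_at (((hf.dv hU v₂)).diffAt hU hp)]

/-- commutation of two generic operators -/
lemma opL_comm (hU : IsOpen U) (hf : Sm U f) (c₁ c₂ d₁ d₂ : ℂ) (v₁ v₂ w₁ w₂ : P3) :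
    EqOn (opL c₁ c₂ v₁ v₂ (opL d₁ d₂ w₁ w₂ f)) (opL d₁ d₂ w₁ w₂ (opL c₁ c₂ v₁ v₂ f)) U := by
  intro p hp
  show opL c₁ c₂ v₁ v₂ (opL d₁ d₂ w₁ w₂ f) p = opL d₁ d₂ w₁ w₂ (opL c₁ c₂ v₁ v₂ f) p
  have L : opL c₁ c₂ v₁ v₂ (opL d₁ d₂ w₁ w₂ f) p
      = c₁ * (d₁ * Dv v₁ (Dv w₁ f) p + d₂ * Dv v₁ (Dv w₂ f) p)
        + c₂ * (d₁ * Dv v₂ (Dv w₁ f) p + d₂ * Dv v₂ (Dv w₂ f) p) := by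
    show c₁ * Dv v₁ (opL d₁ d₂ w₁ w₂ f) p + c₂ * Dv v₂ (opL d₁ d₂ w₁ w₂ f) p = _
    rw [dv_opL hU hf hp v₁ d₁ d₂ w₁ w₂, dv_opL hU hf hp v₂ d₁ d₂ w₁ w₂]
  have R : opL d₁ d₂ w₁ w₂ (opL c₁ c₂ v₁ v₂ f) p
      = d₁ * (c₁ * Dv w₁ (Dv v₁ f) p + c₂ * Dv w₁ (Dv v₂ f) p)
        + d₂ * (c₁ * Dv w₂ (Dv v₁ f) p + c₂ * Dv w₂ (Dv v₂ f) p) := by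
    show d₁ * Dv w₁ (opL c₁ c₂ v₁ v₂ f) p + d₂ * Dv w₂ (opL c₁ c₂ v₁ v₂ f) p = _
    rw [dv_opL hU hf hp w₁ c₁ c₂ v₁ v₂, dv_opL hU hf hp w₂ c₁ c₂ v₁ v₂]
  rw [L, R, dv_comm hU hf hp v₁ w₁, dv_comm hU hf hp v₁ w₂, dv_comm hU hf hp v₂ w₁,
    dv_comm hU hf hp v₂ w₂]
  ring


section StageB

variable {U : Set P3} {f g : P3 → ℂ} {p : P3}

/-- slice derivative in the 2nd coordinate equals directional derivative -/
lemma slice2_fderiv (hf : DifferentiableAt ℝ f p) (h : ℂ) :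
    fderiv ℝ (fun w => f (p.1, w, p.2.2)) p.2.1 h = fderiv ℝ f p ((0 : ℂ), h, (0 : ℝ)) := by
  obtain ⟨x, y, t⟩ := p
  have hA : HasFDerivAt (fun w : ℂ => ((x, w, t) : P3))
      ((0 : ℂ →L[ℝ] ℂ).prod ((ContinuousLinearMap.id ℝ ℂ).prod (0 : ℂ →L[ℝ] ℝ))) y :=
    (hasFDerivAt_const x y).prodMk ((hasFDerivAt_id y).prodMk (hasFDerivAt_const t y))
  have h2 : HasFDerivAt (fun w : ℂ => f (x, w, t))
      ((fderiv ℝ f (x, y, t)).comp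
        ((0 : ℂ →L[ℝ] ℂ).prod ((ContinuousLinearMap.id ℝ ℂ).prod (0 : ℂ →L[ℝ] ℝ)))) y :=
    (hf.hasFDerivAt.comp y hA : _)
  rw [h2.fderiv]
  simp

/-- slice derivative in the 3rd (real) coordinate -/
lemma slice3_fderiv (hf : DifferentiableAt ℝ f p) (h : ℝ) :
    fderiv ℝ (fun y => f (p.1, p.2.1, y)) p.2.2 h = fderiv ℝ f p ((0 : ℂ), (0 : ℂ), h) := by
  obtain ⟨x, y, t⟩ := p
  have hA : HasFDerivAt (fun u : ℝ => ((x, y, u) : P3))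
      ((0 : ℝ →L[ℝ] ℂ).prod ((0 : ℝ →L[ℝ] ℂ).prod (ContinuousLinearMap.id ℝ ℝ))) t :=
    (hasFDerivAt_const x t).prodMk ((hasFDerivAt_const y t).prodMk (hasFDerivAt_id t))
  have h2 : HasFDerivAt (fun u : ℝ => f (x, y, u))
      ((fderiv ℝ f (x, y, t)).comp
        ((0 : ℝ →L[ℝ] ℂ).prod ((0 : ℝ →L[ℝ] ℂ).prod (ContinuousLinearMap.id ℝ ℝ)))) t :=
    (hf.hasFDerivAt.comp t hA : _)
  rw [h2.fderiv]
  simp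

/-- slice derivative in the 1st coordinate, along the distinguished slice -/
lemma slice1_fderiv {ζ : ℂ} (hf : DifferentiableAt ℝ f ((ζ, 0, 0) : P3)) (h : ℂ) :
    fderiv ℝ (fun z : ℂ => f (z, 0, 0)) ζ h = fderiv ℝ f ((ζ, 0, 0) : P3) (h, 0, 0) := by
  have hA : HasFDerivAt (fun z : ℂ => ((z, 0, 0) : P3))
      ((ContinuousLinearMap.id ℝ ℂ).prod ((0 : ℂ →L[ℝ] ℂ).prod (0 : ℂ →L[ℝ] ℝ))) ζ :=
    (hasFDerivAt_id ζ).prodMk ((hasFDerivAt_const (0:ℂ) ζ).prodMk (hasFDerivAt_const (0:ℝ) ζ))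
  have h2 : HasFDerivAt (fun z : ℂ => f (z, 0, 0))
      ((fderiv ℝ f ((ζ, 0, 0) : P3)).comp
        ((ContinuousLinearMap.id ℝ ℂ).prod ((0 : ℂ →L[ℝ] ℂ).prod (0 : ℂ →L[ℝ] ℝ)))) ζ :=
    (hf.hasFDerivAt.comp ζ hA : _)
  rw [h2.fderiv]
  simp

lemma dz2_eq (hf : DifferentiableAt ℝ f p) : Dz2 f p = Wp f p := by
  show (fderiv ℝ (fun w => f (p.1, w, p.2.2)) p.2.1 1
      - Complex.I * fderiv ℝ (fun w => f (p.1, w, p.2.2)) p.2.1 Complex.I) / 2 = _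
  rw [slice2_fderiv hf 1, slice2_fderiv hf Complex.I]
  show _ = (1/2) * Dv vc f p + (-(Complex.I/2)) * Dv vd f p
  unfold Dv vc vd
  ring

lemma dz2bar_eq (hf : DifferentiableAt ℝ f p) : Dz2bar f p = Wm f p := by
  show (fderiv ℝ (fun w => f (p.1, w, p.2.2)) p.2.1 1
      + Complex.I * fderiv ℝ (fun w => f (p.1, w, p.2.2)) p.2.1 Complex.I) / 2 = _
  rw [slice2_fderiv hf 1, slice2_fderiv hf Complex.I]
  show _ = (1/2) * Dv vc f p + (Complex.I/2) * Dv vd f p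
  unfold Dv vc vd
  ring

lemma dy_eq (hf : DifferentiableAt ℝ f p) : Dy f p = Ey f p := by
  show fderiv ℝ (fun y => f (p.1, p.2.1, y)) p.2.2 1 = _
  rw [slice3_fderiv hf 1]
  show _ = (1 : ℂ) * Dv ve f p + 0 * Dv ve f p
  unfold Dv ve
  ring

lemma w1_slice {ζ : ℂ} (hf : DifferentiableAt ℝ f ((ζ, 0, 0) : P3)) :
    w1 (fun z : ℂ => f (z, 0, 0)) ζ = Ap f ((ζ, 0, 0) : P3) := by
  show (fderiv ℝ (fun z : ℂ => f (z, 0, 0)) ζ 1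
      - Complex.I * fderiv ℝ (fun z : ℂ => f (z, 0, 0)) ζ Complex.I) / 2 = _
  rw [slice1_fderiv hf 1, slice1_fderiv hf Complex.I]
  show _ = (1/2) * Dv va f ((ζ, 0, 0) : P3) + (-(Complex.I/2)) * Dv vb f ((ζ, 0, 0) : P3)
  unfold Dv va vb
  ring

lemma w1bar_slice {ζ : ℂ} (hf : DifferentiableAt ℝ f ((ζ, 0, 0) : P3)) :
    w1bar (fun z : ℂ => f (z, 0, 0)) ζ = Am f ((ζ, 0, 0) : P3) := by
  show (fderiv ℝ (fun z : ℂ => f (z, 0, 0)) ζ 1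
      + Complex.I * fderiv ℝ (fun z : ℂ => f (z, 0, 0)) ζ Complex.I) / 2 = _
  rw [slice1_fderiv hf 1, slice1_fderiv hf Complex.I]
  show _ = (1/2) * Dv va f ((ζ, 0, 0) : P3) + (Complex.I/2) * Dv vb f ((ζ, 0, 0) : P3)
  unfold Dv va vb
  ring

/-- locality of Dz2 -/
lemma dz2_congr (hU : IsOpen U) (h : EqOn f g U) (hp : p ∈ U) : Dz2 f p = Dz2 g p := by
  have hev : (fun w => f (p.1, w, p.2.2)) =ᶠ[𝓝 p.2.1] (fun w => g (p.1, w, p.2.2)) := by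
    have hcont : Continuous (fun w : ℂ => ((p.1, w, p.2.2) : P3)) := by continuity
    have hmem : {w : ℂ | ((p.1, w, p.2.2) : P3) ∈ U} ∈ 𝓝 p.2.1 := by
      refine (hcont.isOpen_preimage U hU).mem_nhds ?_
      simpa using hp
    filter_upwards [hmem] with w hw using h hw
  show w1 _ _ = w1 _ _
  unfold w1
  rw [hev.fderiv_eq]

lemma dz2bar_congr (hU : IsOpen U) (h : EqOn f g U) (hp : p ∈ U) : Dz2bar f p = Dz2bar g p := by
  have hev : (fun w => f (p.1, w, p.2.2)) =ᶠ[𝓝 p.2.1] (fun w => g (p.1, w, p.2.2)) := by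
    have hcont : Continuous (fun w : ℂ => ((p.1, w, p.2.2) : P3)) := by continuity
    have hmem : {w : ℂ | ((p.1, w, p.2.2) : P3) ∈ U} ∈ 𝓝 p.2.1 := by
      refine (hcont.isOpen_preimage U hU).mem_nhds ?_
      simpa using hp
    filter_upwards [hmem] with w hw using h hw
  show w1bar _ _ = w1bar _ _
  unfold w1bar
  rw [hev.fderiv_eq]

lemma Sm.wpIter (hf : Sm U f) (hU : IsOpen U) (n : ℕ) : Sm U (Wp^[n] f) :=
  Sm.iter (fun {h} hh => hh.wp hU) hf n

lemma Sm.wmIter (hf : Sm U f) (hU : IsOpen U) (n : ℕ) : Sm U (Wm^[n] f) :=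
  Sm.iter (fun {h} hh => hh.wm hU) hf n

lemma dz2_iter_eq (hU : IsOpen U) (hf : Sm U f) (j : ℕ) :
    EqOn (Dz2^[j] f) (Wp^[j] f) U := by
  induction j with
  | zero => exact fun p _ => rfl
  | succ j ih =>
    intro p hp
    rw [Function.iterate_succ_apply', Function.iterate_succ_apply']
    rw [dz2_congr hU ih hp]
    exact dz2_eq ((hf.wpIter hU j).diffAt hU hp)

lemma dz2bar_iter_eq (hU : IsOpen U) (hf : Sm U f) (k : ℕ) :
    EqOn (Dz2bar^[k] f) (Wm^[k] f) U := by
  induction k with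
  | zero => exact fun p _ => rfl
  | succ k ih =>
    intro p hp
    rw [Function.iterate_succ_apply', Function.iterate_succ_apply']
    rw [dz2bar_congr hU ih hp]
    exact dz2bar_eq ((hf.wmIter hU k).diffAt hU hp)

lemma dz2_iter_congr (hU : IsOpen U) (h : EqOn f g U) (j : ℕ) :
    EqOn (Dz2^[j] f) (Dz2^[j] g) U := by
  induction j with
  | zero => exact h
  | succ j ih =>
    intro p hp
    rw [Function.iterate_succ_apply', Function.iterate_succ_apply']
    exact dz2_congr hU ih hp

/-- identification of `mixedD` with the canonical operators -/
lemma mixedD_eq (hU : IsOpen U) {φf : P3 → ℝ} (hf : Sm U (fun p => (φf p : ℂ))) {ζ : ℂ}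
    (hζU : ((ζ, 0, 0) : P3) ∈ U) (j k : ℕ) :
    mixedD φf j k ζ = (Wp^[j] (Wm^[k] (fun p => (φf p : ℂ)))) ((ζ, 0, 0) : P3) := by
  unfold mixedD
  have h1 : EqOn (Dz2bar^[k] (fun p => (φf p : ℂ))) (Wm^[k] (fun p => (φf p : ℂ))) U :=
    dz2bar_iter_eq hU hf k
  have h2 := dz2_iter_congr hU h1 j
  rw [h2 hζU]
  exact dz2_iter_eq hU (hf.wmIter hU k) j hζU

end StageB

section StageB2

variable {U : Set P3} {f g : P3 → ℂ} {p : P3}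

/-- pointwise conjugation of a function -/
def cj (f : P3 → ℂ) : P3 → ℂ := fun p => (starRingEnd ℂ) (f p)

lemma Sm.cj (hf : Sm U f) : Sm U (St3.cj f) := by
  have h := (Complex.conjCLE.toContinuousLinearMap.contDiff (n := (⊤ : ℕ∞))).comp_contDiffOn hf
  exact h

lemma dv_cj (hf : DifferentiableAt ℝ f p) (v : P3) :
    Dv v (St3.cj f) p = (starRingEnd ℂ) (Dv v f p) := by
  have h2 : HasFDerivAt (St3.cj f)
      (Complex.conjCLE.toContinuousLinearMap.comp (fderiv ℝ f p)) p :=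
    (Complex.conjCLE.toContinuousLinearMap.hasFDerivAt.comp p hf.hasFDerivAt : _)
  show fderiv ℝ (St3.cj f) p v = _
  rw [h2.fderiv]
  simp [Dv]

lemma cj_cj (f : P3 → ℂ) : St3.cj (St3.cj f) = f := by
  funext q; simp [St3.cj]

lemma wm_cj (hU : IsOpen U) (hf : Sm U f) (hp : p ∈ U) :
    Wm (St3.cj f) p = (starRingEnd ℂ) (Wp f p) := by
  have hd := hf.diffAt hU hp
  show (1/2) * Dv vc (St3.cj f) p + (Complex.I/2) * Dv vd (St3.cj f) p
      = (starRingEnd ℂ) ((1/2) * Dv vc f p + (-(Complex.I/2)) * Dv vd f p)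
  rw [dv_cj hd, dv_cj hd, map_add, map_mul, map_mul]
  simp [map_ofNat]
  ring

lemma ap_cj (hU : IsOpen U) (hf : Sm U f) (hp : p ∈ U) :
    Ap (St3.cj f) p = (starRingEnd ℂ) (Am f p) := by
  have hd := hf.diffAt hU hp
  show (1/2) * Dv va (St3.cj f) p + (-(Complex.I/2)) * Dv vb (St3.cj f) p
      = (starRingEnd ℂ) ((1/2) * Dv va f p + (Complex.I/2) * Dv vb f p)
  rw [dv_cj hd, dv_cj hd, map_add, map_mul, map_mul]
  simp [map_ofNat]
  ring

lemma wm_iter_cj (hU : IsOpen U) (hf : Sm U f) (k : ℕ) :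
    EqOn (Wm^[k] (St3.cj f)) (St3.cj (Wp^[k] f)) U := by
  induction k with
  | zero => exact fun p _ => rfl
  | succ k ih =>
    intro p hp
    rw [Function.iterate_succ_apply', Function.iterate_succ_apply']
    exact ((opL_congr hU ih (1/2) (Complex.I/2) vc vd hp).trans
      (wm_cj hU (hf.wpIter hU k) hp) : _)

/-- vanishing of first-coordinate derivatives of functions vanishing on the slice -/
lemma dv_slice_zero {r : ℝ} (hU : IsOpen U) (hf : Sm U f)
    (hzero : ∀ ζ ∈ ball (0 : ℂ) r, f ((ζ, 0, 0) : P3) = 0) {ζ : ℂ} (hζ : ζ ∈ ball (0 : ℂ) r)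
    (hζU : ((ζ, 0, 0) : P3) ∈ U) (h : ℂ) :
    fderiv ℝ f ((ζ, 0, 0) : P3) ((h, 0, 0) : P3) = 0 := by
  have h1 : fderiv ℝ (fun z : ℂ => f (z, 0, 0)) ζ = fderiv ℝ (fun _ : ℂ => (0 : ℂ)) ζ := by
    apply Filter.EventuallyEq.fderiv_eq
    filter_upwards [isOpen_ball.mem_nhds hζ] with w hw using hzero w hw
  have h2 := slice1_fderiv (hf.diffAt hU hζU) h
  rw [h1] at h2
  simp [fderiv_const] at h2
  exact h2.symm

lemma ap_slice_zero {r : ℝ} (hU : IsOpen U) (hf : Sm U f)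
    (hzero : ∀ ζ ∈ ball (0 : ℂ) r, f ((ζ, 0, 0) : P3) = 0) {ζ : ℂ} (hζ : ζ ∈ ball (0 : ℂ) r)
    (hζU : ((ζ, 0, 0) : P3) ∈ U) :
    Ap f ((ζ, 0, 0) : P3) = 0 := by
  show (1/2) * Dv va f _ + (-(Complex.I/2)) * Dv vb f _ = 0
  unfold Dv va vb
  rw [dv_slice_zero hU hf hzero hζ hζU 1, dv_slice_zero hU hf hzero hζ hζU Complex.I]
  ring

lemma am_slice_zero {r : ℝ} (hU : IsOpen U) (hf : Sm U f)
    (hzero : ∀ ζ ∈ ball (0 : ℂ) r, f ((ζ, 0, 0) : P3) = 0) {ζ : ℂ} (hζ : ζ ∈ ball (0 : ℂ) r)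
    (hζU : ((ζ, 0, 0) : P3) ∈ U) :
    Am f ((ζ, 0, 0) : P3) = 0 := by
  show (1/2) * Dv va f _ + (Complex.I/2) * Dv vb f _ = 0
  unfold Dv va vb
  rw [dv_slice_zero hU hf hzero hζ hζU 1, dv_slice_zero hU hf hzero hζ hζU Complex.I]
  ring

end StageB2

section StageC

variable {U : Set P3} {f g : P3 → ℂ} {p : P3}

lemma Sm.opLIter (hf : Sm U f) (hU : IsOpen U) (c₁ c₂ : ℂ) (v₁ v₂ : P3) (n : ℕ) :
    Sm U ((St3.opL c₁ c₂ v₁ v₂)^[n] f) :=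
  Sm.iter (fun {h} hh => Sm.opL hU hh c₁ c₂ v₁ v₂) hf n

/-- commuting one operator through an iterate of another -/
lemma opL_comm_iter (hU : IsOpen U) (hf : Sm U f) (c₁ c₂ d₁ d₂ : ℂ) (v₁ v₂ w₁ w₂ : P3) (n : ℕ) :
    EqOn (opL c₁ c₂ v₁ v₂ ((opL d₁ d₂ w₁ w₂)^[n] f))
      ((opL d₁ d₂ w₁ w₂)^[n] (opL c₁ c₂ v₁ v₂ f)) U := by
  induction n with
  | zero => exact fun p _ => rfl
  | succ n ih =>
    intro p hp
    rw [Function.iterate_succ_apply', Function.iterate_succ_apply']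
    have h1 : opL c₁ c₂ v₁ v₂ (opL d₁ d₂ w₁ w₂ ((opL d₁ d₂ w₁ w₂)^[n] f)) p
        = opL d₁ d₂ w₁ w₂ (opL c₁ c₂ v₁ v₂ ((opL d₁ d₂ w₁ w₂)^[n] f)) p :=
      opL_comm hU (hf.opLIter hU d₁ d₂ w₁ w₂ n) c₁ c₂ d₁ d₂ v₁ v₂ w₁ w₂ hp
    rw [h1]
    exact opL_congr hU ih d₁ d₂ w₁ w₂ hp

lemma xd_split : Xd g p = Wp g p + Wm g p := by
  show (1 : ℂ) * fderiv ℝ g p vc + 0 * fderiv ℝ g p vc = _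
  show _ = ((1/2 : ℂ) * fderiv ℝ g p vc + (-(Complex.I/2)) * fderiv ℝ g p vd)
    + ((1/2 : ℂ) * fderiv ℝ g p vc + (Complex.I/2) * fderiv ℝ g p vd)
  ring

lemma dv_finset_sum {ι : Type*} (s : Finset ι) (F : ι → P3 → ℂ)
    (hF : ∀ i ∈ s, DifferentiableAt ℝ (F i) p) (v : P3) :
    Dv v (fun q => ∑ i ∈ s, F i q) p = ∑ i ∈ s, Dv v (F i) p := by
  unfold Dv
  rw [fderiv_fun_sum hF]
  simp

/-- the binomial expansion of the iterated real directional derivative -/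
lemma xd_iter_binom (hU : IsOpen U) (hf : Sm U f) (n : ℕ) :
    EqOn (Xd^[n] f)
      (fun p => ∑ j ∈ Finset.range (n+1),
        ((n.choose j : ℕ) : ℂ) * (Wp^[j] (Wm^[n-j] f)) p) U := by
  induction n with
  | zero => intro p _; simp
  | succ n ih =>
    intro p hp
    rw [Function.iterate_succ_apply']
    have smG : ∀ j : ℕ, Sm U (Wp^[j] (Wm^[n-j] f)) := fun j =>
      ((hf.wmIter hU (n-j)).wpIter hU j)
    have smT : ∀ j ∈ Finset.range (n+1), DifferentiableAt ℝ
        (fun q => ((n.choose j : ℕ) : ℂ) * (Wp^[j] (Wm^[n-j] f)) q) p :=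
      fun j _ => ((smG j).diffAt hU hp).const_mul _
    have step1 : Xd (Xd^[n] f) p
        = Xd (fun q => ∑ j ∈ Finset.range (n+1),
            ((n.choose j : ℕ) : ℂ) * (Wp^[j] (Wm^[n-j] f)) q) p :=
      opL_congr hU ih 1 0 vc vc hp
    have step2 : Xd (fun q => ∑ j ∈ Finset.range (n+1),
          ((n.choose j : ℕ) : ℂ) * (Wp^[j] (Wm^[n-j] f)) q) p
        = ∑ j ∈ Finset.range (n+1), ((n.choose j : ℕ) : ℂ) * Xd (Wp^[j] (Wm^[n-j] f)) p := by
      show (1:ℂ) * Dv vc _ p + (0:ℂ) * Dv vc _ p = _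
      rw [dv_finset_sum _ _ smT vc]
      have : ∀ j ∈ Finset.range (n+1),
          Dv vc (fun q => ((n.choose j : ℕ) : ℂ) * (Wp^[j] (Wm^[n-j] f)) q) p
          = ((n.choose j : ℕ) : ℂ) * Xd (Wp^[j] (Wm^[n-j] f)) p := by
        intro j _
        rw [dv_const_mul_at ((smG j).diffAt hU hp)]
        have : Xd (Wp^[j] (Wm^[n-j] f)) p = Dv vc (Wp^[j] (Wm^[n-j] f)) p := by
          show (1:ℂ) * Dv vc _ p + (0:ℂ) * Dv vc _ p = _; ring
        rw [this]
      rw [Finset.sum_congr rfl this]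
      ring
    have step3 : ∀ j ∈ Finset.range (n+1), Xd (Wp^[j] (Wm^[n-j] f)) p
        = (Wp^[j+1] (Wm^[n+1-(j+1)] f)) p + (Wp^[j] (Wm^[n+1-j] f)) p := by
      intro j hj
      have hjn : j ≤ n := Nat.lt_succ_iff.mp (Finset.mem_range.mp hj)
      rw [Nat.succ_sub_succ n j, xd_split, Function.iterate_succ_apply' Wp j]
      have hcomm : Wm (Wp^[j] (Wm^[n-j] f)) p = Wp^[j] (Wm (Wm^[n-j] f)) p :=
        opL_comm_iter hU (hf.wmIter hU (n-j)) (1/2) (Complex.I/2) (1/2) (-(Complex.I/2))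
          vc vd vc vd j hp
      rw [hcomm, ← Function.iterate_succ_apply' Wm (n-j) f]
      rw [show (n - j).succ = n + 1 - j by omega]
    -- assemble, with Pascal's rule
    have step3' : ∀ j ∈ Finset.range (n+1),
        ((n.choose j : ℕ) : ℂ) * Xd (Wp^[j] (Wm^[n-j] f)) p
        = ((n.choose j : ℕ) : ℂ) * ((Wp^[j+1] (Wm^[n+1-(j+1)] f)) p + (Wp^[j] (Wm^[n+1-j] f)) p) :=
      fun j hj => by rw [step3 j hj]
    rw [step1, step2, Finset.sum_congr rfl step3']
    have target : ∑ j ∈ Finset.range (n+2), (((n+1).choose j : ℕ) : ℂ) * (Wp^[j] (Wm^[n+1-j] f)) p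
        = ∑ j ∈ Finset.range (n+1),
            ((n.choose j : ℕ) : ℂ) * ((Wp^[j+1] (Wm^[n+1-(j+1)] f)) p + (Wp^[j] (Wm^[n+1-j] f)) p) := by
      rw [Finset.sum_range_succ' (fun j => (((n+1).choose j : ℕ) : ℂ) * (Wp^[j] (Wm^[n+1-j] f)) p) (n+1)]
      have pascal : ∀ j ∈ Finset.range (n+1),
          (((n+1).choose (j+1) : ℕ) : ℂ) * (Wp^[j+1] (Wm^[n+1-(j+1)] f)) p
          = ((n.choose j : ℕ) : ℂ) * (Wp^[j+1] (Wm^[n+1-(j+1)] f)) p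
            + ((n.choose (j+1) : ℕ) : ℂ) * (Wp^[j+1] (Wm^[n+1-(j+1)] f)) p := by
        intro j _
        rw [Nat.choose_succ_succ]
        push_cast
        ring
      rw [Finset.sum_congr rfl pascal, Finset.sum_add_distrib]
      have shift : ∑ j ∈ Finset.range (n+1),
          ((n.choose (j+1) : ℕ) : ℂ) * (Wp^[j+1] (Wm^[n+1-(j+1)] f)) p
          + (((n+1).choose 0 : ℕ) : ℂ) * (Wp^[0] (Wm^[n+1-0] f)) p
          = ∑ j ∈ Finset.range (n+1), ((n.choose j : ℕ) : ℂ) * (Wp^[j] (Wm^[n+1-j] f)) p := by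
        have := (Finset.sum_range_succ' (fun j => ((n.choose j : ℕ) : ℂ) * (Wp^[j] (Wm^[n+1-j] f)) p) (n+1)).symm
        rw [Finset.sum_range_succ (fun j => ((n.choose j : ℕ) : ℂ) * (Wp^[j] (Wm^[n+1-j] f)) p) (n+1)] at this
        simp only [Nat.choose_succ_self, Nat.cast_zero, zero_mul, add_zero] at this
        simpa using this
      rw [add_assoc, shift, ← Finset.sum_add_distrib]
      exact Finset.sum_congr rfl (fun j _ => by ring)
    rw [← target]

lemma xd_iter_binom' (hU : IsOpen U) (hf : Sm U f) (n : ℕ) (hp : p ∈ U) :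
    (Xd^[n] f) p = ∑ j ∈ Finset.range (n+1),
      ((n.choose j : ℕ) : ℂ) * (Wp^[j] (Wm^[n-j] f)) p :=
  xd_iter_binom hU hf n hp
end StageC

section StageC2

variable {U : Set P3} {g : P3 → ℂ}

/-- the horizontal line `ε ↦ (z₁, ε, 0)` -/
def gam (z₁ : ℂ) : ℝ → P3 := fun ε => ((z₁, (ε : ℂ), (0 : ℝ)) : P3)

lemma gam_contDiff (z₁ : ℂ) : ContDiff ℝ (⊤ : ℕ∞) (gam z₁) := by
  unfold gam
  exact contDiff_const.prodMk (Complex.ofRealCLM.contDiff.prodMk contDiff_const)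

lemma gam_hasDerivAt (z₁ : ℂ) (ε : ℝ) :
    HasDerivAt (gam z₁) (((0 : ℂ), (1 : ℂ), (0 : ℝ)) : P3) ε := by
  unfold gam
  have h1 : HasDerivAt (fun ε : ℝ => (ε : ℂ)) 1 ε := by
    simpa using (hasDerivAt_id' ε).ofReal_comp
  exact (hasDerivAt_const ε z₁).prodMk (h1.prodMk (hasDerivAt_const ε (0 : ℝ)))

lemma Sm.xdIter (hf : Sm U g) (hU : IsOpen U) (n : ℕ) : Sm U (Xd^[n] g) :=
  Sm.iter (fun {h} hh => hh.xd hU) hf n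

lemma iter_deriv_on_line (hU : IsOpen U) (hg : Sm U g) (z₁ : ℂ) {s₀ : ℝ} (hs₀ : 0 < s₀)
    (hmap : ∀ ε ∈ Icc (0:ℝ) s₀, gam z₁ ε ∈ U) (n : ℕ) :
    ∀ ε ∈ Icc (0:ℝ) s₀, iteratedDerivWithin n (fun x => g (gam z₁ x)) (Icc (0:ℝ) s₀) ε
      = (Xd^[n] g) (gam z₁ ε) := by
  induction n with
  | zero => intro ε hε; simp
  | succ n ih =>
    intro ε hε
    rw [iteratedDerivWithin_succ]
    rw [derivWithin_congr (fun x hx => ih x hx) (ih ε hε)]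
    have hder : HasDerivAt (fun x => (Xd^[n] g) (gam z₁ x)) ((Xd^[n+1] g) (gam z₁ ε)) ε := by
      have hd : HasFDerivAt (Xd^[n] g) (fderiv ℝ (Xd^[n] g) (gam z₁ ε)) (gam z₁ ε) :=
        (((hg.xdIter hU n).diffAt hU (hmap ε hε))).hasFDerivAt
      have hc := hd.comp_hasDerivAt ε (gam_hasDerivAt z₁ ε)
      have heq : fderiv ℝ (Xd^[n] g) (gam z₁ ε) (((0:ℂ), (1:ℂ), (0:ℝ)) : P3)
          = (Xd^[n+1] g) (gam z₁ ε) := by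
        rw [Function.iterate_succ_apply']
        show _ = (1:ℂ) * fderiv ℝ (Xd^[n] g) (gam z₁ ε) vc + 0 * fderiv ℝ (Xd^[n] g) (gam z₁ ε) vc
        unfold vc
        ring
      rw [heq] at hc
      exact hc
    exact (hder.hasDerivWithinAt).derivWithin ((uniqueDiffOn_Icc hs₀) ε hε)

/-- uniform bound of a smooth function along the line -/
lemma bound_on_line (hU : IsOpen U) (hg : Sm U g) (z₁ : ℂ) {s₀ : ℝ} (hs₀ : 0 < s₀)
    (hmap : ∀ ε ∈ Icc (0:ℝ) s₀, gam z₁ ε ∈ U) :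
    ∃ C : ℝ, 0 ≤ C ∧ ∀ ε ∈ Icc (0:ℝ) s₀, ‖g (gam z₁ ε)‖ ≤ C := by
  obtain ⟨C, hC⟩ := isCompact_Icc.exists_bound_of_continuousOn
    ((hg.contOn).comp (gam_contDiff z₁).continuous.continuousOn (fun x hx => hmap x hx))
  refine ⟨C, le_trans (norm_nonneg _) (hC 0 ⟨le_refl _, hs₀.le⟩), fun ε hε => hC ε hε⟩

/-- Taylor approximation with explicit remainder bound along the line -/
lemma taylor_bound_line (hU : IsOpen U) (hg : Sm U g) (z₁ : ℂ) {s₀ : ℝ} (hs₀ : 0 < s₀)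
    (hmap : ∀ ε ∈ Icc (0:ℝ) s₀, gam z₁ ε ∈ U) (N : ℕ) :
    ∃ C : ℝ, 0 ≤ C ∧ ∀ ε ∈ Icc (0:ℝ) s₀,
      ‖g (gam z₁ ε) - ∑ n ∈ Finset.range (N+1),
        ((ε:ℂ)^n / (n.factorial : ℂ)) * (Xd^[n] g) (gam z₁ 0)‖ ≤ C * ε^(N+1) := by
  have hF : ContDiffOn ℝ ((N+1 : ℕ) : ℕ∞) (fun x : ℝ => g (gam z₁ x)) (Icc (0:ℝ) s₀) := by
    have := ContDiffOn.comp (hg.of_le (by exact_mod_cast le_top))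
      (((gam_contDiff z₁).of_le (le_refl _)).contDiffOn) (fun x hx => hmap x hx)
    exact this.of_le (by exact_mod_cast le_top)
  obtain ⟨C, hC0, hC⟩ := bound_on_line hU (hg.xdIter hU (N+1)) z₁ hs₀ hmap
  have hCiter : ∀ y ∈ Icc (0:ℝ) s₀,
      ‖iteratedDerivWithin (N+1) (fun x : ℝ => g (gam z₁ x)) (Icc (0:ℝ) s₀) y‖ ≤ C := by
    intro y hy
    rw [iter_deriv_on_line hU hg z₁ hs₀ hmap (N+1) y hy]
    exact hC y hy
  refine ⟨C / N.factorial, by positivity, fun ε hε => ?_⟩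
  have key := taylor_mean_remainder_bound hs₀.le (by exact_mod_cast hF) hε hCiter
  have hTay : taylorWithinEval (fun x : ℝ => g (gam z₁ x)) N (Icc (0:ℝ) s₀) 0 ε
      = ∑ n ∈ Finset.range (N+1), ((ε:ℂ)^n / (n.factorial : ℂ)) * (Xd^[n] g) (gam z₁ 0) := by
    rw [taylor_within_apply]
    refine Finset.sum_congr rfl (fun k hk => ?_)
    rw [iter_deriv_on_line hU hg z₁ hs₀ hmap k 0 ⟨le_refl _, hs₀.le⟩]
    rw [Complex.real_smul]
    push_cast
    ring
  rw [hTay] at key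
  calc ‖_‖ ≤ C * (ε - 0)^(N+1) / N.factorial := key
    _ = C / N.factorial * ε^(N+1) := by rw [sub_zero]; ring

end StageC2

section StageD1

variable {U : Set P3} {f g h : P3 → ℂ} {p : P3}

/-- the projection (z₁,z₂,z₃) ↦ (z₁,z₂,Im z₃) as a continuous linear map -/
def piCLM : (ℂ × ℂ × ℂ) →L[ℝ] P3 :=
  (ContinuousLinearMap.fst ℝ ℂ (ℂ × ℂ)).prod
    (((ContinuousLinearMap.fst ℝ ℂ ℂ).comp (ContinuousLinearMap.snd ℝ ℂ (ℂ × ℂ))).prod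
      (Complex.imCLM.comp ((ContinuousLinearMap.snd ℝ ℂ ℂ).comp (ContinuousLinearMap.snd ℝ ℂ (ℂ × ℂ)))))

lemma piCLM_apply (z : ℂ × ℂ × ℂ) : piCLM z = ((z.1, z.2.1, z.2.2.im) : P3) := rfl

/-- the map z ↦ (Re z₃ : ℂ) as a continuous linear map -/
def reCLM3 : (ℂ × ℂ × ℂ) →L[ℝ] ℂ :=
  Complex.ofRealCLM.comp (Complex.reCLM.comp
    ((ContinuousLinearMap.snd ℝ ℂ ℂ).comp (ContinuousLinearMap.snd ℝ ℂ (ℂ × ℂ))))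

lemma reCLM3_apply (z : ℂ × ℂ × ℂ) : reCLM3 z = ((z.2.2.re : ℝ) : ℂ) := rfl

lemma graphRho_eq (φf : P3 → ℝ) :
    graphRho φf = fun z => (fun p => ((φf p : ℝ) : ℂ)) (piCLM z) - reCLM3 z := rfl

lemma e3_zero (c : ℂ) : e3 0 c = ((c, 0, 0) : ℂ × ℂ × ℂ) := rfl
lemma e3_one (c : ℂ) : e3 1 c = ((0, c, 0) : ℂ × ℂ × ℂ) := rfl
lemma e3_two (c : ℂ) : e3 2 c = ((0, 0, c) : ℂ × ℂ × ℂ) := rfl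

lemma fderiv_rho_apply {φf : P3 → ℝ} {z : ℂ × ℂ × ℂ}
    (hd : DifferentiableAt ℝ (fun p => ((φf p : ℝ) : ℂ)) (piCLM z)) (u : ℂ × ℂ × ℂ) :
    fderiv ℝ (graphRho φf) z u
      = fderiv ℝ (fun p => ((φf p : ℝ) : ℂ)) (piCLM z) (piCLM u) - reCLM3 u := by
  have h1 : HasFDerivAt (fun w => (fun p => ((φf p : ℝ) : ℂ)) (piCLM w))
      ((fderiv ℝ (fun p => ((φf p : ℝ) : ℂ)) (piCLM z)).comp piCLM) z :=
    hd.hasFDerivAt.comp z piCLM.hasFDerivAt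
  have h3 : HasFDerivAt (graphRho φf)
      (((fderiv ℝ (fun p => ((φf p : ℝ) : ℂ)) (piCLM z)).comp piCLM) - reCLM3) z :=
    (h1.sub reCLM3.hasFDerivAt : _)
  rw [h3.fderiv]
  rfl

-- first level: wd3/wd3bar of graphRho
variable {φf : P3 → ℝ} {z : ℂ × ℂ × ℂ}

lemma wd3_rho0 (hd : DifferentiableAt ℝ (fun p => ((φf p : ℝ) : ℂ)) (piCLM z)) :
    wd3 0 (graphRho φf) z = Ap (fun p => ((φf p : ℝ) : ℂ)) (piCLM z) := by
  unfold wd3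
  rw [e3_zero, e3_zero, fderiv_rho_apply hd, fderiv_rho_apply hd]
  show _ = (1/2) * Dv va _ _ + (-(Complex.I/2)) * Dv vb _ _
  unfold Dv va vb
  have h1 : piCLM ((1 : ℂ), (0:ℂ), (0:ℂ)) = ((1 : ℂ), (0:ℂ), (0:ℝ)) := rfl
  have h2 : piCLM ((Complex.I : ℂ), (0:ℂ), (0:ℂ)) = ((Complex.I : ℂ), (0:ℂ), (0:ℝ)) := rfl
  have h3 : reCLM3 ((1 : ℂ), (0:ℂ), (0:ℂ)) = 0 := rfl
  have h4 : reCLM3 ((Complex.I : ℂ), (0:ℂ), (0:ℂ)) = 0 := rfl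
  rw [h1, h2, h3, h4]
  ring

lemma wd3bar_rho0 (hd : DifferentiableAt ℝ (fun p => ((φf p : ℝ) : ℂ)) (piCLM z)) :
    wd3bar 0 (graphRho φf) z = Am (fun p => ((φf p : ℝ) : ℂ)) (piCLM z) := by
  unfold wd3bar
  rw [e3_zero, e3_zero, fderiv_rho_apply hd, fderiv_rho_apply hd]
  show _ = (1/2) * Dv va _ _ + ((Complex.I/2)) * Dv vb _ _
  unfold Dv va vb
  have h1 : piCLM ((1 : ℂ), (0:ℂ), (0:ℂ)) = ((1 : ℂ), (0:ℂ), (0:ℝ)) := rfl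
  have h2 : piCLM ((Complex.I : ℂ), (0:ℂ), (0:ℂ)) = ((Complex.I : ℂ), (0:ℂ), (0:ℝ)) := rfl
  have h3 : reCLM3 ((1 : ℂ), (0:ℂ), (0:ℂ)) = 0 := rfl
  have h4 : reCLM3 ((Complex.I : ℂ), (0:ℂ), (0:ℂ)) = 0 := rfl
  rw [h1, h2, h3, h4]
  ring

lemma wd3_rho1 (hd : DifferentiableAt ℝ (fun p => ((φf p : ℝ) : ℂ)) (piCLM z)) :
    wd3 1 (graphRho φf) z = Wp (fun p => ((φf p : ℝ) : ℂ)) (piCLM z) := by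
  unfold wd3
  rw [e3_one, e3_one, fderiv_rho_apply hd, fderiv_rho_apply hd]
  show _ = (1/2) * Dv vc _ _ + (-(Complex.I/2)) * Dv vd _ _
  unfold Dv vc vd
  have h1 : piCLM ((0:ℂ), (1 : ℂ), (0:ℂ)) = ((0:ℂ), (1 : ℂ), (0:ℝ)) := rfl
  have h2 : piCLM ((0:ℂ), (Complex.I : ℂ), (0:ℂ)) = ((0:ℂ), (Complex.I : ℂ), (0:ℝ)) := rfl
  have h3 : reCLM3 ((0:ℂ), (1 : ℂ), (0:ℂ)) = 0 := rfl
  have h4 : reCLM3 ((0:ℂ), (Complex.I : ℂ), (0:ℂ)) = 0 := rfl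
  rw [h1, h2, h3, h4]
  ring

lemma wd3bar_rho1 (hd : DifferentiableAt ℝ (fun p => ((φf p : ℝ) : ℂ)) (piCLM z)) :
    wd3bar 1 (graphRho φf) z = Wm (fun p => ((φf p : ℝ) : ℂ)) (piCLM z) := by
  unfold wd3bar
  rw [e3_one, e3_one, fderiv_rho_apply hd, fderiv_rho_apply hd]
  show _ = (1/2) * Dv vc _ _ + ((Complex.I/2)) * Dv vd _ _
  unfold Dv vc vd
  have h1 : piCLM ((0:ℂ), (1 : ℂ), (0:ℂ)) = ((0:ℂ), (1 : ℂ), (0:ℝ)) := rfl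
  have h2 : piCLM ((0:ℂ), (Complex.I : ℂ), (0:ℂ)) = ((0:ℂ), (Complex.I : ℂ), (0:ℝ)) := rfl
  have h3 : reCLM3 ((0:ℂ), (1 : ℂ), (0:ℂ)) = 0 := rfl
  have h4 : reCLM3 ((0:ℂ), (Complex.I : ℂ), (0:ℂ)) = 0 := rfl
  rw [h1, h2, h3, h4]
  ring

lemma wd3_rho2 (hd : DifferentiableAt ℝ (fun p => ((φf p : ℝ) : ℂ)) (piCLM z)) :
    wd3 2 (graphRho φf) z
      = -(Complex.I/2) * Ey (fun p => ((φf p : ℝ) : ℂ)) (piCLM z) - 1/2 := by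
  unfold wd3
  rw [e3_two, e3_two, fderiv_rho_apply hd, fderiv_rho_apply hd]
  have h1 : piCLM ((0:ℂ), (0:ℂ), (1 : ℂ)) = ((0:ℂ), (0 : ℂ), (0:ℝ)) := rfl
  have h2 : piCLM ((0:ℂ), (0:ℂ), (Complex.I : ℂ)) = ((0:ℂ), (0 : ℂ), (1:ℝ)) := rfl
  have h3 : reCLM3 ((0:ℂ), (0:ℂ), (1 : ℂ)) = 1 := rfl
  have h4 : reCLM3 ((0:ℂ), (0:ℂ), (Complex.I : ℂ)) = 0 := rfl
  rw [h1, h2, h3, h4]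
  have h5 : fderiv ℝ (fun p => ((φf p : ℝ) : ℂ)) (piCLM z) ((0:ℂ), (0 : ℂ), (0:ℝ)) = 0 := by
    rw [show ((0:ℂ), (0 : ℂ), (0:ℝ)) = (0 : P3) from rfl, map_zero]
  rw [h5]
  show _ = -(Complex.I/2) * ((1:ℂ) * Dv ve _ _ + 0 * Dv ve _ _) - 1/2
  unfold Dv ve
  ring

lemma wd3bar_rho2 (hd : DifferentiableAt ℝ (fun p => ((φf p : ℝ) : ℂ)) (piCLM z)) :
    wd3bar 2 (graphRho φf) z
      = (Complex.I/2) * Ey (fun p => ((φf p : ℝ) : ℂ)) (piCLM z) - 1/2 := by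
  unfold wd3bar
  rw [e3_two, e3_two, fderiv_rho_apply hd, fderiv_rho_apply hd]
  have h1 : piCLM ((0:ℂ), (0:ℂ), (1 : ℂ)) = ((0:ℂ), (0 : ℂ), (0:ℝ)) := rfl
  have h2 : piCLM ((0:ℂ), (0:ℂ), (Complex.I : ℂ)) = ((0:ℂ), (0 : ℂ), (1:ℝ)) := rfl
  have h3 : reCLM3 ((0:ℂ), (0:ℂ), (1 : ℂ)) = 1 := rfl
  have h4 : reCLM3 ((0:ℂ), (0:ℂ), (Complex.I : ℂ)) = 0 := rfl
  rw [h1, h2, h3, h4]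
  have h5 : fderiv ℝ (fun p => ((φf p : ℝ) : ℂ)) (piCLM z) ((0:ℂ), (0 : ℂ), (0:ℝ)) = 0 := by
    rw [show ((0:ℂ), (0 : ℂ), (0:ℝ)) = (0 : P3) from rfl, map_zero]
  rw [h5]
  show _ = (Complex.I/2) * ((1:ℂ) * Dv ve _ _ + 0 * Dv ve _ _) - 1/2
  unfold Dv ve
  ring

/-- second level: wd3 of a function agreeing with `G ∘ π - c` near z -/
lemma wd3_comp_pi (hU : IsOpen U) {G : P3 → ℂ} (hG : Sm U G) {F : ℂ × ℂ × ℂ → ℂ} {c : ℂ}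
    (hEq : ∀ w : ℂ × ℂ × ℂ, piCLM w ∈ U → F w = G (piCLM w) - c)
    (hz : piCLM z ∈ U) (u u' : ℂ) (j : Fin 3) :
    fderiv ℝ F z (e3 j u) = fderiv ℝ G (piCLM z) (piCLM (e3 j u)) := by
  have hev : F =ᶠ[𝓝 z] fun w => G (piCLM w) - c := by
    have hopen : IsOpen (piCLM ⁻¹' U) := hU.preimage piCLM.continuous
    filter_upwards [hopen.mem_nhds hz] with w hw using hEq w hw
  have hd : DifferentiableAt ℝ G (piCLM z) := hG.diffAt hU hz
  have h1 : HasFDerivAt (fun w => G (piCLM w) - c)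
      ((fderiv ℝ G (piCLM z)).comp piCLM) z := by
    have := (hd.hasFDerivAt.comp z piCLM.hasFDerivAt).sub_const c
    exact this
  rw [hev.fderiv_eq, h1.fderiv]
  rfl

end StageD1

section StageD2

variable {U : Set P3} {f g : P3 → ℂ} {p : P3} {z : ℂ × ℂ × ℂ}

lemma wd3_0_of_comp (hU : IsOpen U) {G : P3 → ℂ} (hG : Sm U G) {F : ℂ × ℂ × ℂ → ℂ} {c : ℂ}
    (hEq : ∀ w : ℂ × ℂ × ℂ, piCLM w ∈ U → F w = G (piCLM w) - c)
    (hz : piCLM z ∈ U) : wd3 0 F z = Ap G (piCLM z) := by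
  unfold wd3
  rw [wd3_comp_pi hU hG hEq hz 1 1 0, wd3_comp_pi hU hG hEq hz Complex.I 1 0]
  rw [e3_zero, e3_zero]
  have h1 : piCLM ((1 : ℂ), (0:ℂ), (0:ℂ)) = ((1 : ℂ), (0:ℂ), (0:ℝ)) := rfl
  have h2 : piCLM ((Complex.I : ℂ), (0:ℂ), (0:ℂ)) = ((Complex.I : ℂ), (0:ℂ), (0:ℝ)) := rfl
  rw [h1, h2]
  show _ = (1/2) * Dv va G _ + (-(Complex.I/2)) * Dv vb G _
  unfold Dv va vb
  ring

lemma wd3_1_of_comp (hU : IsOpen U) {G : P3 → ℂ} (hG : Sm U G) {F : ℂ × ℂ × ℂ → ℂ} {c : ℂ}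
    (hEq : ∀ w : ℂ × ℂ × ℂ, piCLM w ∈ U → F w = G (piCLM w) - c)
    (hz : piCLM z ∈ U) : wd3 1 F z = Wp G (piCLM z) := by
  unfold wd3
  rw [wd3_comp_pi hU hG hEq hz 1 1 1, wd3_comp_pi hU hG hEq hz Complex.I 1 1]
  rw [e3_one, e3_one]
  have h1 : piCLM ((0:ℂ), (1 : ℂ), (0:ℂ)) = ((0:ℂ), (1 : ℂ), (0:ℝ)) := rfl
  have h2 : piCLM ((0:ℂ), (Complex.I : ℂ), (0:ℂ)) = ((0:ℂ), (Complex.I : ℂ), (0:ℝ)) := rfl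
  rw [h1, h2]
  show _ = (1/2) * Dv vc G _ + (-(Complex.I/2)) * Dv vd G _
  unfold Dv vc vd
  ring

lemma wd3_2_of_comp (hU : IsOpen U) {G : P3 → ℂ} (hG : Sm U G) {F : ℂ × ℂ × ℂ → ℂ} {c : ℂ}
    (hEq : ∀ w : ℂ × ℂ × ℂ, piCLM w ∈ U → F w = G (piCLM w) - c)
    (hz : piCLM z ∈ U) : wd3 2 F z = -(Complex.I/2) * Ey G (piCLM z) := by
  unfold wd3
  rw [wd3_comp_pi hU hG hEq hz 1 1 2, wd3_comp_pi hU hG hEq hz Complex.I 1 2]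
  rw [e3_two, e3_two]
  have h1 : piCLM ((0:ℂ), (0:ℂ), (1 : ℂ)) = ((0:ℂ), (0 : ℂ), (0:ℝ)) := rfl
  have h2 : piCLM ((0:ℂ), (0:ℂ), (Complex.I : ℂ)) = ((0:ℂ), (0 : ℂ), (1:ℝ)) := rfl
  rw [h1, h2]
  have h5 : fderiv ℝ G (piCLM z) ((0:ℂ), (0 : ℂ), (0:ℝ)) = 0 := by
    rw [show ((0:ℂ), (0 : ℂ), (0:ℝ)) = (0 : P3) from rfl, map_zero]
  rw [h5]
  show _ = -(Complex.I/2) * ((1:ℂ) * Dv ve G _ + 0 * Dv ve G _)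
  unfold Dv ve
  ring

lemma opL_const_mul {h : P3 → ℂ} (hd : DifferentiableAt ℝ h p) (c c₁ c₂ : ℂ) (v₁ v₂ : P3) :
    opL c₁ c₂ v₁ v₂ (fun q => c * h q) p = c * opL c₁ c₂ v₁ v₂ h p := by
  show c₁ * Dv v₁ (fun q => c * h q) p + c₂ * Dv v₂ (fun q => c * h q) p = _
  rw [dv_const_mul_at hd, dv_const_mul_at hd]
  show _ = c * (c₁ * Dv v₁ h p + c₂ * Dv v₂ h p)
  ring

lemma wp_iter_congr (hU : IsOpen U) (h : EqOn f g U) (j : ℕ) :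
    EqOn (Wp^[j] f) (Wp^[j] g) U := by
  induction j with
  | zero => exact h
  | succ j ih =>
    intro p hp
    rw [Function.iterate_succ_apply', Function.iterate_succ_apply']
    exact opL_congr hU ih (1/2) (-(Complex.I/2)) vc vd hp

/-- pulling a first-order operator out of the z₂-iterates -/
lemma pull_opL (hU : IsOpen U) (hf : Sm U f) (c₁ c₂ : ℂ) (v₁ v₂ : P3) (j k : ℕ) :
    EqOn (Wp^[j] (Wm^[k] (St3.opL c₁ c₂ v₁ v₂ f)))
      (St3.opL c₁ c₂ v₁ v₂ (Wp^[j] (Wm^[k] f))) U := by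
  have e1 : EqOn (Wm^[k] (St3.opL c₁ c₂ v₁ v₂ f)) (St3.opL c₁ c₂ v₁ v₂ (Wm^[k] f)) U :=
    fun q hq => ((opL_comm_iter hU hf c₁ c₂ (1/2) (Complex.I/2) v₁ v₂ vc vd k) hq).symm
  have e2 := wp_iter_congr hU e1 j
  intro p hp
  exact (e2 hp).trans
    ((opL_comm_iter hU (hf.wmIter hU k) c₁ c₂ (1/2) (-(Complex.I/2)) v₁ v₂ vc vd j hp).symm)

-- context for the coefficient lemmas
variable {rr : ℝ} {m : ℕ} {f0 : P3 → ℂ}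

/-- P1 : coefficients of ρ₁ vanish up to order m -/
lemma coeff_rho1 (hU : IsOpen U) (hf : Sm U f0)
    (hsub : ∀ ζ ∈ ball (0:ℂ) rr, ((ζ, 0, 0) : P3) ∈ U)
    (H1 : ∀ j k : ℕ, j + k ≤ m → ∀ ζ ∈ ball (0:ℂ) rr, Wp^[j] (Wm^[k] f0) ((ζ, 0, 0) : P3) = 0)
    {n : ℕ} (hn : n ≤ m) {ζ : ℂ} (hζ : ζ ∈ ball (0:ℂ) rr) :
    Xd^[n] (Ap f0) ((ζ, 0, 0) : P3) = 0 := by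
  rw [xd_iter_binom hU (hf.ap hU) n (hsub ζ hζ)]
  apply Finset.sum_eq_zero
  intro j hj
  have hj' : j ≤ n := Nat.lt_succ_iff.mp (Finset.mem_range.mp hj)
  have e : Wp^[j] (Wm^[n-j] (Ap f0)) ((ζ, 0, 0) : P3)
      = Ap (Wp^[j] (Wm^[n-j] f0)) ((ζ, 0, 0) : P3) :=
    pull_opL hU hf (1/2) (-(Complex.I/2)) va vb j (n-j) (hsub ζ hζ)
  rw [e, ap_slice_zero hU ((hf.wmIter hU (n-j)).wpIter hU j)
    (fun ζ' hζ' => H1 j (n-j) (by omega) ζ' hζ') hζ (hsub ζ hζ), mul_zero]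

/-- P3 : coefficients of ρ₂ vanish up to order m-1 -/
lemma coeff_rho2 (hU : IsOpen U) (hf : Sm U f0)
    (hsub : ∀ ζ ∈ ball (0:ℂ) rr, ((ζ, 0, 0) : P3) ∈ U)
    (H1 : ∀ j k : ℕ, j + k ≤ m → ∀ ζ ∈ ball (0:ℂ) rr, Wp^[j] (Wm^[k] f0) ((ζ, 0, 0) : P3) = 0)
    {n : ℕ} (hn : n + 1 ≤ m) {ζ : ℂ} (hζ : ζ ∈ ball (0:ℂ) rr) :
    Xd^[n] (Wp f0) ((ζ, 0, 0) : P3) = 0 := by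
  rw [xd_iter_binom hU (hf.wp hU) n (hsub ζ hζ)]
  apply Finset.sum_eq_zero
  intro j hj
  have hj' : j ≤ n := Nat.lt_succ_iff.mp (Finset.mem_range.mp hj)
  have e : Wp^[j] (Wm^[n-j] (Wp f0)) ((ζ, 0, 0) : P3)
      = Wp (Wp^[j] (Wm^[n-j] f0)) ((ζ, 0, 0) : P3) :=
    pull_opL hU hf (1/2) (-(Complex.I/2)) vc vd j (n-j) (hsub ζ hζ)
  rw [e, ← Function.iterate_succ_apply' Wp j,
    H1 (j+1) (n-j) (by omega) ζ hζ, mul_zero]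

/-- P2 : coefficients of L₁₁ vanish up to order m -/
lemma coeff_L11 (hU : IsOpen U) (hf : Sm U f0)
    (hsub : ∀ ζ ∈ ball (0:ℂ) rr, ((ζ, 0, 0) : P3) ∈ U)
    (H1 : ∀ j k : ℕ, j + k ≤ m → ∀ ζ ∈ ball (0:ℂ) rr, Wp^[j] (Wm^[k] f0) ((ζ, 0, 0) : P3) = 0)
    {n : ℕ} (hn : n ≤ m) {ζ : ℂ} (hζ : ζ ∈ ball (0:ℂ) rr) :
    Xd^[n] (Ap (Am f0)) ((ζ, 0, 0) : P3) = 0 := by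
  rw [xd_iter_binom hU ((hf.am hU).ap hU) n (hsub ζ hζ)]
  apply Finset.sum_eq_zero
  intro j hj
  have hj' : j ≤ n := Nat.lt_succ_iff.mp (Finset.mem_range.mp hj)
  have e : Wp^[j] (Wm^[n-j] (Ap (Am f0))) ((ζ, 0, 0) : P3)
      = Ap (Wp^[j] (Wm^[n-j] (Am f0))) ((ζ, 0, 0) : P3) :=
    pull_opL hU (hf.am hU) (1/2) (-(Complex.I/2)) va vb j (n-j) (hsub ζ hζ)
  rw [e]
  have e2 : EqOn (Wp^[j] (Wm^[n-j] (Am f0))) (Am (Wp^[j] (Wm^[n-j] f0))) U :=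
    pull_opL hU hf (1/2) (Complex.I/2) va vb j (n-j)
  have e3 : Ap (Wp^[j] (Wm^[n-j] (Am f0))) ((ζ, 0, 0) : P3)
      = Ap (Am (Wp^[j] (Wm^[n-j] f0))) ((ζ, 0, 0) : P3) :=
    opL_congr hU e2 (1/2) (-(Complex.I/2)) va vb (hsub ζ hζ)
  rw [e3, ap_slice_zero hU (((hf.wmIter hU (n-j)).wpIter hU j).am hU)
    (fun ζ' hζ' => am_slice_zero hU ((hf.wmIter hU (n-j)).wpIter hU j)
      (fun ζ'' hζ'' => H1 j (n-j) (by omega) ζ'' hζ'') hζ' (hsub ζ' hζ'))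
    hζ (hsub ζ hζ), mul_zero]

/-- P6 : coefficients of L₂₂ vanish up to order m-1 -/
lemma coeff_L22 (hU : IsOpen U) (hf : Sm U f0)
    (hsub : ∀ ζ ∈ ball (0:ℂ) rr, ((ζ, 0, 0) : P3) ∈ U)
    (H1 : ∀ j k : ℕ, j + k ≤ m → ∀ ζ ∈ ball (0:ℂ) rr, Wp^[j] (Wm^[k] f0) ((ζ, 0, 0) : P3) = 0)
    (H3 : ∀ j k : ℕ, 1 ≤ j → 1 ≤ k → j + k = m + 1 →
      ∀ ζ ∈ ball (0:ℂ) rr, Wp^[j] (Wm^[k] f0) ((ζ, 0, 0) : P3) = 0)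
    {n : ℕ} (hn : n + 1 ≤ m) {ζ : ℂ} (hζ : ζ ∈ ball (0:ℂ) rr) :
    Xd^[n] (Wp (Wm f0)) ((ζ, 0, 0) : P3) = 0 := by
  rw [xd_iter_binom hU ((hf.wm hU).wp hU) n (hsub ζ hζ)]
  apply Finset.sum_eq_zero
  intro j hj
  have hj' : j ≤ n := Nat.lt_succ_iff.mp (Finset.mem_range.mp hj)
  have e : Wp^[j] (Wm^[n-j] (Wp (Wm f0))) ((ζ, 0, 0) : P3)
      = Wp (Wp^[j] (Wm^[n-j] (Wm f0))) ((ζ, 0, 0) : P3) :=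
    pull_opL hU (hf.wm hU) (1/2) (-(Complex.I/2)) vc vd j (n-j) (hsub ζ hζ)
  rw [e, ← Function.iterate_succ_apply' Wp j, ← Function.iterate_succ_apply Wm (n-j) f0]
  by_cases hc : n + 2 ≤ m
  · rw [H1 (j+1) (n-j+1) (by omega) ζ hζ, mul_zero]
  · rw [H3 (j+1) (n-j+1) (by omega) (by omega) (by omega) ζ hζ, mul_zero]

/-- P4a : coefficients of L₂₁ vanish up to order m-1 -/
lemma coeff_L21_low (hU : IsOpen U) (hf : Sm U f0)
    (hsub : ∀ ζ ∈ ball (0:ℂ) rr, ((ζ, 0, 0) : P3) ∈ U)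
    (H1 : ∀ j k : ℕ, j + k ≤ m → ∀ ζ ∈ ball (0:ℂ) rr, Wp^[j] (Wm^[k] f0) ((ζ, 0, 0) : P3) = 0)
    {n : ℕ} (hn : n + 1 ≤ m) {ζ : ℂ} (hζ : ζ ∈ ball (0:ℂ) rr) :
    Xd^[n] (Wp (Am f0)) ((ζ, 0, 0) : P3) = 0 := by
  rw [xd_iter_binom hU ((hf.am hU).wp hU) n (hsub ζ hζ)]
  apply Finset.sum_eq_zero
  intro j hj
  have hj' : j ≤ n := Nat.lt_succ_iff.mp (Finset.mem_range.mp hj)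
  have e : Wp^[j] (Wm^[n-j] (Wp (Am f0))) ((ζ, 0, 0) : P3)
      = Wp (Wp^[j] (Wm^[n-j] (Am f0))) ((ζ, 0, 0) : P3) :=
    pull_opL hU (hf.am hU) (1/2) (-(Complex.I/2)) vc vd j (n-j) (hsub ζ hζ)
  rw [e, ← Function.iterate_succ_apply' Wp j]
  have e2 : EqOn (Wp^[j+1] (Wm^[n-j] (Am f0))) (Am (Wp^[j+1] (Wm^[n-j] f0))) U :=
    pull_opL hU hf (1/2) (Complex.I/2) va vb (j+1) (n-j)
  rw [e2 (hsub ζ hζ), am_slice_zero hU ((hf.wmIter hU (n-j)).wpIter hU (j+1))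
    (fun ζ' hζ' => H1 (j+1) (n-j) (by omega) ζ' hζ') hζ (hsub ζ hζ), mul_zero]

/-- P4b : the m-th coefficient of L₂₁ -/
lemma coeff_L21_top (hU : IsOpen U) (hf : Sm U f0)
    (hsub : ∀ ζ ∈ ball (0:ℂ) rr, ((ζ, 0, 0) : P3) ∈ U)
    (H3 : ∀ j k : ℕ, 1 ≤ j → 1 ≤ k → j + k = m + 1 →
      ∀ ζ ∈ ball (0:ℂ) rr, Wp^[j] (Wm^[k] f0) ((ζ, 0, 0) : P3) = 0)
    {ζ : ℂ} (hζ : ζ ∈ ball (0:ℂ) rr) :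
    Xd^[m] (Wp (Am f0)) ((ζ, 0, 0) : P3) = Am (Wp^[m+1] f0) ((ζ, 0, 0) : P3) := by
  rw [xd_iter_binom' hU ((hf.am hU).wp hU) m (hsub ζ hζ)]
  rw [Finset.sum_range_succ]
  have hzero : ∀ j ∈ Finset.range m, ((m.choose j : ℕ) : ℂ)
      * Wp^[j] (Wm^[m-j] (Wp (Am f0))) ((ζ, 0, 0) : P3) = 0 := by
    intro j hj
    have hj' : j < m := Finset.mem_range.mp hj
    have e : Wp^[j] (Wm^[m-j] (Wp (Am f0))) ((ζ, 0, 0) : P3)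
        = Wp (Wp^[j] (Wm^[m-j] (Am f0))) ((ζ, 0, 0) : P3) :=
      pull_opL hU (hf.am hU) (1/2) (-(Complex.I/2)) vc vd j (m-j) (hsub ζ hζ)
    rw [e, ← Function.iterate_succ_apply' Wp j]
    have e2 : EqOn (Wp^[j+1] (Wm^[m-j] (Am f0))) (Am (Wp^[j+1] (Wm^[m-j] f0))) U :=
      pull_opL hU hf (1/2) (Complex.I/2) va vb (j+1) (m-j)
    rw [e2 (hsub ζ hζ), am_slice_zero hU ((hf.wmIter hU (m-j)).wpIter hU (j+1))
      (fun ζ' hζ' => H3 (j+1) (m-j) (by omega) (by omega) (by omega) ζ' hζ')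
      hζ (hsub ζ hζ), mul_zero]
  rw [Finset.sum_eq_zero hzero, zero_add]
  have e : Wp^[m] (Wm^[m-m] (Wp (Am f0))) ((ζ, 0, 0) : P3)
      = Wp (Wp^[m] (Wm^[m-m] (Am f0))) ((ζ, 0, 0) : P3) :=
    pull_opL hU (hf.am hU) (1/2) (-(Complex.I/2)) vc vd m (m-m) (hsub ζ hζ)
  rw [Nat.choose_self, Nat.cast_one, one_mul, e, ← Function.iterate_succ_apply' Wp m]
  have e2 : EqOn (Wp^[m+1] (Wm^[m-m] (Am f0))) (Am (Wp^[m+1] (Wm^[m-m] f0))) U :=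
    pull_opL hU hf (1/2) (Complex.I/2) va vb (m+1) (m-m)
  rw [Nat.sub_self] at e2 ⊢
  exact e2 (hsub ζ hζ)

/-- P5a : coefficients of L₁₂ vanish up to order m-1 -/
lemma coeff_L12_low (hU : IsOpen U) (hf : Sm U f0)
    (hsub : ∀ ζ ∈ ball (0:ℂ) rr, ((ζ, 0, 0) : P3) ∈ U)
    (H1 : ∀ j k : ℕ, j + k ≤ m → ∀ ζ ∈ ball (0:ℂ) rr, Wp^[j] (Wm^[k] f0) ((ζ, 0, 0) : P3) = 0)
    {n : ℕ} (hn : n + 1 ≤ m) {ζ : ℂ} (hζ : ζ ∈ ball (0:ℂ) rr) :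
    Xd^[n] (Ap (Wm f0)) ((ζ, 0, 0) : P3) = 0 := by
  rw [xd_iter_binom hU ((hf.wm hU).ap hU) n (hsub ζ hζ)]
  apply Finset.sum_eq_zero
  intro j hj
  have hj' : j ≤ n := Nat.lt_succ_iff.mp (Finset.mem_range.mp hj)
  have e : Wp^[j] (Wm^[n-j] (Ap (Wm f0))) ((ζ, 0, 0) : P3)
      = Ap (Wp^[j] (Wm^[n-j] (Wm f0))) ((ζ, 0, 0) : P3) :=
    pull_opL hU (hf.wm hU) (1/2) (-(Complex.I/2)) va vb j (n-j) (hsub ζ hζ)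
  rw [e]
  have e3 : Ap (Wp^[j] (Wm^[n-j] (Wm f0))) ((ζ, 0, 0) : P3)
      = Ap (Wp^[j] (Wm^[n-j+1] f0)) ((ζ, 0, 0) : P3) := by
    rw [← Function.iterate_succ_apply Wm (n-j) f0]
  rw [e3, ap_slice_zero hU ((hf.wmIter hU (n-j+1)).wpIter hU j)
    (fun ζ' hζ' => H1 j (n-j+1) (by omega) ζ' hζ') hζ (hsub ζ hζ), mul_zero]

/-- P5b : the m-th coefficient of L₁₂ -/
lemma coeff_L12_top (hU : IsOpen U) (hf : Sm U f0)
    (hsub : ∀ ζ ∈ ball (0:ℂ) rr, ((ζ, 0, 0) : P3) ∈ U)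
    (H3 : ∀ j k : ℕ, 1 ≤ j → 1 ≤ k → j + k = m + 1 →
      ∀ ζ ∈ ball (0:ℂ) rr, Wp^[j] (Wm^[k] f0) ((ζ, 0, 0) : P3) = 0)
    (hreal : St3.cj f0 = f0)
    {ζ : ℂ} (hζ : ζ ∈ ball (0:ℂ) rr) :
    Xd^[m] (Ap (Wm f0)) ((ζ, 0, 0) : P3)
      = (starRingEnd ℂ) (Am (Wp^[m+1] f0) ((ζ, 0, 0) : P3)) := by
  rw [xd_iter_binom' hU ((hf.wm hU).ap hU) m (hsub ζ hζ)]
  rw [Finset.sum_range_succ' _ m]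
  have hzero : ∀ j ∈ Finset.range m, ((m.choose (j+1) : ℕ) : ℂ)
      * Wp^[j+1] (Wm^[m-(j+1)] (Ap (Wm f0))) ((ζ, 0, 0) : P3) = 0 := by
    intro j hj
    have hj' : j < m := Finset.mem_range.mp hj
    have e : Wp^[j+1] (Wm^[m-(j+1)] (Ap (Wm f0))) ((ζ, 0, 0) : P3)
        = Ap (Wp^[j+1] (Wm^[m-(j+1)] (Wm f0))) ((ζ, 0, 0) : P3) :=
      pull_opL hU (hf.wm hU) (1/2) (-(Complex.I/2)) va vb (j+1) (m-(j+1)) (hsub ζ hζ)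
    rw [e]
    have e3 : Ap (Wp^[j+1] (Wm^[m-(j+1)] (Wm f0))) ((ζ, 0, 0) : P3)
        = Ap (Wp^[j+1] (Wm^[m-(j+1)+1] f0)) ((ζ, 0, 0) : P3) := by
      rw [← Function.iterate_succ_apply Wm (m-(j+1)) f0]
    rw [e3, ap_slice_zero hU ((hf.wmIter hU (m-(j+1)+1)).wpIter hU (j+1))
      (fun ζ' hζ' => H3 (j+1) (m-(j+1)+1) (by omega) (by omega) (by omega) ζ' hζ')
      hζ (hsub ζ hζ), mul_zero]
  rw [Finset.sum_eq_zero hzero, zero_add]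
  have e : Wp^[0] (Wm^[m-0] (Ap (Wm f0))) ((ζ, 0, 0) : P3)
      = Ap (Wp^[0] (Wm^[m-0] (Wm f0))) ((ζ, 0, 0) : P3) :=
    pull_opL hU (hf.wm hU) (1/2) (-(Complex.I/2)) va vb 0 (m-0) (hsub ζ hζ)
  rw [Nat.choose_zero_right, Nat.cast_one, one_mul, e]
  have e3 : Ap (Wp^[0] (Wm^[m-0] (Wm f0))) ((ζ, 0, 0) : P3)
      = Ap (Wm^[m+1] f0) ((ζ, 0, 0) : P3) := by
    have : Wp^[0] (Wm^[m-0] (Wm f0)) = Wm^[m+1] f0 := by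
      simp only [Function.iterate_zero, id_eq, Nat.sub_zero]
      rw [← Function.iterate_succ_apply Wm m f0]
    rw [this]
  rw [e3]
  have e4 : EqOn (Wm^[m+1] f0) (St3.cj (Wp^[m+1] f0)) U := by
    intro q hq
    have := wm_iter_cj hU hf (m+1) hq
    rw [hreal] at this
    exact this
  have e5 : Ap (Wm^[m+1] f0) ((ζ, 0, 0) : P3)
      = Ap (St3.cj (Wp^[m+1] f0)) ((ζ, 0, 0) : P3) :=
    opL_congr hU e4 (1/2) (-(Complex.I/2)) va vb (hsub ζ hζ)
  rw [e5]
  exact ap_cj hU (hf.wpIter hU (m+1)) (hsub ζ hζ)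

/-- P7 : value of A₁₃ at the slice -/
lemma val_A13 (hU : IsOpen U) (hf : Sm U f0)
    (hsub : ∀ ζ ∈ ball (0:ℂ) rr, ((ζ, 0, 0) : P3) ∈ U)
    (H2 : ∀ ζ ∈ ball (0:ℂ) rr, Ey f0 ((ζ, 0, 0) : P3) = 0)
    {ζ : ℂ} (hζ : ζ ∈ ball (0:ℂ) rr) :
    Ap (Ey f0) ((ζ, 0, 0) : P3) = 0 :=
  ap_slice_zero hU (hf.ey hU) H2 hζ (hsub ζ hζ)

/-- P8 : value of A₃₁ at the slice -/
lemma val_A31 (hU : IsOpen U) (hf : Sm U f0)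
    (hsub : ∀ ζ ∈ ball (0:ℂ) rr, ((ζ, 0, 0) : P3) ∈ U)
    (H2 : ∀ ζ ∈ ball (0:ℂ) rr, Ey f0 ((ζ, 0, 0) : P3) = 0)
    {ζ : ℂ} (hζ : ζ ∈ ball (0:ℂ) rr) :
    Ey (Am f0) ((ζ, 0, 0) : P3) = 0 := by
  have e : Ey (Am f0) ((ζ, 0, 0) : P3) = Am (Ey f0) ((ζ, 0, 0) : P3) :=
    opL_comm hU hf 1 0 (1/2) (Complex.I/2) ve ve va vb (hsub ζ hζ)
  rw [e]
  exact am_slice_zero hU (hf.ey hU) H2 hζ (hsub ζ hζ)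

end StageD2

section StageD3

lemma isOpen_ballCR (s : ℝ) : IsOpen (ballCR s) :=
  isOpen_lt ((continuous_fst.norm.pow 2).add (continuous_snd.pow 2)) continuous_const

lemma re_le_norm (z : ℂ) : |z.re| ≤ ‖z‖ := Complex.abs_re_le_norm z

lemma norm_conj' (z : ℂ) : ‖(starRingEnd ℂ) z‖ = ‖z‖ := RCLike.norm_conj z

lemma norm_add4 (a b c d : ℂ) : ‖a + b + c + d‖ ≤ ‖a‖ + ‖b‖ + ‖c‖ + ‖d‖ := by
  calc ‖a + b + c + d‖ ≤ ‖a + b + c‖ + ‖d‖ := norm_add_le _ _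
    _ ≤ (‖a + b‖ + ‖c‖) + ‖d‖ := add_le_add_left (norm_add_le _ _) _
    _ ≤ ((‖a‖ + ‖b‖) + ‖c‖) + ‖d‖ :=
        add_le_add_left (add_le_add_left (norm_add_le _ _) _) _

lemma norm_add5 (a b c d e : ℂ) : ‖a + b + c + d + e‖ ≤ ‖a‖ + ‖b‖ + ‖c‖ + ‖d‖ + ‖e‖ := by
  calc ‖a + b + c + d + e‖ ≤ ‖a + b + c + d‖ + ‖e‖ := norm_add_le _ _
    _ ≤ (‖a‖ + ‖b‖ + ‖c‖ + ‖d‖) + ‖e‖ := add_le_add_left (norm_add4 a b c d) _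

lemma quad_discrim {a b c A B : ℝ} (h : ∀ δ : ℝ, 0 ≤ c * δ^2 + b * δ + a)
    (hA : |a| ≤ A) (hB : |c| ≤ B) : b^2 ≤ 4 * (A * B) := by
  have hd : discrim c b a ≤ 0 := discrim_le_zero (fun x => by nlinarith [h x])
  have hd' : b^2 - 4*c*a ≤ 0 := by
    have : discrim c b a = b^2 - 4*c*a := by unfold discrim; ring
    linarith [this ▸ hd]
  have hca : c * a ≤ |c| * |a| := (le_abs_self _).trans (abs_mul c a).le
  have h4 : |c| * |a| ≤ B * A := by
    apply mul_le_mul hB hA (abs_nonneg _) ((abs_nonneg c).trans hB)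
  nlinarith

lemma sq_zero_of_le_lin {R K s₁ : ℝ} (hs₁ : 0 < s₁)
    (h : ∀ ε : ℝ, 0 < ε → ε ≤ s₁ → R^2 ≤ K * ε) : R = 0 := by
  have hK : 0 ≤ K := by
    have h1 := h s₁ hs₁ le_rfl
    nlinarith [sq_nonneg R]
  by_contra hR
  have hR2 : 0 < R^2 := by positivity
  have hε0 : 0 < min s₁ (R^2 / (2*(K+1))) := lt_min hs₁ (by positivity)
  have h2 := h _ hε0 (min_le_left _ _)
  have h3 : K * min s₁ (R^2 / (2*(K+1))) ≤ K * (R^2/(2*(K+1))) :=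
    mul_le_mul_of_nonneg_left (min_le_right _ _) hK
  have h4 : K * (R^2/(2*(K+1))) < R^2 := by
    rw [← mul_div_assoc, div_lt_iff₀ (by positivity)]
    nlinarith
  linarith

set_option maxHeartbeats 2000000 in
/-- the main abstract estimate: from the family of Levi-form inequalities
conclude that the real part of `T * lam` vanishes. -/
lemma key_estimate (m : ℕ) {s₁ : ℝ} (hs₁ : 0 < s₁) (hs₁1 : s₁ ≤ 1)
    (T lam : ℂ) (hlam : ‖lam‖ = 1)
    (L11 L12 L13 L21 L22 L23 L31 L32 L33 v w : ℝ → ℂ)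
    (C : ℝ) (hC : 0 ≤ C)
    (hv : ∀ ε : ℝ, 0 < ε → ε ≤ s₁ → ‖v ε‖ ≤ C * ε^(m+1))
    (hw : ∀ ε : ℝ, 0 < ε → ε ≤ s₁ → ‖w ε‖ ≤ C * ε^m)
    (hL11 : ∀ ε : ℝ, 0 < ε → ε ≤ s₁ → ‖L11 ε‖ ≤ C * ε^(m+1))
    (hL22 : ∀ ε : ℝ, 0 < ε → ε ≤ s₁ → ‖L22 ε‖ ≤ C * ε^m)
    (hL13 : ∀ ε : ℝ, 0 < ε → ε ≤ s₁ → ‖L13 ε‖ ≤ C * ε)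
    (hL31 : ∀ ε : ℝ, 0 < ε → ε ≤ s₁ → ‖L31 ε‖ ≤ C * ε)
    (hL21 : ∀ ε : ℝ, 0 < ε → ε ≤ s₁ →
      ‖L21 ε - (ε:ℂ)^m / (m.factorial : ℂ) * T‖ ≤ C * ε^(m+1))
    (hL12 : ∀ ε : ℝ, 0 < ε → ε ≤ s₁ →
      ‖L12 ε - (ε:ℂ)^m / (m.factorial : ℂ) * (starRingEnd ℂ) T‖ ≤ C * ε^(m+1))
    (hL23 : ∀ ε : ℝ, 0 < ε → ε ≤ s₁ → ‖L23 ε‖ ≤ C)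
    (hL32 : ∀ ε : ℝ, 0 < ε → ε ≤ s₁ → ‖L32 ε‖ ≤ C)
    (hL33 : ∀ ε : ℝ, 0 < ε → ε ≤ s₁ → ‖L33 ε‖ ≤ C)
    (hpos : ∀ ε : ℝ, 0 < ε → ε ≤ s₁ → ∀ δ : ℝ, 0 ≤
      (L11 ε
       + L12 ε * ((δ:ℂ) * (starRingEnd ℂ) lam)
       + L13 ε * (starRingEnd ℂ) (v ε + (δ:ℂ) * w ε)
       + L21 ε * ((δ:ℂ) * lam)
       + L22 ε * ((δ:ℂ) * lam) * ((δ:ℂ) * (starRingEnd ℂ) lam)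
       + L23 ε * ((δ:ℂ) * lam) * (starRingEnd ℂ) (v ε + (δ:ℂ) * w ε)
       + L31 ε * (v ε + (δ:ℂ) * w ε)
       + L32 ε * (v ε + (δ:ℂ) * w ε) * ((δ:ℂ) * (starRingEnd ℂ) lam)
       + L33 ε * (v ε + (δ:ℂ) * w ε) * (starRingEnd ℂ) (v ε + (δ:ℂ) * w ε)).re) :
    (T * lam).re = 0 := by
  have hfac : (0:ℝ) < m.factorial := by exact_mod_cast m.factorial_pos
  set R0 : ℝ := (T * lam).re with hR0
  -- it suffices to show (2 * R0 / m!)^2 ≤ K * ε for all small ε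
  set K1 : ℝ := C + 2*C^2 + C^3 with hK1
  set K2 : ℝ := 2*C + 4*C^2 + 2*C^3 with hK2
  have hK1n : 0 ≤ K1 := by positivity
  have hK2n : 0 ≤ K2 := by positivity
  have main : ∀ ε : ℝ, 0 < ε → ε ≤ s₁ → (2 * R0 / m.factorial)^2 ≤ (8*K1^2 + 2*K2^2) * ε := by
    intro ε hε0 hε1
    have hεn : 0 ≤ ε := hε0.le
    have hεle1 : ε ≤ 1 := hε1.trans hs₁1
    -- the three coefficients of the quadratic
    set Qa : ℂ := L11 ε + L13 ε * (starRingEnd ℂ) (v ε) + L31 ε * v ε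
      + L33 ε * (v ε * (starRingEnd ℂ) (v ε)) with hQa
    set Qb : ℂ := L12 ε * (starRingEnd ℂ) lam + L21 ε * lam
      + L13 ε * (starRingEnd ℂ) (w ε) + L31 ε * w ε
      + L23 ε * (lam * (starRingEnd ℂ) (v ε)) + L32 ε * (v ε * (starRingEnd ℂ) lam)
      + L33 ε * (v ε * (starRingEnd ℂ) (w ε) + w ε * (starRingEnd ℂ) (v ε)) with hQb
    set Qc : ℂ := L22 ε * (lam * (starRingEnd ℂ) lam)
      + L23 ε * (lam * (starRingEnd ℂ) (w ε)) + L32 ε * (w ε * (starRingEnd ℂ) lam)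
      + L33 ε * (w ε * (starRingEnd ℂ) (w ε)) with hQc
    have hquad : ∀ δ : ℝ, 0 ≤ Qc.re * δ^2 + Qb.re * δ + Qa.re := by
      intro δ
      have h0 := hpos ε hε0 hε1 δ
      have hS : (L11 ε
       + L12 ε * ((δ:ℂ) * (starRingEnd ℂ) lam)
       + L13 ε * (starRingEnd ℂ) (v ε + (δ:ℂ) * w ε)
       + L21 ε * ((δ:ℂ) * lam)
       + L22 ε * ((δ:ℂ) * lam) * ((δ:ℂ) * (starRingEnd ℂ) lam)
       + L23 ε * ((δ:ℂ) * lam) * (starRingEnd ℂ) (v ε + (δ:ℂ) * w ε)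
       + L31 ε * (v ε + (δ:ℂ) * w ε)
       + L32 ε * (v ε + (δ:ℂ) * w ε) * ((δ:ℂ) * (starRingEnd ℂ) lam)
       + L33 ε * (v ε + (δ:ℂ) * w ε) * (starRingEnd ℂ) (v ε + (δ:ℂ) * w ε))
          = (δ:ℂ)^2 * Qc + (δ:ℂ) * Qb + Qa := by
        rw [hQa, hQb, hQc]
        simp only [map_add, map_mul, Complex.conj_ofReal]
        ring
      rw [hS] at h0
      have hre : ((δ:ℂ)^2 * Qc + (δ:ℂ) * Qb + Qa).re
          = Qc.re * δ^2 + Qb.re * δ + Qa.re := by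
        rw [← Complex.ofReal_pow]
        simp only [Complex.add_re, Complex.re_ofReal_mul]
        ring
      rw [hre] at h0
      exact h0
    -- bounds on the coefficients
    have hεpow1 : ε^(m+2) ≤ ε^(m+1) := pow_le_pow_of_le_one hεn hεle1 (by omega)
    have hεpow2 : ε^(2*m+2) ≤ ε^(m+1) := pow_le_pow_of_le_one hεn hεle1 (by omega)
    have hεpow3 : ε^(2*m) ≤ ε^m := pow_le_pow_of_le_one hεn hεle1 (by omega)
    have hεpow4 : ε^(2*m+1) ≤ ε^(m+1) := pow_le_pow_of_le_one hεn hεle1 (by omega)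
    have hQaB : |Qa.re| ≤ K1 * ε^(m+1) := by
      refine (re_le_norm Qa).trans ?_
      have n1 : ‖L11 ε‖ ≤ C * ε^(m+1) := hL11 ε hε0 hε1
      have n2 : ‖L13 ε * (starRingEnd ℂ) (v ε)‖ ≤ (C*ε) * (C*ε^(m+1)) := by
        rw [norm_mul, norm_conj']
        exact mul_le_mul (hL13 ε hε0 hε1) (hv ε hε0 hε1) (norm_nonneg _) (by positivity)
      have n3 : ‖L31 ε * v ε‖ ≤ (C*ε) * (C*ε^(m+1)) := by
        rw [norm_mul]
        exact mul_le_mul (hL31 ε hε0 hε1) (hv ε hε0 hε1) (norm_nonneg _) (by positivity)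
      have n4 : ‖L33 ε * (v ε * (starRingEnd ℂ) (v ε))‖ ≤ C * ((C*ε^(m+1)) * (C*ε^(m+1))) := by
        rw [norm_mul, norm_mul, norm_conj']
        refine mul_le_mul (hL33 ε hε0 hε1) ?_ (by positivity) hC
        exact mul_le_mul (hv ε hε0 hε1) (hv ε hε0 hε1) (norm_nonneg _) (by positivity)
      have hsum : ‖Qa‖ ≤ C * ε^(m+1) + (C*ε)*(C*ε^(m+1)) + (C*ε)*(C*ε^(m+1))
          + C * ((C*ε^(m+1)) * (C*ε^(m+1))) := by
        rw [hQa]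
        exact (norm_add4 _ _ _ _).trans
          (add_le_add (add_le_add (add_le_add n1 n2) n3) n4)
      refine hsum.trans ?_
      have e1 : (C*ε)*(C*ε^(m+1)) = C^2 * ε^(m+2) := by ring
      have e2 : C * ((C*ε^(m+1)) * (C*ε^(m+1))) = C^3 * ε^(2*m+2) := by ring
      rw [e1, e2, hK1]
      have q1 : C^2 * ε^(m+2) ≤ C^2 * ε^(m+1) :=
        mul_le_mul_of_nonneg_left hεpow1 (sq_nonneg C)
      have q2 : C^3 * ε^(2*m+2) ≤ C^3 * ε^(m+1) :=
        mul_le_mul_of_nonneg_left hεpow2 (pow_nonneg hC 3)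
      nlinarith [q1, q2]
    have hQcB : |Qc.re| ≤ K1 * ε^m := by
      refine (re_le_norm Qc).trans ?_
      have n1 : ‖L22 ε * (lam * (starRingEnd ℂ) lam)‖ ≤ C * ε^m := by
        rw [norm_mul, norm_mul, norm_conj', hlam, mul_one, mul_one]
        exact hL22 ε hε0 hε1
      have n2 : ‖L23 ε * (lam * (starRingEnd ℂ) (w ε))‖ ≤ C * (C * ε^m) := by
        rw [norm_mul, norm_mul, norm_conj', hlam, one_mul]
        exact mul_le_mul (hL23 ε hε0 hε1) (hw ε hε0 hε1) (norm_nonneg _) hC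
      have n3 : ‖L32 ε * (w ε * (starRingEnd ℂ) lam)‖ ≤ C * (C * ε^m) := by
        rw [norm_mul, norm_mul, norm_conj', hlam, mul_one]
        exact mul_le_mul (hL32 ε hε0 hε1) (hw ε hε0 hε1) (norm_nonneg _) hC
      have n4 : ‖L33 ε * (w ε * (starRingEnd ℂ) (w ε))‖ ≤ C * ((C*ε^m) * (C*ε^m)) := by
        rw [norm_mul, norm_mul, norm_conj']
        refine mul_le_mul (hL33 ε hε0 hε1) ?_ (by positivity) hC
        exact mul_le_mul (hw ε hε0 hε1) (hw ε hε0 hε1) (norm_nonneg _) (by positivity)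
      have hsum : ‖Qc‖ ≤ C * ε^m + C*(C*ε^m) + C*(C*ε^m) + C * ((C*ε^m)*(C*ε^m)) := by
        rw [hQc]
        exact (norm_add4 _ _ _ _).trans
          (add_le_add (add_le_add (add_le_add n1 n2) n3) n4)
      refine hsum.trans ?_
      have e2 : C * ((C*ε^m) * (C*ε^m)) = C^3 * ε^(2*m) := by ring
      rw [e2, hK1]
      have q1 : C^3 * ε^(2*m) ≤ C^3 * ε^m :=
        mul_le_mul_of_nonneg_left hεpow3 (pow_nonneg hC 3)
      nlinarith [q1]
    -- the b-coefficient is close to 2 R0 ε^m / m!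
    have hQbB : |Qb.re - 2 * R0 * ε^m / m.factorial| ≤ K2 * ε^(m+1) := by
      have hmain : Qb - ((ε:ℂ)^m / (m.factorial : ℂ)) * ((starRingEnd ℂ) (T * lam) + T * lam)
          = (L12 ε - (ε:ℂ)^m / (m.factorial : ℂ) * (starRingEnd ℂ) T) * (starRingEnd ℂ) lam
            + (L21 ε - (ε:ℂ)^m / (m.factorial : ℂ) * T) * lam
            + (L13 ε * (starRingEnd ℂ) (w ε) + L31 ε * w ε
              + L23 ε * (lam * (starRingEnd ℂ) (v ε)) + L32 ε * (v ε * (starRingEnd ℂ) lam)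
              + L33 ε * (v ε * (starRingEnd ℂ) (w ε) + w ε * (starRingEnd ℂ) (v ε))) := by
        rw [hQb]
        simp only [map_mul]
        ring
      have hnorm : ‖Qb - ((ε:ℂ)^m / (m.factorial : ℂ)) * ((starRingEnd ℂ) (T * lam) + T * lam)‖
          ≤ K2 * ε^(m+1) := by
        rw [hmain]
        have n1 : ‖(L12 ε - (ε:ℂ)^m / (m.factorial : ℂ) * (starRingEnd ℂ) T)
            * (starRingEnd ℂ) lam‖ ≤ C * ε^(m+1) := by
          rw [norm_mul, norm_conj', hlam, mul_one]
          exact hL12 ε hε0 hε1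
        have n2 : ‖(L21 ε - (ε:ℂ)^m / (m.factorial : ℂ) * T) * lam‖ ≤ C * ε^(m+1) := by
          rw [norm_mul, hlam, mul_one]
          exact hL21 ε hε0 hε1
        have n3 : ‖L13 ε * (starRingEnd ℂ) (w ε)‖ ≤ (C*ε) * (C*ε^m) := by
          rw [norm_mul, norm_conj']
          exact mul_le_mul (hL13 ε hε0 hε1) (hw ε hε0 hε1) (norm_nonneg _) (by positivity)
        have n4 : ‖L31 ε * w ε‖ ≤ (C*ε) * (C*ε^m) := by
          rw [norm_mul]
          exact mul_le_mul (hL31 ε hε0 hε1) (hw ε hε0 hε1) (norm_nonneg _) (by positivity)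
        have n5 : ‖L23 ε * (lam * (starRingEnd ℂ) (v ε))‖ ≤ C * (C*ε^(m+1)) := by
          rw [norm_mul, norm_mul, norm_conj', hlam, one_mul]
          exact mul_le_mul (hL23 ε hε0 hε1) (hv ε hε0 hε1) (norm_nonneg _) hC
        have n6 : ‖L32 ε * (v ε * (starRingEnd ℂ) lam)‖ ≤ C * (C*ε^(m+1)) := by
          rw [norm_mul, norm_mul, norm_conj', hlam, mul_one]
          exact mul_le_mul (hL32 ε hε0 hε1) (hv ε hε0 hε1) (norm_nonneg _) hC
        have n7 : ‖L33 ε * (v ε * (starRingEnd ℂ) (w ε) + w ε * (starRingEnd ℂ) (v ε))‖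
            ≤ C * ((C*ε^(m+1))*(C*ε^m) + (C*ε^m)*(C*ε^(m+1))) := by
          rw [norm_mul]
          refine mul_le_mul (hL33 ε hε0 hε1) ?_ (norm_nonneg _) hC
          refine (norm_add_le _ _).trans ?_
          have a1 : ‖v ε * (starRingEnd ℂ) (w ε)‖ ≤ (C*ε^(m+1))*(C*ε^m) := by
            rw [norm_mul, norm_conj']
            exact mul_le_mul (hv ε hε0 hε1) (hw ε hε0 hε1) (norm_nonneg _) (by positivity)
          have a2 : ‖w ε * (starRingEnd ℂ) (v ε)‖ ≤ (C*ε^m)*(C*ε^(m+1)) := by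
            rw [norm_mul, norm_conj']
            exact mul_le_mul (hw ε hε0 hε1) (hv ε hε0 hε1) (norm_nonneg _) (by positivity)
          exact add_le_add a1 a2
        have hsum : ‖(L12 ε - (ε:ℂ)^m / (m.factorial : ℂ) * (starRingEnd ℂ) T)
              * (starRingEnd ℂ) lam
            + (L21 ε - (ε:ℂ)^m / (m.factorial : ℂ) * T) * lam
            + (L13 ε * (starRingEnd ℂ) (w ε) + L31 ε * w ε
              + L23 ε * (lam * (starRingEnd ℂ) (v ε)) + L32 ε * (v ε * (starRingEnd ℂ) lam)
              + L33 ε * (v ε * (starRingEnd ℂ) (w ε) + w ε * (starRingEnd ℂ) (v ε)))‖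
            ≤ C * ε^(m+1) + C * ε^(m+1) + ((C*ε)*(C*ε^m) + (C*ε)*(C*ε^m)
              + C*(C*ε^(m+1)) + C*(C*ε^(m+1))
              + C * ((C*ε^(m+1))*(C*ε^m) + (C*ε^m)*(C*ε^(m+1)))) := by
          have hR : ‖L13 ε * (starRingEnd ℂ) (w ε) + L31 ε * w ε
              + L23 ε * (lam * (starRingEnd ℂ) (v ε)) + L32 ε * (v ε * (starRingEnd ℂ) lam)
              + L33 ε * (v ε * (starRingEnd ℂ) (w ε) + w ε * (starRingEnd ℂ) (v ε))‖
              ≤ (C*ε)*(C*ε^m) + (C*ε)*(C*ε^m) + C*(C*ε^(m+1)) + C*(C*ε^(m+1))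
              + C * ((C*ε^(m+1))*(C*ε^m) + (C*ε^m)*(C*ε^(m+1))) :=
            (norm_add5 _ _ _ _ _).trans
              (add_le_add (add_le_add (add_le_add (add_le_add n3 n4) n5) n6) n7)
          calc _ ≤ ‖(L12 ε - (ε:ℂ)^m / (m.factorial : ℂ) * (starRingEnd ℂ) T)
                * (starRingEnd ℂ) lam‖
              + ‖(L21 ε - (ε:ℂ)^m / (m.factorial : ℂ) * T) * lam‖
              + ‖L13 ε * (starRingEnd ℂ) (w ε) + L31 ε * w ε
              + L23 ε * (lam * (starRingEnd ℂ) (v ε)) + L32 ε * (v ε * (starRingEnd ℂ) lam)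
              + L33 ε * (v ε * (starRingEnd ℂ) (w ε) + w ε * (starRingEnd ℂ) (v ε))‖ := by
                calc _ ≤ ‖(L12 ε - (ε:ℂ)^m / (m.factorial : ℂ) * (starRingEnd ℂ) T)
                    * (starRingEnd ℂ) lam
                    + (L21 ε - (ε:ℂ)^m / (m.factorial : ℂ) * T) * lam‖ + _ := norm_add_le _ _
                  _ ≤ _ := add_le_add_left (norm_add_le _ _) _
            _ ≤ _ := add_le_add (add_le_add n1 n2) hR
        refine hsum.trans ?_
        have e1 : (C * ε^(m+1)) + (C * ε^(m+1)) + ((C*ε)*(C*ε^m) + (C*ε)*(C*ε^m)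
              + C*(C*ε^(m+1)) + C*(C*ε^(m+1))
              + C * ((C*ε^(m+1))*(C*ε^m) + (C*ε^m)*(C*ε^(m+1))))
            = 2*C*ε^(m+1) + 4*C^2*ε^(m+1) + 2*C^3*ε^(2*m+1) := by ring
        rw [e1, hK2]
        have q1 : 2*C^3 * ε^(2*m+1) ≤ 2*C^3 * ε^(m+1) :=
          mul_le_mul_of_nonneg_left hεpow4 (by positivity)
        nlinarith [q1]
      -- translate the complex bound into a real bound
      have hre2 : (((ε:ℂ)^m / (m.factorial : ℂ)) * ((starRingEnd ℂ) (T * lam) + T * lam)).re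
          = 2 * R0 * ε^m / m.factorial := by
        have hcr : (starRingEnd ℂ) (T * lam) + T * lam = ((2 * (T*lam).re : ℝ) : ℂ) := by
          rw [add_comm, Complex.add_conj]
        rw [hcr]
        have : ((ε:ℂ)^m / (m.factorial : ℂ)) = (((ε^m / m.factorial : ℝ)) : ℂ) := by
          push_cast
          ring
        rw [this, ← Complex.ofReal_mul]
        rw [Complex.ofReal_re]
        rw [hR0]
        ring
      calc |Qb.re - 2 * R0 * ε^m / m.factorial|
          = |(Qb - ((ε:ℂ)^m / (m.factorial : ℂ)) * ((starRingEnd ℂ) (T * lam) + T * lam)).re| := by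
            rw [Complex.sub_re, hre2]
        _ ≤ ‖Qb - ((ε:ℂ)^m / (m.factorial : ℂ)) * ((starRingEnd ℂ) (T * lam) + T * lam)‖ :=
            re_le_norm _
        _ ≤ K2 * ε^(m+1) := hnorm
    -- apply the discriminant bound
    have hb2 : Qb.re^2 ≤ 4 * ((K1 * ε^(m+1)) * (K1 * ε^m)) := quad_discrim hquad hQaB hQcB
    -- conclude
    have habs : |2 * R0 * ε^m / m.factorial| ≤ |Qb.re| + K2 * ε^(m+1) := by
      have h1 := abs_sub_abs_le_abs_sub (2 * R0 * ε^m / m.factorial) Qb.re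
      rw [abs_sub_comm] at h1
      linarith [hQbB]
    have hfinal : (2 * R0 / m.factorial)^2 * ε^(2*m) ≤ (8*K1^2 + 2*K2^2) * ε^(2*m+1) := by
      have hx : (2 * R0 * ε^m / m.factorial)^2 ≤ (|Qb.re| + K2 * ε^(m+1))^2 := by
        rw [← _root_.sq_abs (2 * R0 * ε^m / m.factorial)]
        apply sq_le_sq' _ habs
        · nlinarith [abs_nonneg (2 * R0 * ε^m / m.factorial), abs_nonneg Qb.re,
            mul_nonneg hK2n (pow_nonneg hεn (m+1))]
      have hy : (|Qb.re| + K2 * ε^(m+1))^2 ≤ 2 * Qb.re^2 + 2 * (K2 * ε^(m+1))^2 := by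
        nlinarith [_root_.sq_abs Qb.re, sq_nonneg (|Qb.re| - K2 * ε^(m+1))]
      have hz : 2 * Qb.re^2 + 2 * (K2 * ε^(m+1))^2
          ≤ 8 * K1^2 * ε^(2*m+1) + 2 * K2^2 * ε^(2*m+2) := by
        have hb2' : Qb.re^2 ≤ 4 * K1^2 * ε^(2*m+1) := by
          refine hb2.trans_eq ?_
          ring
        have e2 : (K2 * ε^(m+1))^2 = K2^2 * ε^(2*m+2) := by ring
        rw [e2]
        linarith [hb2']
      have hw2 : 8 * K1^2 * ε^(2*m+1) + 2 * K2^2 * ε^(2*m+2)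
          ≤ (8*K1^2 + 2*K2^2) * ε^(2*m+1) := by
        have : ε^(2*m+2) ≤ ε^(2*m+1) := pow_le_pow_of_le_one hεn hεle1 (by omega)
        nlinarith [sq_nonneg K1, sq_nonneg K2]
      have e3 : (2 * R0 * ε^m / m.factorial)^2 = (2 * R0 / m.factorial)^2 * ε^(2*m) := by
        ring
      have hx' : (2 * R0 / (m.factorial:ℝ))^2 * ε^(2*m)
          ≤ (|Qb.re| + K2 * ε^(m+1))^2 := by
        rw [← e3]
        exact hx
      calc (2 * R0 / (m.factorial:ℝ))^2 * ε^(2*m)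
          ≤ (|Qb.re| + K2 * ε^(m+1))^2 := hx'
        _ ≤ 2 * Qb.re^2 + 2 * (K2 * ε^(m+1))^2 := hy
        _ ≤ 8 * K1^2 * ε^(2*m+1) + 2 * K2^2 * ε^(2*m+2) := hz
        _ ≤ (8*K1^2 + 2*K2^2) * ε^(2*m+1) := hw2
    have hεm : (0:ℝ) < ε^(2*m) := pow_pos hε0 _
    have hfinal' : (2 * R0 / m.factorial)^2 * ε^(2*m)
        ≤ ((8*K1^2 + 2*K2^2) * ε) * ε^(2*m) := by
      refine hfinal.trans_eq ?_
      ring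
    exact le_of_mul_le_mul_right hfinal' hεm
  have hz : 2 * R0 / m.factorial = 0 := sq_zero_of_le_lin hs₁ main
  have hm0 : (m.factorial : ℝ) ≠ 0 := ne_of_gt hfac
  rw [div_eq_zero_iff] at hz
  rcases hz with hz | hz
  · show R0 = 0
    linarith
  · exact absurd hz hm0

end StageD3

section StageD4

lemma w1bar_congr {F G : ℂ → ℂ} {z : ℂ} {rr : ℝ} (hz : z ∈ ball (0:ℂ) rr)
    (h : ∀ w ∈ ball (0:ℂ) rr, F w = G w) : w1bar F z = w1bar G z := by
  have hev : F =ᶠ[𝓝 z] G := by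
    filter_upwards [isOpen_ball.mem_nhds hz] with w hw using h w hw
  unfold w1bar
  rw [hev.fderiv_eq]

lemma cj_ofReal (φf : P3 → ℝ) :
    St3.cj (fun p => ((φf p : ℝ) : ℂ)) = fun p => ((φf p : ℝ) : ℂ) := by
  funext q
  simp [St3.cj, Complex.conj_ofReal]

lemma im_ey_real {f : P3 → ℂ} {p : P3} (hd : DifferentiableAt ℝ f p)
    (hreal : St3.cj f = f) : (Ey f p).im = 0 := by
  have heq : Ey f p = Dv ve f p := by
    show (1:ℂ) * Dv ve f p + 0 * Dv ve f p = _
    ring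
  rw [heq]
  have h := dv_cj hd ve
  rw [hreal] at h
  exact Complex.conj_eq_iff_im.mp h.symm

lemma rho3_re {x : ℂ} (hx : x.im = 0) : (-(Complex.I/2) * x - 1/2).re = -(1/2) := by
  simp [Complex.sub_re, Complex.mul_re, Complex.div_re, hx]

lemma rho3_norm {x : ℂ} (hx : x.im = 0) :
    1/2 ≤ ‖-(Complex.I/2) * x - 1/2‖ := by
  have h1 := Complex.abs_re_le_norm (-(Complex.I/2) * x - 1/2)
  rw [rho3_re hx] at h1
  calc (1:ℝ)/2 = |(-(1/2) : ℝ)| := by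
        rw [abs_neg]
        exact (abs_of_pos (by norm_num)).symm
    _ ≤ _ := h1

lemma rho3_ne {x : ℂ} (hx : x.im = 0) : -(Complex.I/2) * x - 1/2 ≠ 0 := by
  intro h
  have := rho3_norm hx
  rw [h] at this
  norm_num at this

lemma norm_div_le_two_mul {a b : ℂ} (hb : 1/2 ≤ ‖b‖) (hb0 : b ≠ 0) {A : ℝ}
    (ha : ‖a‖ ≤ A) : ‖a / b‖ ≤ 2 * A := by
  rw [norm_div]
  have h0 : (0:ℝ) < ‖b‖ := lt_of_lt_of_le (by norm_num) hb
  rw [div_le_iff₀ h0]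
  have hA : 0 ≤ A := (norm_nonneg a).trans ha
  nlinarith

end StageD4

end St3

set_option maxHeartbeats 3200000 in
/-- under the hypotheses of the inductive lemma, the function
z₁ ↦ ∂^{m+1}_{z₂} φ_m(z₁,0,0) is holomorphic on the disc, i.e. its
∂/∂z̄₁-derivative vanishes identically. -/
theorem statement_3 (m : ℕ) (hm : 1 ≤ m)
    (r s t : ℝ) (hr : 0 < r) (hs : 0 < s) (ht : 0 < t)
    (φ : ℂ × ℂ × ℝ → ℝ)
    (hφsm : ContDiffOn ℝ (⊤ : ℕ∞) φ (Metric.ball (0 : ℂ) r ×ˢ ballCR s))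
    (hφmap : Set.MapsTo φ (Metric.ball (0 : ℂ) r ×ˢ ballCR s) (Set.Ioo (-t) t))
    (hpsc : PseudoconvexGraph r s t φ)
    (hder0m : ∀ z₁ ∈ Metric.ball (0 : ℂ) r, ∀ j k : ℕ, j + k ≤ m → mixedD φ j k z₁ = 0)
    (hderIm : ∀ z₁ ∈ Metric.ball (0 : ℂ) r, Dy (fun p => (φ p : ℂ)) (z₁, 0, 0) = 0)
    (hder0m1 : ∀ z₁ ∈ Metric.ball (0 : ℂ) r, ∀ j k : ℕ, 1 ≤ j → 1 ≤ k → j + k = m + 1 →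
      mixedD φ j k z₁ = 0) :
    ∀ z₁ ∈ Metric.ball (0 : ℂ) r, w1bar (fun ζ => mixedD φ (m + 1) 0 ζ) z₁ = 0 := by
  intro z₁ hz₁
  classical
  open St3 in
  have hUopen : IsOpen (Metric.ball (0 : ℂ) r ×ˢ ballCR s) :=
    Metric.isOpen_ball.prod (St3.isOpen_ballCR s)
  have hf : St3.Sm (Metric.ball (0 : ℂ) r ×ˢ ballCR s) (fun p => ((φ p : ℝ) : ℂ)) := by
    have h := (Complex.ofRealCLM.contDiff (n := (⊤:ℕ∞))).comp_contDiffOn hφsm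
    exact h
  have hsub : ∀ ζ ∈ Metric.ball (0:ℂ) r,
      ((ζ, 0, 0) : St3.P3) ∈ Metric.ball (0 : ℂ) r ×ˢ ballCR s := by
    intro ζ hζ
    refine ⟨hζ, ?_⟩
    show ‖(0:ℂ)‖^2 + (0:ℝ)^2 < s^2
    simpa using by positivity
  have hreal : St3.cj (fun p => ((φ p : ℝ) : ℂ)) = fun p => ((φ p : ℝ) : ℂ) :=
    St3.cj_ofReal φ
  -- translated hypotheses
  have hmix : ∀ (j k : ℕ) (ζ : ℂ), ζ ∈ Metric.ball (0:ℂ) r →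
      mixedD φ j k ζ
        = St3.Wp^[j] (St3.Wm^[k] (fun p => ((φ p : ℝ) : ℂ))) ((ζ, 0, 0) : St3.P3) :=
    fun j k ζ hζ => St3.mixedD_eq hUopen hf (hsub ζ hζ) j k
  have H1 : ∀ j k : ℕ, j + k ≤ m → ∀ ζ ∈ Metric.ball (0:ℂ) r,
      St3.Wp^[j] (St3.Wm^[k] (fun p => ((φ p : ℝ) : ℂ))) ((ζ, 0, 0) : St3.P3) = 0 := by
    intro j k hjk ζ hζ
    rw [← hmix j k ζ hζ]
    exact hder0m ζ hζ j k hjk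
  have H3 : ∀ j k : ℕ, 1 ≤ j → 1 ≤ k → j + k = m + 1 → ∀ ζ ∈ Metric.ball (0:ℂ) r,
      St3.Wp^[j] (St3.Wm^[k] (fun p => ((φ p : ℝ) : ℂ))) ((ζ, 0, 0) : St3.P3) = 0 := by
    intro j k hj hk hjk ζ hζ
    rw [← hmix j k ζ hζ]
    exact hder0m1 ζ hζ j k hj hk hjk
  have H2 : ∀ ζ ∈ Metric.ball (0:ℂ) r,
      St3.Ey (fun p => ((φ p : ℝ) : ℂ)) ((ζ, 0, 0) : St3.P3) = 0 := by
    intro ζ hζ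
    rw [← St3.dy_eq (St3.Sm.diffAt hUopen hf (hsub ζ hζ))]
    exact hderIm ζ hζ
  -- reduce the goal to the vanishing of T
  have hq0 : ((z₁, (0:ℂ), (0:ℝ)) : St3.P3) ∈ Metric.ball (0 : ℂ) r ×ˢ ballCR s := hsub z₁ hz₁
  have hgoal : w1bar (fun ζ => mixedD φ (m + 1) 0 ζ) z₁
      = St3.Am (St3.Wp^[m+1] (fun p => ((φ p : ℝ) : ℂ))) ((z₁, (0:ℂ), (0:ℝ)) : St3.P3) := by
    have e1 : w1bar (fun ζ => mixedD φ (m + 1) 0 ζ) z₁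
        = w1bar (fun ζ => St3.Wp^[m+1] (fun p => ((φ p : ℝ) : ℂ)) ((ζ, 0, 0) : St3.P3)) z₁ := by
      apply St3.w1bar_congr hz₁
      intro w hw
      rw [hmix (m+1) 0 w hw, Function.iterate_zero_apply]
    rw [e1]
    exact St3.w1bar_slice ((St3.Sm.wpIter hf hUopen (m+1)).diffAt hUopen hq0)
  rw [hgoal]
  -- Taylor data
  have hs₀ : (0:ℝ) < s/2 := by positivity
  have hnormR : ∀ x : ℝ, ‖((x : ℝ) : ℂ)‖ = |x| := fun x => by
    simp [Complex.norm_real]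
  have hmap : ∀ ε ∈ Icc (0:ℝ) (s/2), St3.gam z₁ ε ∈ Metric.ball (0 : ℂ) r ×ˢ ballCR s := by
    intro ε hε
    refine ⟨hz₁, ?_⟩
    show ‖((ε : ℝ) : ℂ)‖^2 + (0:ℝ)^2 < s^2
    rw [hnormR ε]
    have h1 : |ε| = ε := abs_of_nonneg hε.1
    rw [h1]
    nlinarith [hε.1, hε.2, hs]
  have hgam0 : St3.gam z₁ 0 = ((z₁, (0:ℂ), (0:ℝ)) : St3.P3) := by
    simp [St3.gam]
  obtain ⟨C1, hC1n, hC1⟩ := St3.taylor_bound_line hUopen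
    (St3.Sm.ap hUopen hf) z₁ hs₀ hmap m
  obtain ⟨C2, hC2n, hC2⟩ := St3.taylor_bound_line hUopen
    (St3.Sm.wp hUopen hf) z₁ hs₀ hmap (m-1)
  obtain ⟨C3, hC3n, hC3⟩ := St3.taylor_bound_line hUopen
    (St3.Sm.ap hUopen (St3.Sm.am hUopen hf)) z₁ hs₀ hmap m
  obtain ⟨C4, hC4n, hC4⟩ := St3.taylor_bound_line hUopen
    (St3.Sm.wp hUopen (St3.Sm.wm hUopen hf)) z₁ hs₀ hmap (m-1)
  obtain ⟨C5, hC5n, hC5⟩ := St3.taylor_bound_line hUopen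
    (St3.Sm.ap hUopen (St3.Sm.ey hUopen hf)) z₁ hs₀ hmap 0
  obtain ⟨C6, hC6n, hC6⟩ := St3.taylor_bound_line hUopen
    (St3.Sm.ey hUopen (St3.Sm.am hUopen hf)) z₁ hs₀ hmap 0
  obtain ⟨C7, hC7n, hC7⟩ := St3.taylor_bound_line hUopen
    (St3.Sm.wp hUopen (St3.Sm.am hUopen hf)) z₁ hs₀ hmap m
  obtain ⟨C8, hC8n, hC8⟩ := St3.taylor_bound_line hUopen
    (St3.Sm.ap hUopen (St3.Sm.wm hUopen hf)) z₁ hs₀ hmap m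
  obtain ⟨C9, hC9n, hC9⟩ := St3.bound_on_line hUopen
    (St3.Sm.wp hUopen (St3.Sm.ey hUopen hf)) z₁ hs₀ hmap
  obtain ⟨C10, hC10n, hC10⟩ := St3.bound_on_line hUopen
    (St3.Sm.ey hUopen (St3.Sm.wm hUopen hf)) z₁ hs₀ hmap
  obtain ⟨C11, hC11n, hC11⟩ := St3.bound_on_line hUopen
    (St3.Sm.ey hUopen (St3.Sm.ey hUopen hf)) z₁ hs₀ hmap
  -- cooked bounds
  have hm1 : m - 1 + 1 = m := Nat.succ_pred_eq_of_pos hm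
  have B1 : ∀ ε ∈ Icc (0:ℝ) (s/2),
      ‖St3.Ap (fun p => ((φ p : ℝ) : ℂ)) (St3.gam z₁ ε)‖ ≤ C1 * ε^(m+1) := by
    intro ε hε
    have h := hC1 ε hε
    have hz : ∑ n ∈ Finset.range (m+1), ((ε:ℂ)^n / (n.factorial : ℂ))
        * St3.Xd^[n] (St3.Ap (fun p => ((φ p : ℝ) : ℂ))) (St3.gam z₁ 0) = 0 := by
      apply Finset.sum_eq_zero
      intro n hn
      rw [hgam0, St3.coeff_rho1 hUopen hf hsub H1
        (Nat.lt_succ_iff.mp (Finset.mem_range.mp hn)) hz₁, mul_zero]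
    rwa [hz, sub_zero] at h
  have B2 : ∀ ε ∈ Icc (0:ℝ) (s/2),
      ‖St3.Wp (fun p => ((φ p : ℝ) : ℂ)) (St3.gam z₁ ε)‖ ≤ C2 * ε^m := by
    intro ε hε
    have h := hC2 ε hε
    rw [hm1] at h
    have hz : ∑ n ∈ Finset.range m, ((ε:ℂ)^n / (n.factorial : ℂ))
        * St3.Xd^[n] (St3.Wp (fun p => ((φ p : ℝ) : ℂ))) (St3.gam z₁ 0) = 0 := by
      apply Finset.sum_eq_zero
      intro n hn
      have hn' : n + 1 ≤ m := by
        have := Finset.mem_range.mp hn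
        omega
      rw [hgam0, St3.coeff_rho2 hUopen hf hsub H1 hn' hz₁, mul_zero]
    rwa [hz, sub_zero] at h
  have B3 : ∀ ε ∈ Icc (0:ℝ) (s/2),
      ‖St3.Ap (St3.Am (fun p => ((φ p : ℝ) : ℂ))) (St3.gam z₁ ε)‖ ≤ C3 * ε^(m+1) := by
    intro ε hε
    have h := hC3 ε hε
    have hz : ∑ n ∈ Finset.range (m+1), ((ε:ℂ)^n / (n.factorial : ℂ))
        * St3.Xd^[n] (St3.Ap (St3.Am (fun p => ((φ p : ℝ) : ℂ)))) (St3.gam z₁ 0) = 0 := by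
      apply Finset.sum_eq_zero
      intro n hn
      rw [hgam0, St3.coeff_L11 hUopen hf hsub H1
        (Nat.lt_succ_iff.mp (Finset.mem_range.mp hn)) hz₁, mul_zero]
    rwa [hz, sub_zero] at h
  have B4 : ∀ ε ∈ Icc (0:ℝ) (s/2),
      ‖St3.Wp (St3.Wm (fun p => ((φ p : ℝ) : ℂ))) (St3.gam z₁ ε)‖ ≤ C4 * ε^m := by
    intro ε hε
    have h := hC4 ε hε
    rw [hm1] at h
    have hz : ∑ n ∈ Finset.range m, ((ε:ℂ)^n / (n.factorial : ℂ))
        * St3.Xd^[n] (St3.Wp (St3.Wm (fun p => ((φ p : ℝ) : ℂ)))) (St3.gam z₁ 0) = 0 := by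
      apply Finset.sum_eq_zero
      intro n hn
      have hn' : n + 1 ≤ m := by
        have := Finset.mem_range.mp hn
        omega
      rw [hgam0, St3.coeff_L22 hUopen hf hsub H1 H3 hn' hz₁, mul_zero]
    rwa [hz, sub_zero] at h
  have B5 : ∀ ε ∈ Icc (0:ℝ) (s/2),
      ‖St3.Ap (St3.Ey (fun p => ((φ p : ℝ) : ℂ))) (St3.gam z₁ ε)‖ ≤ C5 * ε := by
    intro ε hε
    have h := hC5 ε hε
    have hz : ∑ n ∈ Finset.range (0+1), ((ε:ℂ)^n / (n.factorial : ℂ))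
        * St3.Xd^[n] (St3.Ap (St3.Ey (fun p => ((φ p : ℝ) : ℂ)))) (St3.gam z₁ 0) = 0 := by
      rw [Finset.sum_range_one]
      rw [Function.iterate_zero_apply, hgam0,
        St3.val_A13 hUopen hf hsub H2 hz₁, mul_zero]
    rw [hz, sub_zero] at h
    simpa using h
  have B6 : ∀ ε ∈ Icc (0:ℝ) (s/2),
      ‖St3.Ey (St3.Am (fun p => ((φ p : ℝ) : ℂ))) (St3.gam z₁ ε)‖ ≤ C6 * ε := by
    intro ε hε
    have h := hC6 ε hε
    have hz : ∑ n ∈ Finset.range (0+1), ((ε:ℂ)^n / (n.factorial : ℂ))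
        * St3.Xd^[n] (St3.Ey (St3.Am (fun p => ((φ p : ℝ) : ℂ)))) (St3.gam z₁ 0) = 0 := by
      rw [Finset.sum_range_one]
      rw [Function.iterate_zero_apply, hgam0,
        St3.val_A31 hUopen hf hsub H2 hz₁, mul_zero]
    rw [hz, sub_zero] at h
    simpa using h
  have B7 : ∀ ε ∈ Icc (0:ℝ) (s/2),
      ‖St3.Wp (St3.Am (fun p => ((φ p : ℝ) : ℂ))) (St3.gam z₁ ε)
        - (ε:ℂ)^m / (m.factorial : ℂ)
          * St3.Am (St3.Wp^[m+1] (fun p => ((φ p : ℝ) : ℂ))) ((z₁, (0:ℂ), (0:ℝ)) : St3.P3)‖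
        ≤ C7 * ε^(m+1) := by
    intro ε hε
    have h := hC7 ε hε
    have hsum : ∑ n ∈ Finset.range (m+1), ((ε:ℂ)^n / (n.factorial : ℂ))
        * St3.Xd^[n] (St3.Wp (St3.Am (fun p => ((φ p : ℝ) : ℂ)))) (St3.gam z₁ 0)
        = (ε:ℂ)^m / (m.factorial : ℂ)
          * St3.Am (St3.Wp^[m+1] (fun p => ((φ p : ℝ) : ℂ))) ((z₁, (0:ℂ), (0:ℝ)) : St3.P3) := by
      rw [Finset.sum_range_succ]
      have h0 : ∑ n ∈ Finset.range m, ((ε:ℂ)^n / (n.factorial : ℂ))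
          * St3.Xd^[n] (St3.Wp (St3.Am (fun p => ((φ p : ℝ) : ℂ)))) (St3.gam z₁ 0) = 0 := by
        apply Finset.sum_eq_zero
        intro n hn
        have hn' : n + 1 ≤ m := Finset.mem_range.mp hn
        rw [hgam0, St3.coeff_L21_low hUopen hf hsub H1 hn' hz₁, mul_zero]
      rw [h0, zero_add, hgam0, St3.coeff_L21_top hUopen hf hsub H3 hz₁]
    rwa [hsum] at h
  have B8 : ∀ ε ∈ Icc (0:ℝ) (s/2),
      ‖St3.Ap (St3.Wm (fun p => ((φ p : ℝ) : ℂ))) (St3.gam z₁ ε)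
        - (ε:ℂ)^m / (m.factorial : ℂ)
          * (starRingEnd ℂ)
            (St3.Am (St3.Wp^[m+1] (fun p => ((φ p : ℝ) : ℂ))) ((z₁, (0:ℂ), (0:ℝ)) : St3.P3))‖
        ≤ C8 * ε^(m+1) := by
    intro ε hε
    have h := hC8 ε hε
    have hsum : ∑ n ∈ Finset.range (m+1), ((ε:ℂ)^n / (n.factorial : ℂ))
        * St3.Xd^[n] (St3.Ap (St3.Wm (fun p => ((φ p : ℝ) : ℂ)))) (St3.gam z₁ 0)
        = (ε:ℂ)^m / (m.factorial : ℂ)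
          * (starRingEnd ℂ)
            (St3.Am (St3.Wp^[m+1] (fun p => ((φ p : ℝ) : ℂ))) ((z₁, (0:ℂ), (0:ℝ)) : St3.P3)) := by
      rw [Finset.sum_range_succ]
      have h0 : ∑ n ∈ Finset.range m, ((ε:ℂ)^n / (n.factorial : ℂ))
          * St3.Xd^[n] (St3.Ap (St3.Wm (fun p => ((φ p : ℝ) : ℂ)))) (St3.gam z₁ 0) = 0 := by
        apply Finset.sum_eq_zero
        intro n hn
        have hn' : n + 1 ≤ m := Finset.mem_range.mp hn
        rw [hgam0, St3.coeff_L12_low hUopen hf hsub H1 hn' hz₁, mul_zero]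
      rw [h0, zero_add, hgam0, St3.coeff_L12_top hUopen hf hsub H3 hreal hz₁]
    rwa [hsum] at h
  -- the key estimate, for an arbitrary unit lam
  have hIhalf : ‖(Complex.I/2 : ℂ)‖ = 1/2 := by
    rw [norm_div]
    simp
  have hs₁pos : (0:ℝ) < min (s/2) 1 := lt_min hs₀ one_pos
  have hs₁le1 : min (s/2) 1 ≤ 1 := min_le_right _ _
  have hIcc : ∀ ε : ℝ, 0 < ε → ε ≤ min (s/2) 1 → ε ∈ Icc (0:ℝ) (s/2) :=
    fun ε h0 h1 => ⟨h0.le, h1.trans (min_le_left _ _)⟩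
  set C : ℝ := 2*(C1+C2+C3+C4+C5+C6+C7+C8+C9+C10+C11) + 1 with hCdef
  have hC : 0 ≤ C := by positivity
  -- identification of the Levi entries
  have hEq0 : ∀ w : ℂ × ℂ × ℂ, St3.piCLM w ∈ Metric.ball (0 : ℂ) r ×ˢ ballCR s →
      wd3bar 0 (graphRho φ) w
        = St3.Am (fun p => ((φ p : ℝ) : ℂ)) (St3.piCLM w) - 0 := by
    intro w hw
    rw [sub_zero]
    exact St3.wd3bar_rho0 (St3.Sm.diffAt hUopen hf hw)
  have hEq1 : ∀ w : ℂ × ℂ × ℂ, St3.piCLM w ∈ Metric.ball (0 : ℂ) r ×ˢ ballCR s →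
      wd3bar 1 (graphRho φ) w
        = St3.Wm (fun p => ((φ p : ℝ) : ℂ)) (St3.piCLM w) - 0 := by
    intro w hw
    rw [sub_zero]
    exact St3.wd3bar_rho1 (St3.Sm.diffAt hUopen hf hw)
  have hEq2 : ∀ w : ℂ × ℂ × ℂ, St3.piCLM w ∈ Metric.ball (0 : ℂ) r ×ˢ ballCR s →
      wd3bar 2 (graphRho φ) w
        = (fun q => (Complex.I/2) * St3.Ey (fun p => ((φ p : ℝ) : ℂ)) q) (St3.piCLM w)
          - 1/2 := by
    intro w hw
    exact St3.wd3bar_rho2 (St3.Sm.diffAt hUopen hf hw)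
  have hsmG2 : St3.Sm (Metric.ball (0 : ℂ) r ×ˢ ballCR s)
      (fun q => (Complex.I/2) * St3.Ey (fun p => ((φ p : ℝ) : ℂ)) q) :=
    contDiffOn_const.mul (St3.Sm.ey hUopen hf)
  -- the boundary point
  have hpiU : ∀ ε : ℝ, ε ∈ Icc (0:ℝ) (s/2) →
      St3.piCLM ((z₁, ((ε:ℝ):ℂ),
        ((φ (z₁, ((ε:ℝ):ℂ), (0:ℝ)) : ℝ) : ℂ)) : ℂ × ℂ × ℂ)
        = St3.gam z₁ ε := by
    intro ε hε
    rw [St3.piCLM_apply]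
    simp [St3.gam]
  have hlam0 : ∀ lam : ℂ, ‖lam‖ = 1 →
      ((St3.Am (St3.Wp^[m+1] (fun p => ((φ p : ℝ) : ℂ))) ((z₁, (0:ℂ), (0:ℝ)) : St3.P3))
        * lam).re = 0 := by
    intro lam hlam
    apply St3.key_estimate m hs₁pos hs₁le1 _ lam hlam
      (fun ε => wd3 0 (wd3bar 0 (graphRho φ))
        ((z₁, ((ε:ℝ):ℂ), ((φ (z₁, ((ε:ℝ):ℂ), (0:ℝ)) : ℝ) : ℂ)) : ℂ × ℂ × ℂ))
      (fun ε => wd3 0 (wd3bar 1 (graphRho φ))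
        ((z₁, ((ε:ℝ):ℂ), ((φ (z₁, ((ε:ℝ):ℂ), (0:ℝ)) : ℝ) : ℂ)) : ℂ × ℂ × ℂ))
      (fun ε => wd3 0 (wd3bar 2 (graphRho φ))
        ((z₁, ((ε:ℝ):ℂ), ((φ (z₁, ((ε:ℝ):ℂ), (0:ℝ)) : ℝ) : ℂ)) : ℂ × ℂ × ℂ))
      (fun ε => wd3 1 (wd3bar 0 (graphRho φ))
        ((z₁, ((ε:ℝ):ℂ), ((φ (z₁, ((ε:ℝ):ℂ), (0:ℝ)) : ℝ) : ℂ)) : ℂ × ℂ × ℂ))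
      (fun ε => wd3 1 (wd3bar 1 (graphRho φ))
        ((z₁, ((ε:ℝ):ℂ), ((φ (z₁, ((ε:ℝ):ℂ), (0:ℝ)) : ℝ) : ℂ)) : ℂ × ℂ × ℂ))
      (fun ε => wd3 1 (wd3bar 2 (graphRho φ))
        ((z₁, ((ε:ℝ):ℂ), ((φ (z₁, ((ε:ℝ):ℂ), (0:ℝ)) : ℝ) : ℂ)) : ℂ × ℂ × ℂ))
      (fun ε => wd3 2 (wd3bar 0 (graphRho φ))
        ((z₁, ((ε:ℝ):ℂ), ((φ (z₁, ((ε:ℝ):ℂ), (0:ℝ)) : ℝ) : ℂ)) : ℂ × ℂ × ℂ))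
      (fun ε => wd3 2 (wd3bar 1 (graphRho φ))
        ((z₁, ((ε:ℝ):ℂ), ((φ (z₁, ((ε:ℝ):ℂ), (0:ℝ)) : ℝ) : ℂ)) : ℂ × ℂ × ℂ))
      (fun ε => wd3 2 (wd3bar 2 (graphRho φ))
        ((z₁, ((ε:ℝ):ℂ), ((φ (z₁, ((ε:ℝ):ℂ), (0:ℝ)) : ℝ) : ℂ)) : ℂ × ℂ × ℂ))
      (fun ε => -(St3.Ap (fun p => ((φ p : ℝ) : ℂ)) (St3.gam z₁ ε)
        / (-(Complex.I/2) * St3.Ey (fun p => ((φ p : ℝ) : ℂ)) (St3.gam z₁ ε) - 1/2)))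
      (fun ε => -(St3.Wp (fun p => ((φ p : ℝ) : ℂ)) (St3.gam z₁ ε) * lam
        / (-(Complex.I/2) * St3.Ey (fun p => ((φ p : ℝ) : ℂ)) (St3.gam z₁ ε) - 1/2)))
      C hC
    -- now the eleven obligations, in order: hv hw hL11 hL22 hL13 hL31 hL21 hL12 hL23 hL32 hL33 hpos
    · -- hv
      intro ε hε0 hε1
      have hεI := hIcc ε hε0 hε1
      have him : (St3.Ey (fun p => ((φ p : ℝ) : ℂ)) (St3.gam z₁ ε)).im = 0 :=
        St3.im_ey_real (St3.Sm.diffAt hUopen hf (hmap ε hεI)) hreal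
      rw [norm_neg]
      refine (St3.norm_div_le_two_mul (St3.rho3_norm him) (St3.rho3_ne him) (B1 ε hεI)).trans ?_
      have he : 2 * (C1 * ε^(m+1)) = (2*C1) * ε^(m+1) := by ring
      rw [he]
      exact mul_le_mul_of_nonneg_right (by rw [hCdef]; linarith) (pow_nonneg hε0.le _)
    · -- hw
      intro ε hε0 hε1
      have hεI := hIcc ε hε0 hε1
      have him : (St3.Ey (fun p => ((φ p : ℝ) : ℂ)) (St3.gam z₁ ε)).im = 0 :=
        St3.im_ey_real (St3.Sm.diffAt hUopen hf (hmap ε hεI)) hreal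
      rw [norm_neg]
      have hb : ‖St3.Wp (fun p => ((φ p : ℝ) : ℂ)) (St3.gam z₁ ε) * lam‖ ≤ C2 * ε^m := by
        rw [norm_mul, hlam, mul_one]
        exact B2 ε hεI
      refine (St3.norm_div_le_two_mul (St3.rho3_norm him) (St3.rho3_ne him) hb).trans ?_
      have he : 2 * (C2 * ε^m) = (2*C2) * ε^m := by ring
      rw [he]
      exact mul_le_mul_of_nonneg_right (by rw [hCdef]; linarith) (pow_nonneg hε0.le _)
    · -- hL11
      intro ε hε0 hε1
      have hεI := hIcc ε hε0 hε1
      have hπ : St3.piCLM ((z₁, ((ε:ℝ):ℂ),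
          ((φ (z₁, ((ε:ℝ):ℂ), (0:ℝ)) : ℝ) : ℂ)) : ℂ × ℂ × ℂ)
          ∈ Metric.ball (0 : ℂ) r ×ˢ ballCR s := by
        rw [hpiU ε hεI]
        exact hmap ε hεI
      rw [St3.wd3_0_of_comp hUopen (St3.Sm.am hUopen hf) hEq0 hπ, hpiU ε hεI]
      exact (B3 ε hεI).trans
        (mul_le_mul_of_nonneg_right (by rw [hCdef]; linarith) (pow_nonneg hε0.le _))
    · -- hL22
      intro ε hε0 hε1
      have hεI := hIcc ε hε0 hε1
      have hπ : St3.piCLM ((z₁, ((ε:ℝ):ℂ),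
          ((φ (z₁, ((ε:ℝ):ℂ), (0:ℝ)) : ℝ) : ℂ)) : ℂ × ℂ × ℂ)
          ∈ Metric.ball (0 : ℂ) r ×ˢ ballCR s := by
        rw [hpiU ε hεI]
        exact hmap ε hεI
      rw [St3.wd3_1_of_comp hUopen (St3.Sm.wm hUopen hf) hEq1 hπ, hpiU ε hεI]
      exact (B4 ε hεI).trans
        (mul_le_mul_of_nonneg_right (by rw [hCdef]; linarith) (pow_nonneg hε0.le _))
    · -- hL13
      intro ε hε0 hε1
      have hεI := hIcc ε hε0 hε1
      have hπ : St3.piCLM ((z₁, ((ε:ℝ):ℂ),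
          ((φ (z₁, ((ε:ℝ):ℂ), (0:ℝ)) : ℝ) : ℂ)) : ℂ × ℂ × ℂ)
          ∈ Metric.ball (0 : ℂ) r ×ˢ ballCR s := by
        rw [hpiU ε hεI]
        exact hmap ε hεI
      rw [St3.wd3_0_of_comp hUopen hsmG2 hEq2 hπ, hpiU ε hεI]
      have hcm : St3.Ap (fun q => (Complex.I/2) * St3.Ey (fun p => ((φ p : ℝ) : ℂ)) q)
          (St3.gam z₁ ε)
          = (Complex.I/2) * St3.Ap (St3.Ey (fun p => ((φ p : ℝ) : ℂ))) (St3.gam z₁ ε) :=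
        St3.opL_const_mul (St3.Sm.diffAt hUopen (St3.Sm.ey hUopen hf) (hmap ε hεI)) _ _ _ _ _
      rw [hcm, norm_mul, hIhalf]
      have h5 := B5 ε hεI
      have hq : C5/2 * ε ≤ C * ε :=
        mul_le_mul_of_nonneg_right (by rw [hCdef]; linarith) hε0.le
      linarith
    · -- hL31
      intro ε hε0 hε1
      have hεI := hIcc ε hε0 hε1
      have hπ : St3.piCLM ((z₁, ((ε:ℝ):ℂ),
          ((φ (z₁, ((ε:ℝ):ℂ), (0:ℝ)) : ℝ) : ℂ)) : ℂ × ℂ × ℂ)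
          ∈ Metric.ball (0 : ℂ) r ×ˢ ballCR s := by
        rw [hpiU ε hεI]
        exact hmap ε hεI
      rw [St3.wd3_2_of_comp hUopen (St3.Sm.am hUopen hf) hEq0 hπ, hpiU ε hεI]
      rw [neg_mul, norm_neg, norm_mul, hIhalf]
      have h6 := B6 ε hεI
      have hq : C6/2 * ε ≤ C * ε :=
        mul_le_mul_of_nonneg_right (by rw [hCdef]; linarith) hε0.le
      linarith
    · -- hL21
      intro ε hε0 hε1
      have hεI := hIcc ε hε0 hε1
      have hπ : St3.piCLM ((z₁, ((ε:ℝ):ℂ),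
          ((φ (z₁, ((ε:ℝ):ℂ), (0:ℝ)) : ℝ) : ℂ)) : ℂ × ℂ × ℂ)
          ∈ Metric.ball (0 : ℂ) r ×ˢ ballCR s := by
        rw [hpiU ε hεI]
        exact hmap ε hεI
      rw [St3.wd3_1_of_comp hUopen (St3.Sm.am hUopen hf) hEq0 hπ, hpiU ε hεI]
      exact (B7 ε hεI).trans
        (mul_le_mul_of_nonneg_right (by rw [hCdef]; linarith) (pow_nonneg hε0.le _))
    · -- hL12
      intro ε hε0 hε1
      have hεI := hIcc ε hε0 hε1
      have hπ : St3.piCLM ((z₁, ((ε:ℝ):ℂ),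
          ((φ (z₁, ((ε:ℝ):ℂ), (0:ℝ)) : ℝ) : ℂ)) : ℂ × ℂ × ℂ)
          ∈ Metric.ball (0 : ℂ) r ×ˢ ballCR s := by
        rw [hpiU ε hεI]
        exact hmap ε hεI
      rw [St3.wd3_0_of_comp hUopen (St3.Sm.wm hUopen hf) hEq1 hπ, hpiU ε hεI]
      exact (B8 ε hεI).trans
        (mul_le_mul_of_nonneg_right (by rw [hCdef]; linarith) (pow_nonneg hε0.le _))
    · -- hL23
      intro ε hε0 hε1
      have hεI := hIcc ε hε0 hε1
      have hπ : St3.piCLM ((z₁, ((ε:ℝ):ℂ),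
          ((φ (z₁, ((ε:ℝ):ℂ), (0:ℝ)) : ℝ) : ℂ)) : ℂ × ℂ × ℂ)
          ∈ Metric.ball (0 : ℂ) r ×ˢ ballCR s := by
        rw [hpiU ε hεI]
        exact hmap ε hεI
      rw [St3.wd3_1_of_comp hUopen hsmG2 hEq2 hπ, hpiU ε hεI]
      have hcm : St3.Wp (fun q => (Complex.I/2) * St3.Ey (fun p => ((φ p : ℝ) : ℂ)) q)
          (St3.gam z₁ ε)
          = (Complex.I/2) * St3.Wp (St3.Ey (fun p => ((φ p : ℝ) : ℂ))) (St3.gam z₁ ε) :=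
        St3.opL_const_mul (St3.Sm.diffAt hUopen (St3.Sm.ey hUopen hf) (hmap ε hεI)) _ _ _ _ _
      rw [hcm, norm_mul, hIhalf]
      have h9 := hC9 ε hεI
      rw [hCdef]
      linarith
    · -- hL32
      intro ε hε0 hε1
      have hεI := hIcc ε hε0 hε1
      have hπ : St3.piCLM ((z₁, ((ε:ℝ):ℂ),
          ((φ (z₁, ((ε:ℝ):ℂ), (0:ℝ)) : ℝ) : ℂ)) : ℂ × ℂ × ℂ)
          ∈ Metric.ball (0 : ℂ) r ×ˢ ballCR s := by
        rw [hpiU ε hεI]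
        exact hmap ε hεI
      rw [St3.wd3_2_of_comp hUopen (St3.Sm.wm hUopen hf) hEq1 hπ, hpiU ε hεI]
      rw [neg_mul, norm_neg, norm_mul, hIhalf]
      have h10 := hC10 ε hεI
      rw [hCdef]
      linarith
    · -- hL33
      intro ε hε0 hε1
      have hεI := hIcc ε hε0 hε1
      have hπ : St3.piCLM ((z₁, ((ε:ℝ):ℂ),
          ((φ (z₁, ((ε:ℝ):ℂ), (0:ℝ)) : ℝ) : ℂ)) : ℂ × ℂ × ℂ)
          ∈ Metric.ball (0 : ℂ) r ×ˢ ballCR s := by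
        rw [hpiU ε hεI]
        exact hmap ε hεI
      rw [St3.wd3_2_of_comp hUopen hsmG2 hEq2 hπ, hpiU ε hεI]
      have hcm : St3.Ey (fun q => (Complex.I/2) * St3.Ey (fun p => ((φ p : ℝ) : ℂ)) q)
          (St3.gam z₁ ε)
          = (Complex.I/2) * St3.Ey (St3.Ey (fun p => ((φ p : ℝ) : ℂ))) (St3.gam z₁ ε) :=
        St3.opL_const_mul (St3.Sm.diffAt hUopen (St3.Sm.ey hUopen hf) (hmap ε hεI)) _ _ _ _ _
      rw [hcm, neg_mul, norm_neg, norm_mul, hIhalf, norm_mul, hIhalf]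
      have h11 := hC11 ε hεI
      rw [hCdef]
      linarith
    · -- hpos
      intro ε hε0 hε1 δ
      have hεI := hIcc ε hε0 hε1
      have hmem := hmap ε hεI
      have hd0 : DifferentiableAt ℝ (fun p => ((φ p : ℝ) : ℂ))
          (St3.piCLM ((z₁, ((ε:ℝ):ℂ),
            ((φ (z₁, ((ε:ℝ):ℂ), (0:ℝ)) : ℝ) : ℂ)) : ℂ × ℂ × ℂ)) := by
        rw [hpiU ε hεI]
        exact St3.Sm.diffAt hUopen hf hmem
      have him : (St3.Ey (fun p => ((φ p : ℝ) : ℂ)) (St3.gam z₁ ε)).im = 0 :=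
        St3.im_ey_real (St3.Sm.diffAt hUopen hf hmem) hreal
      have h3n := St3.rho3_ne him
      have hb2 : ((((z₁, ((ε:ℝ):ℂ),
          ((φ (z₁, ((ε:ℝ):ℂ), (0:ℝ)) : ℝ) : ℂ)) : ℂ × ℂ × ℂ)).2.1,
          (((z₁, ((ε:ℝ):ℂ),
          ((φ (z₁, ((ε:ℝ):ℂ), (0:ℝ)) : ℝ) : ℂ)) : ℂ × ℂ × ℂ)).2.2.im) ∈ ballCR s := by
        show ((((ε:ℝ):ℂ)), (((φ (z₁, ((ε:ℝ):ℂ), (0:ℝ)) : ℝ) : ℂ)).im) ∈ ballCR s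
        rw [Complex.ofReal_im]
        exact hmem.2
      have hb3 : |(((z₁, ((ε:ℝ):ℂ),
          ((φ (z₁, ((ε:ℝ):ℂ), (0:ℝ)) : ℝ) : ℂ)) : ℂ × ℂ × ℂ)).2.2.re| < t := by
        show |(((φ (z₁, ((ε:ℝ):ℂ), (0:ℝ)) : ℝ) : ℂ)).re| < t
        rw [Complex.ofReal_re]
        have hio := hφmap hmem
        exact abs_lt.mpr ⟨hio.1, hio.2⟩
      have hb4 : (((z₁, ((ε:ℝ):ℂ),
          ((φ (z₁, ((ε:ℝ):ℂ), (0:ℝ)) : ℝ) : ℂ)) : ℂ × ℂ × ℂ)).2.2.re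
          = φ ((((z₁, ((ε:ℝ):ℂ),
          ((φ (z₁, ((ε:ℝ):ℂ), (0:ℝ)) : ℝ) : ℂ)) : ℂ × ℂ × ℂ)).1,
          (((z₁, ((ε:ℝ):ℂ),
          ((φ (z₁, ((ε:ℝ):ℂ), (0:ℝ)) : ℝ) : ℂ)) : ℂ × ℂ × ℂ)).2.1,
          (((z₁, ((ε:ℝ):ℂ),
          ((φ (z₁, ((ε:ℝ):ℂ), (0:ℝ)) : ℝ) : ℂ)) : ℂ × ℂ × ℂ)).2.2.im) := by
        show (((φ (z₁, ((ε:ℝ):ℂ), (0:ℝ)) : ℝ) : ℂ)).re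
          = φ (z₁, ((ε:ℝ):ℂ), (((φ (z₁, ((ε:ℝ):ℂ), (0:ℝ)) : ℝ) : ℂ)).im)
        rw [Complex.ofReal_re, Complex.ofReal_im]
      -- the wd3 values at the boundary point
      have hw0 : wd3 0 (graphRho φ) ((z₁, ((ε:ℝ):ℂ),
          ((φ (z₁, ((ε:ℝ):ℂ), (0:ℝ)) : ℝ) : ℂ)) : ℂ × ℂ × ℂ)
          = St3.Ap (fun p => ((φ p : ℝ) : ℂ)) (St3.gam z₁ ε) := by
        rw [St3.wd3_rho0 hd0, hpiU ε hεI]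
      have hw1 : wd3 1 (graphRho φ) ((z₁, ((ε:ℝ):ℂ),
          ((φ (z₁, ((ε:ℝ):ℂ), (0:ℝ)) : ℝ) : ℂ)) : ℂ × ℂ × ℂ)
          = St3.Wp (fun p => ((φ p : ℝ) : ℂ)) (St3.gam z₁ ε) := by
        rw [St3.wd3_rho1 hd0, hpiU ε hεI]
      have hw2 : wd3 2 (graphRho φ) ((z₁, ((ε:ℝ):ℂ),
          ((φ (z₁, ((ε:ℝ):ℂ), (0:ℝ)) : ℝ) : ℂ)) : ℂ × ℂ × ℂ)
          = -(Complex.I/2) * St3.Ey (fun p => ((φ p : ℝ) : ℂ)) (St3.gam z₁ ε) - 1/2 := by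
        rw [St3.wd3_rho2 hd0, hpiU ε hεI]
      set vv : ℂ := -(St3.Ap (fun p => ((φ p : ℝ) : ℂ)) (St3.gam z₁ ε)
        / (-(Complex.I/2) * St3.Ey (fun p => ((φ p : ℝ) : ℂ)) (St3.gam z₁ ε) - 1/2)) with hvv
      set ww : ℂ := -(St3.Wp (fun p => ((φ p : ℝ) : ℂ)) (St3.gam z₁ ε) * lam
        / (-(Complex.I/2) * St3.Ey (fun p => ((φ p : ℝ) : ℂ)) (St3.gam z₁ ε) - 1/2)) with hww
      have htang : ∑ j, wd3 j (graphRho φ) ((z₁, ((ε:ℝ):ℂ),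
          ((φ (z₁, ((ε:ℝ):ℂ), (0:ℝ)) : ℝ) : ℂ)) : ℂ × ℂ × ℂ)
          * (![1, (δ:ℂ) * lam, vv + (δ:ℂ) * ww] : Fin 3 → ℂ) j = 0 := by
        rw [Fin.sum_univ_three]
        simp only [Matrix.cons_val_zero, Matrix.cons_val_one, Matrix.head_cons,
          Matrix.cons_val_two, Matrix.tail_cons]
        rw [hw0, hw1, hw2, hvv, hww]
        have f1 := div_mul_cancel₀
          (St3.Ap (fun p => ((φ p : ℝ) : ℂ)) (St3.gam z₁ ε)) h3n
        have f2 := div_mul_cancel₀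
          (St3.Wp (fun p => ((φ p : ℝ) : ℂ)) (St3.gam z₁ ε) * lam) h3n
        linear_combination (-(1:ℂ)) * f1 - ((δ:ℝ):ℂ) * f2
      have hineq := hpsc ((z₁, ((ε:ℝ):ℂ),
          ((φ (z₁, ((ε:ℝ):ℂ), (0:ℝ)) : ℝ) : ℂ)) : ℂ × ℂ × ℂ) hz₁ hb2 hb3 hb4
          (![1, (δ:ℂ) * lam, vv + (δ:ℂ) * ww]) htang
      have hSeq : (∑ j, ∑ k, wd3 j (wd3bar k (graphRho φ)) ((z₁, ((ε:ℝ):ℂ),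
            ((φ (z₁, ((ε:ℝ):ℂ), (0:ℝ)) : ℝ) : ℂ)) : ℂ × ℂ × ℂ)
            * (![1, (δ:ℂ) * lam, vv + (δ:ℂ) * ww] : Fin 3 → ℂ) j
            * (starRingEnd ℂ) ((![1, (δ:ℂ) * lam, vv + (δ:ℂ) * ww] : Fin 3 → ℂ) k))
          = (wd3 0 (wd3bar 0 (graphRho φ)) ((z₁, ((ε:ℝ):ℂ),
              ((φ (z₁, ((ε:ℝ):ℂ), (0:ℝ)) : ℝ) : ℂ)) : ℂ × ℂ × ℂ)
            + wd3 0 (wd3bar 1 (graphRho φ)) ((z₁, ((ε:ℝ):ℂ),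
              ((φ (z₁, ((ε:ℝ):ℂ), (0:ℝ)) : ℝ) : ℂ)) : ℂ × ℂ × ℂ)
              * ((δ:ℂ) * (starRingEnd ℂ) lam)
            + wd3 0 (wd3bar 2 (graphRho φ)) ((z₁, ((ε:ℝ):ℂ),
              ((φ (z₁, ((ε:ℝ):ℂ), (0:ℝ)) : ℝ) : ℂ)) : ℂ × ℂ × ℂ)
              * (starRingEnd ℂ) (vv + (δ:ℂ) * ww)
            + wd3 1 (wd3bar 0 (graphRho φ)) ((z₁, ((ε:ℝ):ℂ),
              ((φ (z₁, ((ε:ℝ):ℂ), (0:ℝ)) : ℝ) : ℂ)) : ℂ × ℂ × ℂ)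
              * ((δ:ℂ) * lam)
            + wd3 1 (wd3bar 1 (graphRho φ)) ((z₁, ((ε:ℝ):ℂ),
              ((φ (z₁, ((ε:ℝ):ℂ), (0:ℝ)) : ℝ) : ℂ)) : ℂ × ℂ × ℂ)
              * ((δ:ℂ) * lam) * ((δ:ℂ) * (starRingEnd ℂ) lam)
            + wd3 1 (wd3bar 2 (graphRho φ)) ((z₁, ((ε:ℝ):ℂ),
              ((φ (z₁, ((ε:ℝ):ℂ), (0:ℝ)) : ℝ) : ℂ)) : ℂ × ℂ × ℂ)
              * ((δ:ℂ) * lam) * (starRingEnd ℂ) (vv + (δ:ℂ) * ww)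
            + wd3 2 (wd3bar 0 (graphRho φ)) ((z₁, ((ε:ℝ):ℂ),
              ((φ (z₁, ((ε:ℝ):ℂ), (0:ℝ)) : ℝ) : ℂ)) : ℂ × ℂ × ℂ)
              * (vv + (δ:ℂ) * ww)
            + wd3 2 (wd3bar 1 (graphRho φ)) ((z₁, ((ε:ℝ):ℂ),
              ((φ (z₁, ((ε:ℝ):ℂ), (0:ℝ)) : ℝ) : ℂ)) : ℂ × ℂ × ℂ)
              * (vv + (δ:ℂ) * ww) * ((δ:ℂ) * (starRingEnd ℂ) lam)
            + wd3 2 (wd3bar 2 (graphRho φ)) ((z₁, ((ε:ℝ):ℂ),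
              ((φ (z₁, ((ε:ℝ):ℂ), (0:ℝ)) : ℝ) : ℂ)) : ℂ × ℂ × ℂ)
              * (vv + (δ:ℂ) * ww) * (starRingEnd ℂ) (vv + (δ:ℂ) * ww)) := by
        rw [Fin.sum_univ_three]
        rw [Fin.sum_univ_three, Fin.sum_univ_three, Fin.sum_univ_three]
        simp only [Matrix.cons_val_zero, Matrix.cons_val_one, Matrix.head_cons,
          Matrix.cons_val_two, Matrix.tail_cons, map_one, map_mul, Complex.conj_ofReal]
        ring
      rw [hSeq] at hineq
      exact hineq
  -- conclude from lam = 1 and lam = I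
  have h1 := hlam0 1 (by simp)
  have h2 := hlam0 Complex.I (by simp)
  rw [mul_one] at h1
  have him : (St3.Am (St3.Wp^[m+1] (fun p => ((φ p : ℝ) : ℂ)))
      ((z₁, (0:ℂ), (0:ℝ)) : St3.P3)).im = 0 := by
    have e : ((St3.Am (St3.Wp^[m+1] (fun p => ((φ p : ℝ) : ℂ)))
        ((z₁, (0:ℂ), (0:ℝ)) : St3.P3)) * Complex.I).re
        = -(St3.Am (St3.Wp^[m+1] (fun p => ((φ p : ℝ) : ℂ)))
        ((z₁, (0:ℂ), (0:ℝ)) : St3.P3)).im := by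
      simp [Complex.mul_re]
    rw [e] at h2
    linarith
  apply Complex.ext
  · simpa using h1
  · simpa using him

end
end

section
/- Let τ > 0, C > 0, and consider the model domain Ω_{τ,C} := {(z₁,z₂) ∈ ℂ² : Re z₂ > C|z₁|^τ + C|Im z₂|}. Let W be a neighborhood of the origin in ℂ². Then there exist δ₀ > 0 and M > 0 such that for every δ ∈ (0,δ₀) and every holomorphic function f on Ω_{τ,C} ∩ W with ∫_{Ω_{τ,C} ∩ W} |f|² dλ ≤ 1, one has |f(0,δ)|² ≤ M · δ^{−2−2/τ}. (Equivalently, the Bergman kernel K of Ω_{τ,C} ∩ W satisfies K((0,δ),(0,δ)) ≲ δ^{−2−2/τ} for δ ∈ (0,δ₀), using the variational characterization K(z,z) = sup{|f(z)|² : f holomorphic and L² on the domain with L² norm 1}.) -/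
/-!
By the mean value property on circles, integrated in polar coordinates and then slice by slice
(Fubini), a function holomorphic on a closed bidisc of radii `r₁, r₂` has its centre value as
average over the bidisc. Applied to `f ^ 2` this gives `π r₁² · π r₂² · |f(a, b)|² ≤ ∫ |f|²`.
The bidisc about `(0, δ)` with radii `(δ / 4C)^{1/τ}` and `δ / 4(C + 1)` lies in `Ω_{τ,C}`, and
for small `δ` also in `W`; its volume is a constant times `δ^{2 + 2/τ}`.
-/

open Complex Metric Set MeasureTheory Filter Topology

noncomputable section

/-- The model domain Ω_{τ,C} = {(z₁,z₂) ∈ ℂ² : Re z₂ > C|z₁|^τ + C|Im z₂|}. -/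
def modelDomain (τ C : ℝ) : Set (ℂ × ℂ) :=
  {p | C * ‖p.1‖ ^ τ + C * |p.2.im| < p.2.re}

open Real

theorem circleMap_eq_add_polarCoord_symm (c : ℂ) (p : ℝ × ℝ) :
    circleMap c p.1 p.2 = c + Complex.polarCoord.symm p := by
  rw [Complex.polarCoord_symm_apply, circleMap, Complex.exp_mul_I]
  push_cast
  ring

section

variable {E : Type*} [NormedAddCommGroup E] [NormedSpace ℝ E]

theorem setIntegral_Ioo_circleMap_eq_smul_circleAverage (h : ℂ → E) (c : ℂ) (r : ℝ) :
    ∫ θ in Ioo (-π) π, h (circleMap c r θ) = (2 * π) • circleAverage h c r := by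
  rw [circleAverage_eq_integral_add (-π), smul_inv_smul₀ two_pi_pos.ne',
    intervalIntegral.integral_comp_add_right (fun θ ↦ h (circleMap c r θ)),
    intervalIntegral.integral_of_le (by linarith [pi_pos]), integral_Ioc_eq_integral_Ioo]
  ring_nf

theorem integral_closedBall_eq_setIntegral_polar (h : ℂ → E) (c : ℂ) (R : ℝ) :
    ∫ z in closedBall c R, h z =
      ∫ p in Ioc 0 R ×ˢ Ioo (-π) π, p.1 • h (circleMap c p.1 p.2) := by
  set F : ℝ × ℝ → E := fun p ↦ p.1 • h (circleMap c p.1 p.2)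
  have hball : closedBall (0 : ℂ) R = (c + ·) ⁻¹' closedBall c R := by
    simp [preimage_add_closedBall]
  calc ∫ z in closedBall c R, h z
      = ∫ w, (closedBall (0 : ℂ) R).indicator (fun w ↦ h (c + w)) w := by
        rw [integral_indicator measurableSet_closedBall, hball,
          (measurePreserving_add_left volume c).setIntegral_preimage_emb
            (measurableEmbedding_addLeft c)]
    _ = ∫ p in Complex.polarCoord.target, (Ioc 0 R ×ˢ Ioo (-π) π).indicator F p := by
        rw [← Complex.integral_comp_polarCoord_symm]
        refine setIntegral_congr_fun Complex.polarCoord.open_target.measurableSet ?_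
        rintro ⟨r, θ⟩ ⟨hr : 0 < r, hθ⟩
        dsimp only
        by_cases hrR : r ≤ R
        · have hmem : Complex.polarCoord.symm (r, θ) ∈ closedBall 0 R := by
            simpa [abs_of_pos hr] using hrR
          rw [indicator_of_mem hmem,
            indicator_of_mem (show (r, θ) ∈ Ioc 0 R ×ˢ Ioo (-π) π from ⟨⟨hr, hrR⟩, hθ⟩)]
          simp only [F, circleMap_eq_add_polarCoord_symm]
        · have hmem : Complex.polarCoord.symm (r, θ) ∉ closedBall 0 R := by
            simpa [abs_of_pos hr] using hrR
          rw [indicator_of_notMem hmem, smul_zero,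
            indicator_of_notMem (show (r, θ) ∉ Ioc 0 R ×ˢ Ioo (-π) π from fun h ↦ hrR h.1.2)]
    _ = ∫ p in Ioc 0 R ×ˢ Ioo (-π) π, F p := by
        rw [setIntegral_indicator (measurableSet_Ioc.prod measurableSet_Ioo),
          inter_eq_self_of_subset_right]
        exact prod_mono Ioc_subset_Ioi_self subset_rfl

theorem integral_closedBall_eq_integral_circleAverage {h : ℂ → E} {c : ℂ} {R : ℝ}
    (hh : ContinuousOn h (closedBall c R)) :
    ∫ z in closedBall c R, h z = ∫ r in Ioc 0 R, (2 * π * r) • circleAverage h c r := by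
  have hF : IntegrableOn (fun p : ℝ × ℝ ↦ p.1 • h (circleMap c p.1 p.2))
      (Ioc 0 R ×ˢ Ioo (-π) π) := by
    refine (ContinuousOn.integrableOn_compact (isCompact_Icc.prod isCompact_Icc) ?_).mono_set
      (prod_mono Ioc_subset_Icc_self Ioo_subset_Icc_self)
    refine continuousOn_fst.smul (hh.comp (by fun_prop) ?_)
    rintro ⟨r, θ⟩ ⟨hr, -⟩
    simp [circleMap, abs_of_nonneg hr.1, hr.2]
  rw [integral_closedBall_eq_setIntegral_polar, Measure.volume_eq_prod, setIntegral_prod _ hF]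
  refine integral_congr_ae (ae_of_all _ fun r ↦ ?_)
  dsimp only
  rw [integral_smul, setIntegral_Ioo_circleMap_eq_smul_circleAverage, smul_smul, mul_comm r]

end

section

variable {E : Type*} [NormedAddCommGroup E] [NormedSpace ℂ E] [CompleteSpace E]

theorem DiffContOnCl.integral_closedBall {h : ℂ → E} {c : ℂ} {R : ℝ} (hR : 0 < R)
    (hh : DiffContOnCl ℂ h (ball c R)) :
    ∫ z in closedBall c R, h z = (π * R ^ 2) • h c := by
  have hcont : ContinuousOn h (closedBall c R) := closure_ball c hR.ne' ▸ hh.continuousOn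
  calc ∫ z in closedBall c R, h z
      = ∫ r in Ioc 0 R, (2 * π * r) • h c := by
        rw [integral_closedBall_eq_integral_circleAverage hcont]
        refine setIntegral_congr_fun measurableSet_Ioc fun r hr ↦ ?_
        rw [DiffContOnCl.circleAverage
          (hh.mono (ball_subset_ball (by simpa [abs_of_pos hr.1] using hr.2)))]
    _ = (π * R ^ 2) • h c := by
        rw [integral_smul_const, ← intervalIntegral.integral_of_le hR.le,
          intervalIntegral.integral_const_mul, integral_id]
        ring_nf

theorem DifferentiableOn.integral_closedBall_prod_closedBall {f : ℂ × ℂ → E} {a b : ℂ}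
    {r₁ r₂ : ℝ} (hr₁ : 0 < r₁) (hr₂ : 0 < r₂)
    (hf : DifferentiableOn ℂ f (closedBall a r₁ ×ˢ closedBall b r₂)) :
    ∫ p in closedBall a r₁ ×ˢ closedBall b r₂, f p = (π * r₁ ^ 2 * (π * r₂ ^ 2)) • f (a, b) := by
  have hint : IntegrableOn f (closedBall a r₁ ×ˢ closedBall b r₂) :=
    hf.continuousOn.integrableOn_compact
      ((isCompact_closedBall a r₁).prod (isCompact_closedBall b r₂))
  have hslice : ∀ z ∈ closedBall a r₁,
      ∫ w in closedBall b r₂, f (z, w) = (π * r₂ ^ 2) • f (z, b) := fun z hz ↦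
    DiffContOnCl.integral_closedBall hr₂ <| DifferentiableOn.diffContOnCl_ball
      (hf.comp ((differentiableOn_const z).prodMk differentiableOn_id) fun _ hw ↦ ⟨hz, hw⟩)
      subset_rfl
  have hline : DiffContOnCl ℂ (fun z ↦ f (z, b)) (ball a r₁) :=
    DifferentiableOn.diffContOnCl_ball (hf.comp (differentiableOn_id.prodMk
      (differentiableOn_const b)) fun _ hz ↦ ⟨hz, mem_closedBall_self hr₂.le⟩) subset_rfl
  rw [Measure.volume_eq_prod] at hint ⊢
  rw [setIntegral_prod f hint, setIntegral_congr_fun measurableSet_closedBall hslice,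
    integral_smul, hline.integral_closedBall hr₁, smul_smul, mul_comm (π * r₂ ^ 2)]

end

theorem DifferentiableOn.mul_norm_sq_le_setIntegral_norm_sq {f : ℂ × ℂ → ℂ} {S : Set (ℂ × ℂ)}
    (hf : DifferentiableOn ℂ f S) (hint : IntegrableOn (fun p ↦ ‖f p‖ ^ 2) S) {a b : ℂ}
    {r₁ r₂ : ℝ} (hr₁ : 0 < r₁) (hr₂ : 0 < r₂) (hS : closedBall a r₁ ×ˢ closedBall b r₂ ⊆ S) :
    π * r₁ ^ 2 * (π * r₂ ^ 2) * ‖f (a, b)‖ ^ 2 ≤ ∫ p in S, ‖f p‖ ^ 2 := by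
  calc π * r₁ ^ 2 * (π * r₂ ^ 2) * ‖f (a, b)‖ ^ 2
      = ‖∫ p in closedBall a r₁ ×ˢ closedBall b r₂, f p ^ 2‖ := by
        rw [((hf.mono hS).fun_pow 2).integral_closedBall_prod_closedBall hr₁ hr₂, norm_smul,
          norm_pow, Real.norm_of_nonneg (by positivity)]
    _ ≤ ∫ p in closedBall a r₁ ×ˢ closedBall b r₂, ‖f p‖ ^ 2 :=
        (norm_integral_le_integral_norm _).trans_eq (by simp only [norm_pow])
    _ ≤ ∫ p in S, ‖f p‖ ^ 2 :=
        setIntegral_mono_set hint (ae_of_all _ fun _ ↦ by positivity) hS.eventuallyLE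

theorem closedBall_prod_closedBall_subset_modelDomain {τ C δ r₁ r₂ : ℝ} (hτ : 0 ≤ τ)
    (hC : 0 ≤ C) (h : C * r₁ ^ τ + (C + 1) * r₂ < δ) :
    closedBall (0 : ℂ) r₁ ×ˢ closedBall (δ : ℂ) r₂ ⊆ modelDomain τ C := by
  rintro ⟨z₁, z₂⟩ ⟨hz₁, hz₂⟩
  rw [mem_closedBall_zero_iff] at hz₁
  rw [mem_closedBall_iff_norm] at hz₂
  have him : |z₂.im| ≤ r₂ := by
    simpa using (abs_im_le_norm (z₂ - δ)).trans hz₂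
  have hre : δ - r₂ ≤ z₂.re := by
    linarith [(abs_le.mp ((abs_re_le_norm (z₂ - δ)).trans hz₂)).1, sub_re z₂ δ, ofReal_re δ]
  have h₁ : C * ‖z₁‖ ^ τ ≤ C * r₁ ^ τ := by gcongr
  have h₂ : C * |z₂.im| ≤ C * r₂ := by gcongr
  show C * ‖z₁‖ ^ τ + C * |z₂.im| < z₂.re
  linarith

theorem exists_pos_closedBall_prod_subset_modelDomain_inter {τ C : ℝ} (hτ : 0 < τ)
    (hC : 0 < C) {W : Set (ℂ × ℂ)} (hW : W ∈ 𝓝 0) :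
    ∃ δ₀ > 0, ∀ δ : ℝ, 0 < δ → δ < δ₀ →
      closedBall (0 : ℂ) ((δ / (4 * C)) ^ τ⁻¹) ×ˢ closedBall (δ : ℂ) (δ / (4 * (C + 1))) ⊆
        modelDomain τ C ∩ W := by
  obtain ⟨ε, hε, hεW⟩ := Metric.mem_nhds_iff.mp hW
  refine ⟨min (ε / 2) (4 * C * ε ^ τ), by positivity, fun δ hδ hδ₀ ↦ ?_⟩
  have hδε := min_le_left (ε / 2) (4 * C * ε ^ τ)
  have hr₁τ : ((δ / (4 * C)) ^ τ⁻¹) ^ τ = δ / (4 * C) :=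
    Real.rpow_inv_rpow (by positivity) hτ.ne'
  have hr₁ε : (δ / (4 * C)) ^ τ⁻¹ < ε := by
    refine (rpow_inv_lt_iff_of_pos (by positivity) hε.le hτ).2 ?_
    rw [div_lt_iff₀ (by positivity)]
    linarith [min_le_right (ε / 2) (4 * C * ε ^ τ)]
  have hr₂ : δ / (4 * (C + 1)) ≤ δ / 4 := div_le_div_of_nonneg_left hδ.le (by norm_num)
    (by linarith)
  refine subset_inter (closedBall_prod_closedBall_subset_modelDomain hτ.le hC.le ?_) ?_
  · rw [hr₁τ]
    field_simp
    linarith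
  · rw [← Prod.mk_zero_zero, ← ball_prod_same] at hεW
    refine (Set.prod_mono (closedBall_subset_ball hr₁ε) (closedBall_subset_ball' ?_)).trans hεW
    rw [dist_zero_right, norm_real, Real.norm_of_nonneg hδ.le]
    linarith

/-- upper bound for the Bergman kernel of the model domain on the
diagonal, in variational form: there are δ₀, M > 0 such that every f ∈ A(Ω_{τ,C} ∩ W)
of L²-norm at most 1 satisfies |f(0,δ)|² ≤ M δ^{-2-2/τ} for 0 < δ < δ₀. -/
theorem statement_8 (τ C : ℝ) (hτ : 0 < τ) (hC : 0 < C)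
    (W : Set (ℂ × ℂ)) (hW : W ∈ 𝓝 (0 : ℂ × ℂ)) :
    ∃ δ₀ > 0, ∃ M > 0, ∀ δ : ℝ, 0 < δ → δ < δ₀ →
      ∀ f : ℂ × ℂ → ℂ, DifferentiableOn ℂ f (modelDomain τ C ∩ W) →
        MeasureTheory.IntegrableOn (fun p => ‖f p‖ ^ 2) (modelDomain τ C ∩ W) →
        (∫ p in modelDomain τ C ∩ W, ‖f p‖ ^ 2) ≤ 1 →
        ‖f ((0 : ℂ), ((δ : ℝ) : ℂ))‖ ^ 2 ≤ M * δ ^ (-2 - 2 / τ) := by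
  obtain ⟨δ₀, hδ₀, hsub⟩ := exists_pos_closedBall_prod_subset_modelDomain_inter hτ hC hW
  refine ⟨δ₀, hδ₀, 16 * (C + 1) ^ 2 * (4 * C) ^ (2 / τ) / π ^ 2, by positivity, ?_⟩
  intro δ hδ hδδ₀ f hf hint hle
  have hmass := (hf.mul_norm_sq_le_setIntegral_norm_sq hint (by positivity) (by positivity)
    (hsub δ hδ hδδ₀)).trans hle
  have hr₁sq : ((δ / (4 * C)) ^ τ⁻¹) ^ 2 = δ ^ (2 / τ) / (4 * C) ^ (2 / τ) := by
    rw [← Real.rpow_natCast, ← Real.rpow_mul (by positivity),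
      Real.div_rpow hδ.le (by positivity)]
    ring_nf
  have hδpow : δ ^ (-2 - 2 / τ) = (δ ^ 2 * δ ^ (2 / τ))⁻¹ := by
    rw [← Real.rpow_natCast, ← Real.rpow_add hδ, ← Real.rpow_neg hδ.le]
    ring_nf
  rw [← le_div_iff₀' (by positivity), hr₁sq] at hmass
  refine hmass.trans_eq ?_
  rw [hδpow]
  field_simp
  norm_num

end
end

section
/- Let q ≥ 1, d ∈ (ℕ∖{0})^q, ℓ ∈ ℕ, and let g be a smooth real-valued function defined on a neighborhood of 0 in ℝ^q. Then there exist a neighborhood W of 0 and a constant C > 0 such that for all y ∈ W: |g(y) − Σ_{γ ∈ ℕ^q : d·γ ≤ ℓ} (1/γ!) ∂^γ g(0) y^γ| ≤ C · N(y)^{ℓ+1}, where N(y) := max_{j=1,…,q} |y_j|^{1/d_j}. -/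
/-!
Strong induction on `ℓ`. Along the ray `t ↦ t • y` the Taylor polynomial satisfies
`d/dt T_ℓ g (t y) = ∑_j y_j T_{ℓ - d_j} (∂_j g) (t y)` (the `j`-th term being absent when
`d_j > ℓ`), because `∂_j` maps the monomials of weighted degree `≤ ℓ` onto those of weighted
degree `≤ ℓ - d_j`. So the remainder `R_ℓ g = g - T_ℓ g` has ray derivative
`∑_j y_j R_{ℓ - d_j} (∂_j g) (t y)`, which by induction is `O(∑_j |y_j| N(y)^{ℓ + 1 - d_j})`.
Since `|y_j| ≤ N(y)^{d_j}`, the mean value theorem on `[0, 1]` gives `R_ℓ g (y) = O(N(y)^{ℓ + 1})`.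
-/

open Complex Metric Set Filter Topology

noncomputable section

/-- Partial derivative in the j-th coordinate for functions on ℝ^q. -/
def pdi {q : ℕ} (j : Fin q) (f : (Fin q → ℝ) → ℝ) : (Fin q → ℝ) → ℝ :=
  fun x => fderiv ℝ f x (Pi.single j 1)

/-- Iterated partial derivative ∂^γ for a multi-index γ ∈ ℕ^q. -/
def pmulti {q : ℕ} (γ : Fin q → ℕ) (f : (Fin q → ℝ) → ℝ) : (Fin q → ℝ) → ℝ :=
  (List.finRange q).foldr (fun j F => (pdi j)^[γ j] F) f

/-- The anisotropic norm N(y) = max_j |y_j|^{1/d_j}. -/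
def anorm {q : ℕ} (d : Fin q → ℕ) (y : Fin q → ℝ) : ℝ :=
  ⨆ j, |y j| ^ (1 / (d j : ℝ))

section PartialDerivatives

variable {q : ℕ} {U : Set (Fin q → ℝ)} {f g : (Fin q → ℝ) → ℝ}

theorem pdi_congr (hU : IsOpen U) (h : EqOn f g U) (j : Fin q) :
    EqOn (pdi j f) (pdi j g) U := fun x hx => by
  simp only [pdi, (eventuallyEq_of_mem (hU.mem_nhds hx) h).fderiv_eq]

theorem pdi_iterate_congr (hU : IsOpen U) (h : EqOn f g U) (j : Fin q) (n : ℕ) :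
    EqOn ((pdi j)^[n] f) ((pdi j)^[n] g) U := by
  induction n generalizing f g with
  | zero => exact h
  | succ n ih => exact ih (pdi_congr hU h j)

theorem contDiffOn_pdi (hU : IsOpen U) (hf : ContDiffOn ℝ (⊤ : ℕ∞) f U) (j : Fin q) :
    ContDiffOn ℝ (⊤ : ℕ∞) (pdi j f) U :=
  (hf.fderiv_of_isOpen hU (by simp)).clm_apply contDiffOn_const

theorem contDiffOn_pdi_iterate (hU : IsOpen U) (hf : ContDiffOn ℝ (⊤ : ℕ∞) f U) (j : Fin q)
    (n : ℕ) : ContDiffOn ℝ (⊤ : ℕ∞) ((pdi j)^[n] f) U := by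
  induction n generalizing f with
  | zero => exact hf
  | succ n ih => exact ih (contDiffOn_pdi hU hf j)

theorem pdi_pdi_eq_fderiv_fderiv (hU : IsOpen U) (hf : ContDiffOn ℝ (⊤ : ℕ∞) f U)
    {x : Fin q → ℝ} (hx : x ∈ U) (i j : Fin q) :
    pdi i (pdi j f) x = fderiv ℝ (fderiv ℝ f) x (Pi.single i 1) (Pi.single j 1) := by
  have hf' : DifferentiableAt ℝ (fderiv ℝ f) x :=
    ((hf.fderiv_of_isOpen (m := (⊤ : ℕ∞)) hU (by simp)).differentiableOn
      (by simp)).differentiableAt (hU.mem_nhds hx)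
  change fderiv ℝ (fun y => fderiv ℝ f y (Pi.single j 1)) x (Pi.single i 1) = _
  simp [(hf'.hasFDerivAt.clm_apply (hasFDerivAt_const (Pi.single j (1 : ℝ)) x)).fderiv]

theorem pdi_comm (hU : IsOpen U) (hf : ContDiffOn ℝ (⊤ : ℕ∞) f U) (i j : Fin q) :
    EqOn (pdi i (pdi j f)) (pdi j (pdi i f)) U := fun x hx => by
  rw [pdi_pdi_eq_fderiv_fderiv hU hf hx, pdi_pdi_eq_fderiv_fderiv hU hf hx]
  exact (hf.contDiffAt (hU.mem_nhds hx)).isSymmSndFDerivAt (by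
    rw [minSmoothness_of_isRCLikeNormedField]; exact WithTop.coe_le_coe.2 le_top) _ _

theorem hasDerivAt_comp_smul {y : Fin q → ℝ} {t : ℝ} (hg : DifferentiableAt ℝ g (t • y)) :
    HasDerivAt (fun s : ℝ => g (s • y)) (∑ j, y j * pdi j g (t • y)) t := by
  have h := hg.hasFDerivAt.comp_hasDerivAt t ((hasDerivAt_id t).smul_const y)
  refine h.congr_deriv ?_
  conv_lhs => arg 2; rw [one_smul, ← Finset.univ_sum_single y]
  refine (map_sum _ _ _).trans (Finset.sum_congr rfl fun j _ => ?_)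
  rw [pdi, ← smul_eq_mul, ← map_smul, ← Pi.single_smul, smul_eq_mul, mul_one]

end PartialDerivatives

section IteratedPartialDerivatives

variable {q : ℕ} {U : Set (Fin q → ℝ)} {f g : (Fin q → ℝ) → ℝ}

theorem pdi_pdi_iterate_comm (hU : IsOpen U) (hf : ContDiffOn ℝ (⊤ : ℕ∞) f U) (i j : Fin q)
    (n : ℕ) : EqOn (pdi j ((pdi i)^[n] f)) ((pdi i)^[n] (pdi j f)) U := by
  induction n generalizing f with
  | zero => exact fun _ _ => rfl
  | succ n ih =>
    exact (ih (contDiffOn_pdi hU hf i)).trans (pdi_iterate_congr hU (pdi_comm hU hf j i) i n)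

def pmultiList (γ : Fin q → ℕ) (L : List (Fin q)) (f : (Fin q → ℝ) → ℝ) : (Fin q → ℝ) → ℝ :=
  L.foldr (fun j F => (pdi j)^[γ j] F) f

variable {γ : Fin q → ℕ}

theorem contDiffOn_pmultiList (hU : IsOpen U) (hf : ContDiffOn ℝ (⊤ : ℕ∞) f U)
    (L : List (Fin q)) : ContDiffOn ℝ (⊤ : ℕ∞) (pmultiList γ L f) U := by
  induction L with
  | nil => exact hf
  | cons i L ih => exact contDiffOn_pdi_iterate hU ih i (γ i)

theorem pmultiList_congr_index {γ' : Fin q → ℕ} {L : List (Fin q)} (h : ∀ i ∈ L, γ i = γ' i) :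
    pmultiList γ L f = pmultiList γ' L f := by
  induction L with
  | nil => rfl
  | cons i L ih =>
    simp only [pmultiList, List.foldr_cons, h i List.mem_cons_self]
    rw [← pmultiList, ← pmultiList, ih fun a ha => h a (List.mem_cons_of_mem i ha)]

theorem pdi_pmultiList_comm (hU : IsOpen U) (hf : ContDiffOn ℝ (⊤ : ℕ∞) f U) (j : Fin q)
    (L : List (Fin q)) : EqOn (pdi j (pmultiList γ L f)) (pmultiList γ L (pdi j f)) U := by
  induction L with
  | nil => exact fun _ _ => rfl
  | cons i L ih =>
    exact (pdi_pdi_iterate_comm hU (contDiffOn_pmultiList hU hf L) i j (γ i)).trans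
      (pdi_iterate_congr hU ih i (γ i))

theorem pmultiList_add_single (hU : IsOpen U) (hf : ContDiffOn ℝ (⊤ : ℕ∞) f U) {j : Fin q}
    {L : List (Fin q)} (hj : j ∈ L) (hL : L.Nodup) :
    EqOn (pmultiList (γ + Pi.single j 1) L f) (pmultiList γ L (pdi j f)) U := by
  induction L with
  | nil => simp at hj
  | cons i L ih =>
    obtain ⟨hiL, hL⟩ := List.nodup_cons.1 hL
    by_cases hij : i = j
    · subst hij
      have hγ : pmultiList (γ + Pi.single i 1) L f = pmultiList γ L f :=
        pmultiList_congr_index fun a ha => by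
          simp [show a ≠ i from fun h => hiL (h ▸ ha)]
      change EqOn
        ((pdi i)^[γ i + (Pi.single i 1 : Fin q → ℕ) i] (pmultiList (γ + Pi.single i 1) L f))
        ((pdi i)^[γ i] (pmultiList γ L (pdi i f))) U
      rw [hγ, Pi.single_eq_same, Function.iterate_succ_apply]
      exact pdi_iterate_congr hU (pdi_pmultiList_comm hU hf i L) i (γ i)
    · have hjL : j ∈ L := (List.mem_cons.1 hj).resolve_left (Ne.symm hij)
      change EqOn ((pdi i)^[γ i + (Pi.single j 1 : Fin q → ℕ) i] _) ((pdi i)^[γ i] _) U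
      rw [Pi.single_eq_of_ne hij, add_zero]
      exact pdi_iterate_congr hU (ih hjL hL) i (γ i)

theorem pmulti_add_single (hU : IsOpen U) (hf : ContDiffOn ℝ (⊤ : ℕ∞) f U) (j : Fin q) :
    EqOn (pmulti (γ + Pi.single j 1) f) (pmulti γ (pdi j f)) U :=
  pmultiList_add_single hU hf (List.mem_finRange j) (List.nodup_finRange q)

theorem pmulti_zero (f : (Fin q → ℝ) → ℝ) : pmulti 0 f = f := by
  change pmultiList 0 (List.finRange q) f = f
  induction List.finRange q with
  | nil => rfl
  | cons i L ih => exact ih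

end IteratedPartialDerivatives

section AnisotropicNorm

variable {q : ℕ} {d : Fin q → ℕ} {y : Fin q → ℝ}

theorem anorm_nonneg (d : Fin q → ℕ) (y : Fin q → ℝ) : 0 ≤ anorm d y :=
  Real.iSup_nonneg fun _ => Real.rpow_nonneg (abs_nonneg _) _

theorem abs_rpow_le_anorm (j : Fin q) : |y j| ^ (1 / (d j : ℝ)) ≤ anorm d y :=
  le_ciSup (f := fun j => |y j| ^ (1 / (d j : ℝ))) (Set.finite_range _).bddAbove j

theorem abs_le_anorm_pow {j : Fin q} (hj : d j ≠ 0) : |y j| ≤ anorm d y ^ d j :=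
  calc |y j| = (|y j| ^ (1 / (d j : ℝ))) ^ d j := by
        rw [← Real.rpow_natCast, ← Real.rpow_mul (abs_nonneg _), one_div,
          inv_mul_cancel₀ (Nat.cast_ne_zero.2 hj), Real.rpow_one]
    _ ≤ anorm d y ^ d j := pow_le_pow_left₀ (by positivity) (abs_rpow_le_anorm j) _

theorem anorm_le_one (h : ∀ j, |y j| ≤ 1) : anorm d y ≤ 1 :=
  Real.iSup_le (fun j => Real.rpow_le_one (abs_nonneg _) (h j) (by positivity)) zero_le_one

theorem anorm_smul_le {t : ℝ} (ht : |t| ≤ 1) : anorm d (t • y) ≤ anorm d y :=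
  ciSup_mono (Set.finite_range _).bddAbove fun j => by
    refine Real.rpow_le_rpow (abs_nonneg _) ?_ (by positivity)
    simpa [abs_mul] using mul_le_of_le_one_left (abs_nonneg (y j)) ht

theorem eventually_anorm_le_one : ∀ᶠ y in 𝓝 (0 : Fin q → ℝ), anorm d y ≤ 1 := by
  filter_upwards [closedBall_mem_nhds (0 : Fin q → ℝ) zero_lt_one] with y hy
  exact anorm_le_one fun j => (norm_le_pi_norm y j).trans (mem_closedBall_zero_iff.1 hy)

theorem abs_mul_anorm_pow_sub_le {j : Fin q} (hj : d j ≠ 0) (hy : anorm d y ≤ 1) (m : ℕ) :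
    |y j| * anorm d y ^ (m - d j) ≤ anorm d y ^ m :=
  calc |y j| * anorm d y ^ (m - d j) ≤ anorm d y ^ d j * anorm d y ^ (m - d j) :=
        mul_le_mul_of_nonneg_right (abs_le_anorm_pow hj) (pow_nonneg (anorm_nonneg d y) _)
    _ = anorm d y ^ (d j + (m - d j)) := (pow_add _ _ _).symm
    _ ≤ anorm d y ^ m := pow_le_pow_of_le_one (anorm_nonneg d y) hy (by omega)

end AnisotropicNorm

theorem eventually_forall_smul_of_eventually {E : Type*} [SeminormedAddCommGroup E]
    [NormedSpace ℝ E] {P : E → Prop} (h : ∀ᶠ z in 𝓝 (0 : E), P z) :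
    ∀ᶠ y in 𝓝 (0 : E), ∀ t ∈ Icc (0 : ℝ) 1, P (t • y) := by
  obtain ⟨ε, hε, hP⟩ := Metric.eventually_nhds_iff_ball.1 h
  filter_upwards [ball_mem_nhds (0 : E) hε] with y hy t ht
  exact hP _ ((convex_ball 0 ε).smul_mem_of_zero_mem (mem_ball_self hε) hy ht)

theorem isBigO_anorm_pow_of_hasDerivAt_smul {q : ℕ} {d : Fin q → ℕ} (hd : ∀ j, 0 < d j) {m : ℕ}
    {R : (Fin q → ℝ) → ℝ} {Q : Fin q → (Fin q → ℝ) → ℝ} (hR0 : R 0 = 0)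
    (hR : ∀ᶠ y in 𝓝 0, ∀ t ∈ Icc (0 : ℝ) 1,
      HasDerivAt (fun s => R (s • y)) (∑ j, y j * Q j (t • y)) t)
    (hQ : ∀ j, Q j =O[𝓝 0] fun z => anorm d z ^ (m - d j)) :
    R =O[𝓝 0] fun y => anorm d y ^ m := by
  choose C hC_pos hC using fun j => (hQ j).exists_pos
  have hQ_le : ∀ᶠ z in 𝓝 0, ∀ j, |Q j z| ≤ C j * anorm d z ^ (m - d j) :=
    eventually_all.2 fun j => (hC j).bound.mono fun z hz => by
      rwa [Real.norm_eq_abs, Real.norm_of_nonneg (by positivity [anorm_nonneg d z])] at hz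
  refine Asymptotics.IsBigO.of_bound (∑ j, C j) ?_
  filter_upwards [hR, eventually_forall_smul_of_eventually hQ_le, eventually_anorm_le_one]
    with y hRy hQy hy
  have hderiv_le : ∀ t ∈ Icc (0 : ℝ) 1,
      ‖∑ j, y j * Q j (t • y)‖ ≤ (∑ j, C j) * anorm d y ^ m := fun t ht => by
    rw [Finset.sum_mul]
    refine (norm_sum_le _ _).trans (Finset.sum_le_sum fun j _ => ?_)
    have hty : anorm d (t • y) ≤ anorm d y :=
      anorm_smul_le (abs_le.2 ⟨by linarith [ht.1], ht.2⟩)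
    calc ‖y j * Q j (t • y)‖ ≤ |y j| * (C j * anorm d y ^ (m - d j)) := by
          rw [Real.norm_eq_abs, abs_mul]
          refine mul_le_mul_of_nonneg_left ((hQy t ht j).trans ?_) (abs_nonneg _)
          exact mul_le_mul_of_nonneg_left (pow_le_pow_left₀ (anorm_nonneg d _) hty _)
            (hC_pos j).le
      _ = C j * (|y j| * anorm d y ^ (m - d j)) := by ring
      _ ≤ C j * anorm d y ^ m :=
          mul_le_mul_of_nonneg_left (abs_mul_anorm_pow_sub_le (hd j).ne' hy m) (hC_pos j).le
  calc ‖R y‖ = ‖(fun s : ℝ => R (s • y)) 1 - (fun s : ℝ => R (s • y)) 0‖ := by simp [hR0]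
    _ ≤ (∑ j, C j) * anorm d y ^ m :=
        norm_image_sub_le_of_norm_deriv_le_segment_01' (fun t ht => (hRy t ht).hasDerivWithinAt)
          fun t ht => hderiv_le t (Ico_subset_Icc_self ht)
    _ = (∑ j, C j) * ‖anorm d y ^ m‖ := by
        rw [Real.norm_of_nonneg (pow_nonneg (anorm_nonneg d y) m)]

namespace MultiIndex

variable {q : ℕ} (γ : Fin q → ℕ) (j : Fin q)

theorem sum_add_single : ∑ i, (γ + Pi.single j 1 : Fin q → ℕ) i = ∑ i, γ i + 1 := by
  simp [Finset.sum_add_distrib]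

theorem weighted_sum_add_single (d : Fin q → ℕ) :
    ∑ i, d i * (γ + Pi.single j 1 : Fin q → ℕ) i = ∑ i, d i * γ i + d j := by
  simp [mul_add, Finset.sum_add_distrib, Pi.single_apply]

theorem prod_apply_add_single {M : Type*} [CommMonoid M] (F : Fin q → ℕ → M) :
    ∏ i, F i ((γ + Pi.single j 1 : Fin q → ℕ) i) = F j (γ j + 1) * ∏ i ∈ {j}ᶜ, F i (γ i) := by
  rw [Fintype.prod_eq_mul_prod_compl j]
  congr 1
  · simp
  · exact Finset.prod_congr rfl fun i hi => by
      simp [Pi.single_eq_of_ne (by simpa using hi : i ≠ j)]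

theorem prod_factorial_add_single :
    (∏ i, ((γ + Pi.single j 1 : Fin q → ℕ) i).factorial : ℝ)
      = (γ j + 1) * ∏ i, ((γ i).factorial : ℝ) := by
  rw [prod_apply_add_single γ j fun _ n => (n.factorial : ℝ), Fintype.prod_eq_mul_prod_compl j,
    Nat.factorial_succ]
  push_cast
  ring

theorem prod_pow_add_single (y : Fin q → ℝ) :
    ∏ i, y i ^ (γ + Pi.single j 1 : Fin q → ℕ) i = y j * ∏ i, y i ^ γ i := by
  rw [prod_apply_add_single γ j fun i n => y i ^ n, Fintype.prod_eq_mul_prod_compl j, pow_succ]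
  ring

theorem prod_smul_pow (t : ℝ) (y : Fin q → ℝ) :
    ∏ i, (t • y) i ^ γ i = t ^ (∑ i, γ i) * ∏ i, y i ^ γ i := by
  simp [mul_pow, Finset.prod_mul_distrib, Finset.prod_pow_eq_pow_sum]

end MultiIndex

section TaylorPolynomial

open MultiIndex

variable {q : ℕ} {d : Fin q → ℕ} {ℓ : ℕ} {U : Set (Fin q → ℝ)} {g : (Fin q → ℝ) → ℝ}

/-- The bound `γ j ≤ ℓ` only makes the set finite; it follows from `d · γ ≤ ℓ` when every `d j`
is positive (`mem_weightedMultiIndices`). -/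
def weightedMultiIndices (d : Fin q → ℕ) (ℓ : ℕ) : Finset (Fin q → ℕ) :=
  (Fintype.piFinset fun _ : Fin q => Finset.range (ℓ + 1)).filter fun γ => ∑ j, d j * γ j ≤ ℓ

def taylorCoeff (g : (Fin q → ℝ) → ℝ) (γ : Fin q → ℕ) : ℝ :=
  (∏ j, ((γ j).factorial : ℝ))⁻¹ * pmulti γ g 0

def anisoTaylorPoly (d : Fin q → ℕ) (ℓ : ℕ) (g : (Fin q → ℝ) → ℝ) (y : Fin q → ℝ) : ℝ :=
  ∑ γ ∈ weightedMultiIndices d ℓ, taylorCoeff g γ * ∏ j, y j ^ γ j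

theorem mem_weightedMultiIndices (hd : ∀ j, 0 < d j) {γ : Fin q → ℕ} :
    γ ∈ weightedMultiIndices d ℓ ↔ ∑ j, d j * γ j ≤ ℓ := by
  refine ⟨fun h => (Finset.mem_filter.1 h).2, fun h => Finset.mem_filter.2 ⟨?_, h⟩⟩
  refine Fintype.mem_piFinset.2 fun j => Finset.mem_range.2 (Nat.lt_succ_of_le ?_)
  calc γ j ≤ d j * γ j := Nat.le_mul_of_pos_left _ (hd j)
    _ ≤ ∑ i, d i * γ i :=
        Finset.single_le_sum (f := fun i => d i * γ i) (fun i _ => Nat.zero_le _) (Finset.mem_univ j)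
    _ ≤ ℓ := h

theorem anisoTaylorPoly_zero (hd : ∀ j, 0 < d j) (g : (Fin q → ℝ) → ℝ) :
    anisoTaylorPoly d ℓ g 0 = g 0 := by
  rw [anisoTaylorPoly, Finset.sum_eq_single_of_mem 0 ((mem_weightedMultiIndices hd).2 (by simp))]
  · simp [taylorCoeff, pmulti_zero]
  · intro γ _ hγ
    obtain ⟨j, hj⟩ := Function.ne_iff.1 hγ
    simp only [Pi.zero_apply, mul_eq_zero]
    exact Or.inr (Finset.prod_eq_zero (Finset.mem_univ j) (zero_pow hj))

theorem hasDerivAt_anisoTaylorPoly_smul_eq_sum (g : (Fin q → ℝ) → ℝ) (y : Fin q → ℝ) (t : ℝ) :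
    HasDerivAt (fun s => anisoTaylorPoly d ℓ g (s • y))
      (∑ j, ∑ γ ∈ weightedMultiIndices d ℓ,
        taylorCoeff g γ * (∏ i, y i ^ γ i) * (γ j * t ^ (∑ i, γ i - 1))) t := by
  simp only [anisoTaylorPoly, prod_smul_pow]
  rw [Finset.sum_comm]
  refine HasDerivAt.fun_sum fun γ _ => ?_
  have h := ((hasDerivAt_pow (∑ i, γ i) t).mul_const (∏ i, y i ^ γ i)).const_mul (taylorCoeff g γ)
  refine h.congr_deriv ?_
  simp only [Nat.cast_sum, Finset.sum_mul, Finset.mul_sum]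
  exact Finset.sum_congr rfl fun _ _ => by ring

theorem taylorCoeff_add_single (hU : IsOpen U) (h0 : (0 : Fin q → ℝ) ∈ U)
    (hg : ContDiffOn ℝ (⊤ : ℕ∞) g U) (γ : Fin q → ℕ) (j : Fin q) :
    ((γ j : ℝ) + 1) * taylorCoeff g (γ + Pi.single j 1) = taylorCoeff (pdi j g) γ := by
  rw [taylorCoeff, taylorCoeff, prod_factorial_add_single, pmulti_add_single hU hg j h0]
  field_simp

theorem sum_weightedMultiIndices_mul_apply_of_lt (hd : ∀ j, 0 < d j) {j : Fin q} (hj : ℓ < d j)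
    (F : (Fin q → ℕ) → ℝ) : ∑ γ ∈ weightedMultiIndices d ℓ, (γ j : ℝ) * F γ = 0 := by
  refine Finset.sum_eq_zero fun γ hγ => ?_
  have hγj : d j * γ j ≤ ℓ := (Finset.single_le_sum (f := fun i => d i * γ i)
    (fun i _ => Nat.zero_le _) (Finset.mem_univ j)).trans ((mem_weightedMultiIndices hd).1 hγ)
  have : γ j = 0 := by
    by_contra h
    nlinarith [Nat.pos_of_ne_zero h]
  simp [this]

theorem sum_weightedMultiIndices_mul_apply (hd : ∀ j, 0 < d j) {j : Fin q} (hj : d j ≤ ℓ)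
    (F : (Fin q → ℕ) → ℝ) :
    ∑ γ ∈ weightedMultiIndices d ℓ, (γ j : ℝ) * F γ
      = ∑ γ ∈ weightedMultiIndices d (ℓ - d j), ((γ j : ℝ) + 1) * F (γ + Pi.single j 1) := by
  have himage : (weightedMultiIndices d ℓ).filter (fun γ => γ j ≠ 0)
      = (weightedMultiIndices d (ℓ - d j)).image (· + Pi.single j 1) := by
    ext γ
    simp only [Finset.mem_filter, Finset.mem_image, mem_weightedMultiIndices hd]
    constructor
    · rintro ⟨hγ, hγj⟩
      have hle : Pi.single j 1 ≤ γ := fun i => by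
        rcases eq_or_ne i j with rfl | hi
        · simpa [Nat.one_le_iff_ne_zero] using hγj
        · simp [hi]
      have hdeg := weighted_sum_add_single (γ - Pi.single j 1) j d
      rw [tsub_add_cancel_of_le hle] at hdeg
      exact ⟨γ - Pi.single j 1, by omega, tsub_add_cancel_of_le hle⟩
    · rintro ⟨γ, hγ, rfl⟩
      rw [weighted_sum_add_single]
      exact ⟨by omega, by simp⟩
  rw [← Finset.sum_filter_of_ne (p := fun γ => γ j ≠ 0) fun γ _ h => by
      rintro hγ; simp [hγ] at h,
    himage, Finset.sum_image fun a _ b _ h => add_right_cancel h]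
  simp

theorem hasDerivAt_anisoTaylorPoly_smul (hd : ∀ j, 0 < d j) (hU : IsOpen U)
    (h0 : (0 : Fin q → ℝ) ∈ U) (hg : ContDiffOn ℝ (⊤ : ℕ∞) g U) (y : Fin q → ℝ) (t : ℝ) :
    HasDerivAt (fun s => anisoTaylorPoly d ℓ g (s • y))
      (∑ j, y j * if d j ≤ ℓ then anisoTaylorPoly d (ℓ - d j) (pdi j g) (t • y) else 0) t := by
  refine (hasDerivAt_anisoTaylorPoly_smul_eq_sum g y t).congr_deriv
    (Finset.sum_congr rfl fun j _ => ?_)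
  have hsum : ∑ γ ∈ weightedMultiIndices d ℓ,
        taylorCoeff g γ * (∏ i, y i ^ γ i) * (γ j * t ^ (∑ i, γ i - 1))
      = ∑ γ ∈ weightedMultiIndices d ℓ,
        (γ j : ℝ) * (taylorCoeff g γ * (∏ i, y i ^ γ i) * t ^ (∑ i, γ i - 1)) :=
    Finset.sum_congr rfl fun _ _ => by ring
  split_ifs with hj
  · rw [hsum, sum_weightedMultiIndices_mul_apply hd hj, anisoTaylorPoly, Finset.mul_sum]
    refine Finset.sum_congr rfl fun γ _ => ?_
    rw [prod_pow_add_single, sum_add_single, Nat.add_sub_cancel, prod_smul_pow,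
      ← taylorCoeff_add_single hU h0 hg]
    ring
  · rw [hsum, sum_weightedMultiIndices_mul_apply_of_lt hd (not_le.1 hj), mul_zero]

end TaylorPolynomial

theorem anisoTaylorPoly_remainder_isBigO {q : ℕ} {d : Fin q → ℕ} (hd : ∀ j, 0 < d j)
    {U : Set (Fin q → ℝ)} (hU : IsOpen U) (h0 : (0 : Fin q → ℝ) ∈ U) (ℓ : ℕ)
    {g : (Fin q → ℝ) → ℝ} (hg : ContDiffOn ℝ (⊤ : ℕ∞) g U) :
    (fun y => g y - anisoTaylorPoly d ℓ g y) =O[𝓝 0] fun y => anorm d y ^ (ℓ + 1) := by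
  induction ℓ using Nat.strong_induction_on generalizing g with
  | _ ℓ ih =>
  refine isBigO_anorm_pow_of_hasDerivAt_smul hd
    (Q := fun j z => pdi j g z - if d j ≤ ℓ then anisoTaylorPoly d (ℓ - d j) (pdi j g) z else 0)
    (by simp [anisoTaylorPoly_zero hd]) ?_ fun j => ?_
  · filter_upwards [eventually_forall_smul_of_eventually (hU.mem_nhds h0)] with y hy t ht
    have hg' := (hg.differentiableOn (by simp)).differentiableAt (hU.mem_nhds (hy t ht))
    refine ((hasDerivAt_comp_smul hg').sub
      (hasDerivAt_anisoTaylorPoly_smul hd hU h0 hg y t)).congr_deriv ?_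
    simp [mul_sub, Finset.sum_sub_distrib]
  by_cases hj : d j ≤ ℓ
  · simp only [hj, if_true]
    rw [show ℓ + 1 - d j = ℓ - d j + 1 by omega]
    exact ih (ℓ - d j) (by have := hd j; omega) (contDiffOn_pdi hU hg j)
  · simp only [hj, if_false, sub_zero, Nat.sub_eq_zero_of_le (by omega : ℓ + 1 ≤ d j), pow_zero]
    exact ((contDiffOn_pdi hU hg j).continuousOn.continuousAt
      (hU.mem_nhds h0)).tendsto.isBigO_one ℝ

theorem statement_11_general (q : ℕ) (d : Fin q → ℕ) (hd : ∀ j, 0 < d j)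
    (ℓ : ℕ) (g : (Fin q → ℝ) → ℝ)
    (U : Set (Fin q → ℝ)) (hU : IsOpen U) (h0 : (0 : Fin q → ℝ) ∈ U)
    (hg : ContDiffOn ℝ (⊤ : ℕ∞) g U) :
    ∃ W ∈ 𝓝 (0 : Fin q → ℝ), ∃ C > 0, ∀ y ∈ W,
      |g y - ∑ γ ∈ (Fintype.piFinset fun _ : Fin q => Finset.range (ℓ + 1)).filter
          (fun γ => ∑ j, d j * γ j ≤ ℓ),
        (∏ j, ((γ j).factorial : ℝ))⁻¹ * pmulti γ g 0 * ∏ j, y j ^ γ j|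
      ≤ C * anorm d y ^ (ℓ + 1) := by
  obtain ⟨C, hC, hbound⟩ := (anisoTaylorPoly_remainder_isBigO hd hU h0 ℓ hg).exists_pos
  refine ⟨_, hbound.bound, C, hC, fun y hy => ?_⟩
  rwa [Set.mem_ofPred_eq, Real.norm_eq_abs,
    Real.norm_of_nonneg (pow_nonneg (anorm_nonneg d y) _)] at hy

/-- anisotropic Taylor expansion: for g smooth near 0 in ℝ^q,
g(y) = Σ_{d·γ ≤ ℓ} (1/γ!) ∂^γ g(0) y^γ + O(N(y)^{ℓ+1}) near 0. -/
theorem statement_11 (q : ℕ) (hq : 1 ≤ q) (d : Fin q → ℕ) (hd : ∀ j, 0 < d j)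
    (ℓ : ℕ) (g : (Fin q → ℝ) → ℝ)
    (U : Set (Fin q → ℝ)) (hU : IsOpen U) (h0 : (0 : Fin q → ℝ) ∈ U)
    (hg : ContDiffOn ℝ (⊤ : ℕ∞) g U) :
    ∃ W ∈ 𝓝 (0 : Fin q → ℝ), ∃ C > 0, ∀ y ∈ W,
      |g y - ∑ γ ∈ (Fintype.piFinset fun _ : Fin q => Finset.range (ℓ + 1)).filter
          (fun γ => ∑ j, d j * γ j ≤ ℓ),
        (∏ j, ((γ j).factorial : ℝ))⁻¹ * pmulti γ g 0 * ∏ j, y j ^ γ j|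
      ≤ C * anorm d y ^ (ℓ + 1) :=
  statement_11_general q d hd ℓ g U hU h0 hg

end
end
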